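/- arXiv:0912.0173 — 13 statements merged into one kernel-verified Lean document; each statement's English description precedes it below -/
import Mathlib

section
/- Let χ be a Dirichlet character mod 23 given by the Legendre symbol (·/23), and for n ≥ 1 define a_n = Σ_{d|n} χ(n/d) d². Then for every prime p with (p/23) = 1, every integer r ≥ 1 and every n ≥ 1, a_{n p^r} ≡ a_{n p^{r-1}} (mod p^r). -/
instance : Fact (Nat.Prime 23) := ⟨by norm_num⟩

/-- `a n = ∑_{d ∣ n} χ(n/d) d²` where `χ` is the Legendre symbol mod 23. -/
def eisA (n : ℕ) : ℤ := ∑ d ∈ n.divisors, legendreSym 23 ((n / d : ℕ) : ℤ) * (d : ℤ) ^ 2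

theorem stmt_0 (p : ℕ) (hp : p.Prime) (hps : legendreSym 23 (p : ℤ) = 1)
    (r n : ℕ) (hr : 1 ≤ r) (hn : 1 ≤ n) :
    Int.ModEq ((p : ℤ) ^ r) (eisA (n * p ^ r)) (eisA (n * p ^ (r - 1))) := by
  set N := n * p ^ (r - 1) with hNdef
  set M := n * p ^ r with hMdef
  have hp0 : p ≠ 0 := hp.pos.ne'
  have hn0 : n ≠ 0 := by omega
  have hMN : M = p * N := by
    rw [hNdef, hMdef]
    have : p ^ r = p * p ^ (r - 1) := by
      rw [← pow_succ']
      congr 1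
      omega
    rw [this]; ring
  have hN0 : N ≠ 0 := mul_ne_zero hn0 (pow_ne_zero _ hp0)
  have hM0 : M ≠ 0 := mul_ne_zero hn0 (pow_ne_zero _ hp0)
  have hsub : N.divisors ⊆ M.divisors :=
    Nat.divisors_subset_of_dvd hM0 ⟨p, by rw [hMN]; ring⟩
  have hterm : ∀ d ∈ N.divisors,
      legendreSym 23 ((M / d : ℕ) : ℤ) * (d : ℤ) ^ 2
        = legendreSym 23 ((N / d : ℕ) : ℤ) * (d : ℤ) ^ 2 := by
    intro d hd
    have hdN : d ∣ N := (Nat.mem_divisors.mp hd).1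
    have hdiv : M / d = p * (N / d) := by
      rw [hMN, Nat.mul_div_assoc p hdN]
    rw [hdiv]
    push_cast
    rw [legendreSym.mul, hps, one_mul]
  have hdvd : ∀ d ∈ M.divisors \ N.divisors,
      (p : ℤ) ^ r ∣ legendreSym 23 ((M / d : ℕ) : ℤ) * (d : ℤ) ^ 2 := by
    intro d hd
    rw [Finset.mem_sdiff] at hd
    obtain ⟨hdM, hdN⟩ := hd
    have hdMd : d ∣ M := (Nat.mem_divisors.mp hdM).1
    have hd0 : d ≠ 0 := by
      rintro rfl
      exact hM0 (Nat.zero_dvd.mp hdMd)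
    have hdNd : ¬ d ∣ N := fun h => hdN (Nat.mem_divisors.mpr ⟨h, hN0⟩)
    -- show p ^ r ∣ d
    have hpr : p ^ r ∣ d := by
      by_contra hcon
      apply hdNd
      rw [← Nat.factorization_le_iff_dvd hd0 hN0, Finsupp.le_def]
      intro q
      have hfd : d.factorization ≤ M.factorization :=
        (Nat.factorization_le_iff_dvd hd0 hM0).mpr hdMd
      have hMf : M.factorization = N.factorization + Finsupp.single p 1 := by
        rw [hMN, Nat.factorization_mul hp0 hN0, hp.factorization]
        abel
      by_cases hq : q = p
      · rw [hq]
        have h1 : d.factorization p < r := by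
          by_contra h2
          exact hcon ((Nat.Prime.pow_dvd_iff_le_factorization hp hd0).mpr (by omega))
        have h2 : N.factorization p = n.factorization p + (r - 1) := by
          rw [hNdef, Nat.factorization_mul hn0 (pow_ne_zero _ hp0),
            Nat.factorization_pow, hp.factorization]
          simp
        omega
      · have h3 := hfd q
        rw [hMf] at h3
        have h4 : (Finsupp.single p 1 : ℕ →₀ ℕ) q = 0 := by
          rw [Finsupp.single_apply, if_neg (Ne.symm hq)]
        simpa [h4] using h3
    have hpd : (p : ℤ) ^ r ∣ (d : ℤ) := by exact_mod_cast hpr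
    exact Dvd.dvd.mul_left (hpd.trans ⟨d, by ring⟩) _
  -- assemble
  have hsplit : eisA M =
      (∑ d ∈ M.divisors \ N.divisors, legendreSym 23 ((M / d : ℕ) : ℤ) * (d : ℤ) ^ 2)
        + ∑ d ∈ N.divisors, legendreSym 23 ((M / d : ℕ) : ℤ) * (d : ℤ) ^ 2 :=
    (Finset.sum_sdiff hsub).symm
  have hsum2 : ∑ d ∈ N.divisors, legendreSym 23 ((M / d : ℕ) : ℤ) * (d : ℤ) ^ 2 = eisA N :=
    Finset.sum_congr rfl hterm
  have hkey : eisA M - eisA N =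
      ∑ d ∈ M.divisors \ N.divisors, legendreSym 23 ((M / d : ℕ) : ℤ) * (d : ℤ) ^ 2 := by
    rw [hsplit, hsum2]; ring
  have hdvdsum : (p : ℤ) ^ r ∣ eisA M - eisA N := by
    rw [hkey]
    exact Finset.dvd_sum hdvd
  have hdvd2 : (p : ℤ) ^ r ∣ eisA N - eisA M := by
    rw [← neg_sub]
    exact dvd_neg.mpr hdvdsum
  exact Int.modEq_iff_dvd.mpr hdvd2
end

section
/- Let χ be the Legendre symbol mod 23, and for n ≥ 1 define e_n = Σ_{d|n} χ(d) d². Then for every prime p with (p/23) = 1, every integer r ≥ 1 and every n ≥ 1, e_{n p^r} ≡ e_{n p^{r-1}} (mod p^r). -/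
/-- `e n = ∑_{d ∣ n} χ(d) d²` where `χ` is the Legendre symbol mod 23. -/
def eisE (n : ℕ) : ℤ := ∑ d ∈ n.divisors, legendreSym 23 (d : ℤ) * (d : ℤ) ^ 2

lemma key_dvd (p : ℕ) (hp : p.Prime) (r n : ℕ) (hn : 1 ≤ n) (d : ℕ) (hd0 : d ≠ 0)
    (hd1 : d ∣ n * p ^ r) (hd2 : ¬ d ∣ n * p ^ (r - 1)) : p ^ r ∣ d := by
  by_contra h
  apply hd2
  have hn0 : n ≠ 0 := by omega
  have hp0 : p ≠ 0 := hp.pos.ne'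
  have hsmall : n * p ^ (r - 1) ≠ 0 := mul_ne_zero hn0 (pow_ne_zero _ hp0)
  have hbig : n * p ^ r ≠ 0 := mul_ne_zero hn0 (pow_ne_zero _ hp0)
  have hdp : d.factorization p < r := by
    by_contra hle
    exact h ((hp.pow_dvd_iff_le_factorization hd0).mpr (by omega))
  have hle : d.factorization ≤ (n * p ^ r).factorization :=
    (Nat.factorization_le_iff_dvd hd0 hbig).mpr hd1
  rw [← Nat.factorization_le_iff_dvd hd0 hsmall]
  intro q
  have h1 := hle q
  rw [Nat.factorization_mul hn0 (pow_ne_zero _ hp0), Nat.Prime.factorization_pow hp] at h1 ⊢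
  simp only [Finsupp.coe_add, Pi.add_apply] at h1 ⊢
  by_cases hq : q = p
  · subst hq
    simp only [Finsupp.single_eq_same] at h1 ⊢
    omega
  · simp [Finsupp.single_eq_of_ne' (Ne.symm hq)] at h1 ⊢
    omega

theorem stmt_1 (p : ℕ) (hp : p.Prime) (hps : legendreSym 23 (p : ℤ) = 1)
    (r n : ℕ) (hr : 1 ≤ r) (hn : 1 ≤ n) :
    Int.ModEq ((p : ℤ) ^ r) (eisE (n * p ^ r)) (eisE (n * p ^ (r - 1))) := by
  have hn0 : n ≠ 0 := by omega
  have hp0 : p ≠ 0 := hp.pos.ne'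
  have hbig : n * p ^ r ≠ 0 := mul_ne_zero hn0 (pow_ne_zero _ hp0)
  have hsub : (n * p ^ (r - 1)).divisors ⊆ (n * p ^ r).divisors :=
    Nat.divisors_subset_of_dvd hbig (mul_dvd_mul_left n (pow_dvd_pow p (by omega)))
  refine Int.ModEq.symm (Int.modEq_iff_dvd.mpr ?_)
  have heq : eisE (n * p ^ r) - eisE (n * p ^ (r - 1)) =
      ∑ d ∈ (n * p ^ r).divisors \ (n * p ^ (r - 1)).divisors,
        legendreSym 23 (d : ℤ) * (d : ℤ) ^ 2 := by
    rw [eisE, eisE, ← Finset.sum_sdiff hsub]; ring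
  rw [heq]
  refine Finset.dvd_sum fun d hd => ?_
  rw [Finset.mem_sdiff, Nat.mem_divisors] at hd
  obtain ⟨⟨hd1, _⟩, hd2⟩ := hd
  have hdne : d ∣ n * p ^ (r - 1) → d ∈ (n * p ^ (r - 1)).divisors := fun h =>
    Nat.mem_divisors.mpr ⟨h, mul_ne_zero hn0 (pow_ne_zero _ hp0)⟩
  have hkey : p ^ r ∣ d :=
    key_dvd p hp r n hn d (fun h => hbig (by simpa [h] using hd1)) hd1
      (fun h => hd2 (hdne h))
  have : ((p : ℤ)) ^ r ∣ (d : ℤ) := by exact_mod_cast Int.natCast_dvd_natCast.mpr hkey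
  exact Dvd.dvd.mul_left (this.trans (dvd_pow_self (d : ℤ) two_ne_zero)) _
end

section
/- Let χ be the Legendre symbol mod 23 and define c_n = -(1/24) e_n - (23/24) a_n, where a_n = Σ_{d|n} χ(n/d) d² and e_n = Σ_{d|n} χ(d) d². Then c_n is an integer for all n ≥ 1, and for every prime p with χ(p) = 1 and all n, r ≥ 1, c_{n p^r} ≡ c_{n p^{r-1}} (mod p^r). -/
/-- `c n = -(1/24) e n - (23/24) a n`, as a rational number. -/
def cSeq (n : ℕ) : ℚ := -(1 / 24) * (eisE n : ℚ) - (23 / 24) * (eisA n : ℚ)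

open Finset ArithmeticFunction

/-- χ as an arithmetic function. -/
def chiAF : ArithmeticFunction ℤ :=
  ⟨fun n => legendreSym 23 (n : ℤ), by simp [legendreSym.at_zero]⟩

/-- n ↦ n² as an arithmetic function. -/
def powAF : ArithmeticFunction ℤ := ⟨fun n => (n : ℤ) ^ 2, by simp⟩

lemma chiAF_apply (n : ℕ) : chiAF n = legendreSym 23 (n : ℤ) := rfl
lemma powAF_apply (n : ℕ) : powAF n = (n : ℤ) ^ 2 := rfl

lemma chiAF_mult : chiAF.IsMultiplicative := by
  refine ⟨by simp [chiAF_apply, legendreSym.at_one], fun {m n} _ => ?_⟩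
  simp only [chiAF_apply]
  rw [Nat.cast_mul, legendreSym.mul]

lemma powAF_mult : powAF.IsMultiplicative := by
  refine ⟨by simp [powAF_apply], fun {m n} _ => ?_⟩
  simp only [powAF_apply]; push_cast; ring

lemma eisA_eq (n : ℕ) : eisA n = (chiAF * powAF) n := by
  rw [mul_apply, Nat.sum_divisorsAntidiagonal' (f := fun a b => chiAF a * powAF b)]
  rfl

lemma eisE_eq (n : ℕ) : eisE n = ((chiAF.pmul powAF) * ((ArithmeticFunction.zeta : ArithmeticFunction ℕ) : ArithmeticFunction ℤ)) n := by
  rw [coe_mul_zeta_apply]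
  simp [eisE, pmul_apply, chiAF_apply, powAF_apply]

lemma eisA_mult_apply {m n : ℕ} (h : m.Coprime n) : eisA (m * n) = eisA m * eisA n := by
  simp only [eisA_eq]; exact (chiAF_mult.mul powAF_mult).2 h

lemma eisE_mult_apply {m n : ℕ} (h : m.Coprime n) : eisE (m * n) = eisE m * eisE n := by
  simp only [eisE_eq]
  exact ((chiAF_mult.pmul powAF_mult).mul isMultiplicative_zeta.natCast).2 h

lemma eisA_one : eisA 1 = 1 := by simp [eisA, legendreSym.at_one]
lemma eisE_one : eisE 1 = 1 := by simp [eisE, legendreSym.at_one]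

lemma chi_pow (p i : ℕ) :
    legendreSym 23 ((p : ℤ) ^ i) = (legendreSym 23 (p : ℤ)) ^ i := by
  induction i with
  | zero => simp [legendreSym.at_one]
  | succ n ih => rw [pow_succ, pow_succ, legendreSym.mul, ih]

lemma eisE_prime_pow {p : ℕ} (hp : p.Prime) (k : ℕ) :
    eisE (p ^ k) = ∑ i ∈ range (k + 1), (legendreSym 23 (p : ℤ)) ^ i * (p : ℤ) ^ (2 * i) := by
  rw [eisE, Nat.sum_divisors_prime_pow hp]
  refine Finset.sum_congr rfl fun i _ => ?_
  push_cast
  rw [chi_pow]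
  ring

lemma eisA_prime_pow {p : ℕ} (hp : p.Prime) (k : ℕ) :
    eisA (p ^ k) = ∑ i ∈ range (k + 1),
      (legendreSym 23 (p : ℤ)) ^ (k - i) * (p : ℤ) ^ (2 * i) := by
  rw [eisA, Nat.sum_divisors_prime_pow hp]
  refine Finset.sum_congr rfl fun i hi => ?_
  have hik : i ≤ k := Nat.lt_succ_iff.mp (Finset.mem_range.mp hi)
  rw [Nat.pow_div hik hp.pos]
  push_cast
  rw [chi_pow]
  ring

lemma chi_two : legendreSym 23 2 = 1 := by
  rw [legendreSym.eq_one_iff 23 (by decide)]; decide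

lemma chi_three : legendreSym 23 3 = 1 := by
  rw [legendreSym.eq_one_iff 23 (by decide)]; decide

lemma key_prime_pow {p : ℕ} (hp : p.Prime) (k : ℕ) :
    ((eisE (p ^ k) : ℤ) : ZMod 24) = ((eisA (p ^ k) : ℤ) : ZMod 24) := by
  rcases eq_or_ne p 23 with rfl | hp23
  · -- p = 23 : χ(23) = 0
    have hchi : legendreSym 23 ((23 : ℕ) : ℤ) = 0 := by
      rw [legendreSym.eq_zero_iff]; decide
    rw [eisE_prime_pow hp, eisA_prime_pow hp, hchi]
    push_cast
    rw [Finset.sum_eq_single 0 (fun i _ hi => by rw [zero_pow hi, zero_mul])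
        (fun h => absurd (Finset.mem_range.mpr (Nat.succ_pos k)) h),
        Finset.sum_eq_single k (fun i hi hik => by
          have : i ≤ k := Nat.lt_succ_iff.mp (Finset.mem_range.mp hi)
          rw [zero_pow (by omega : k - i ≠ 0), zero_mul])
        (fun h => absurd (Finset.mem_range.mpr (Nat.lt_succ_self k)) h)]
    have h23sq : (23 : ZMod 24) ^ 2 = 1 := by decide
    simp [pow_mul, h23sq]
  · have hne : ((p : ℤ) : ZMod 23) ≠ 0 := by
      intro h
      have h' : (23 : ℕ) ∣ p := by
        have := (ZMod.intCast_zmod_eq_zero_iff_dvd (p : ℤ) 23).mp h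
        exact_mod_cast this
      exact hp23 ((Nat.prime_dvd_prime_iff_eq (by norm_num) hp).mp h').symm
    rcases legendreSym.eq_one_or_neg_one 23 hne with h1 | hm1
    · rw [eisE_prime_pow hp, eisA_prime_pow hp, h1]
      simp
    · -- χ(p) = -1 : then p ∉ {2,3}, so p² ≡ 1 (mod 24)
      have hp2 : p ≠ 2 := fun h => by
        rw [h, show ((2 : ℕ) : ℤ) = 2 by norm_num, chi_two] at hm1; norm_num at hm1
      have hp3 : p ≠ 3 := fun h => by
        rw [h, show ((3 : ℕ) : ℤ) = 3 by norm_num, chi_three] at hm1; norm_num at hm1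
      have hcop : Nat.Coprime p 24 := by
        rw [Nat.Prime.coprime_iff_not_dvd hp]
        intro hdvd
        have h24 : p ∣ 2 ^ 3 * 3 := (by norm_num : (24 : ℕ) = 2 ^ 3 * 3) ▸ hdvd
        rcases (Nat.Prime.dvd_mul hp).mp h24 with h | h
        · exact hp2 ((Nat.prime_dvd_prime_iff_eq hp (by norm_num)).mp (hp.dvd_of_dvd_pow h))
        · exact hp3 ((Nat.prime_dvd_prime_iff_eq hp (by norm_num)).mp h)
      have hunit : IsUnit ((p : ℕ) : ZMod 24) := (ZMod.isUnit_iff_coprime p 24).mpr hcop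
      have hall : ∀ x : ZMod 24, IsUnit x → x ^ 2 = 1 := by decide
      have hsq : ((p : ℕ) : ZMod 24) ^ 2 = 1 := hall _ hunit
      rw [eisE_prime_pow hp, eisA_prime_pow hp, hm1]
      push_cast
      have hpow : ∀ i : ℕ, ((p : ℕ) : ZMod 24) ^ (2 * i) = 1 := fun i => by
        rw [pow_mul, hsq, one_pow]
      simp only [hpow, mul_one]
      have hrefl := Finset.sum_range_reflect (fun j => (-1 : ZMod 24) ^ j) (k + 1)
      simp only [Nat.add_sub_cancel] at hrefl
      exact hrefl.symm

/-- E reduced mod 24. -/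
def Ebar : ArithmeticFunction (ZMod 24) :=
  ⟨fun n => ((eisE n : ℤ) : ZMod 24), by simp [eisE]⟩

/-- A reduced mod 24. -/
def Abar : ArithmeticFunction (ZMod 24) :=
  ⟨fun n => ((eisA n : ℤ) : ZMod 24), by simp [eisA]⟩

lemma Ebar_apply (n : ℕ) : Ebar n = ((eisE n : ℤ) : ZMod 24) := rfl
lemma Abar_apply (n : ℕ) : Abar n = ((eisA n : ℤ) : ZMod 24) := rfl

lemma Ebar_mult : Ebar.IsMultiplicative := by
  refine ⟨by simp [Ebar_apply, eisE_one], fun {m n} h => ?_⟩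
  simp only [Ebar_apply, eisE_mult_apply h]; push_cast; ring

lemma Abar_mult : Abar.IsMultiplicative := by
  refine ⟨by simp [Abar_apply, eisA_one], fun {m n} h => ?_⟩
  simp only [Abar_apply, eisA_mult_apply h]; push_cast; ring

lemma congAll (n : ℕ) : ((eisE n : ℤ) : ZMod 24) = ((eisA n : ℤ) : ZMod 24) := by
  have h := (ArithmeticFunction.IsMultiplicative.eq_iff_eq_on_prime_powers Ebar Ebar_mult Abar Abar_mult).mpr
    (fun p i hp => key_prime_pow hp i)
  have := DFunLike.congr_fun h n
  simpa [Ebar_apply, Abar_apply] using this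

lemma dvd24 (n : ℕ) : (24 : ℤ) ∣ (eisE n + 23 * eisA n) := by
  have h0 : ((eisE n + 23 * eisA n : ℤ) : ZMod 24) = 0 := by
    push_cast
    rw [congAll n]
    have h24 : (24 : ZMod 24) = 0 := by decide
    linear_combination ((eisA n : ℤ) : ZMod 24) * h24
  exact_mod_cast (ZMod.intCast_zmod_eq_zero_iff_dvd _ 24).mp h0

lemma cSeq_int (n : ℕ) : ∃ k : ℤ, cSeq n = (k : ℚ) := by
  obtain ⟨t, ht⟩ := dvd24 n
  refine ⟨-t, ?_⟩
  have h : (eisE n : ℚ) + 23 * (eisA n : ℚ) = 24 * (t : ℚ) := by exact_mod_cast ht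
  rw [cSeq]
  push_cast
  linarith

lemma cSeq_mul_prime_pow {p m : ℕ} (hp : p.Prime) (hχ : legendreSym 23 (p : ℤ) = 1)
    (hcop : Nat.Coprime p m) (k : ℕ) :
    cSeq (m * p ^ k) = (∑ i ∈ range (k + 1), (p : ℚ) ^ (2 * i)) * cSeq m := by
  have hc : Nat.Coprime m (p ^ k) := Nat.Coprime.pow_right k hcop.symm
  have hE : eisE (p ^ k) = ∑ i ∈ range (k + 1), (p : ℤ) ^ (2 * i) := by
    rw [eisE_prime_pow hp, hχ]; simp
  have hA : eisA (p ^ k) = ∑ i ∈ range (k + 1), (p : ℤ) ^ (2 * i) := by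
    rw [eisA_prime_pow hp, hχ]; simp
  rw [cSeq, cSeq, eisE_mult_apply hc, eisA_mult_apply hc, hE, hA]
  push_cast
  ring

theorem stmt_6 :
    (∀ n : ℕ, 1 ≤ n → ∃ k : ℤ, cSeq n = (k : ℚ)) ∧
    (∀ p : ℕ, p.Prime → legendreSym 23 (p : ℤ) = 1 →
      ∀ n r : ℕ, 1 ≤ n → 1 ≤ r →
        ∃ m : ℤ, cSeq (n * p ^ r) - cSeq (n * p ^ (r - 1)) = (m : ℚ) * (p : ℚ) ^ r) := by
  constructor
  · intro n _; exact cSeq_int n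
  · intro p hp hχ n r hn hr
    obtain ⟨r', rfl⟩ : ∃ r', r = r' + 1 := ⟨r - 1, by omega⟩
    set s := n.factorization p with hs
    set m := ordCompl[p] n with hm
    have hn0 : n ≠ 0 := by omega
    have hcop : Nat.Coprime p m := Nat.coprime_ordCompl hp hn0
    have hnm : p ^ s * m = n := Nat.ordProj_mul_ordCompl_eq_self n p
    obtain ⟨K, hK⟩ := cSeq_int m
    have e1 : n * p ^ (r' + 1) = m * p ^ (s + (r' + 1)) := by
      rw [← hnm, pow_add]; ring
    have e2 : n * p ^ (r' + 1 - 1) = m * p ^ (s + r') := by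
      simp only [Nat.add_sub_cancel]
      rw [← hnm, pow_add]; ring
    rw [e1, e2, cSeq_mul_prime_pow hp hχ hcop, cSeq_mul_prime_pow hp hχ hcop, hK]
    refine ⟨K * (p : ℤ) ^ (2 * s + r' + 1), ?_⟩
    have hsplit : s + (r' + 1) + 1 = (s + r' + 1) + 1 := by omega
    rw [hsplit, Finset.sum_range_succ]
    push_cast
    have hexp : 2 * (s + r' + 1) = (2 * s + r' + 1) + (r' + 1) := by ring
    rw [hexp, pow_add]
    ring
end

section
/- Define f_{2,n} = (8^n (1/4)_n / n!)², where (x)_n = x(x+1)···(x+n−1) is the Pochhammer symbol. Then f_{2,n} is a positive integer for all n ≥ 0. -/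
open Finset Nat in
/-- In any arithmetic progression `4k+1`, `k < n`, at least `n / m` terms are divisible by `m`,
provided `m` is coprime to `4`. -/
theorem aux_count_ap (n m : ℕ) (hm : 0 < m) (hcop : Nat.Coprime 4 m) :
    n / m ≤ #{k ∈ range n | m ∣ 4 * k + 1} := by
  haveI : NeZero m := ⟨hm.ne'⟩
  obtain ⟨c, hcm, hc⟩ : ∃ c : ℕ, c < m ∧ m ∣ 4 * c + 1 := by
    have hu : IsUnit (4 : ZMod m) := (ZMod.isUnit_iff_coprime 4 m).2 (by exact_mod_cast hcop)
    refine ⟨((-(4 : ZMod m)⁻¹).val), (ZMod.val_lt _), ?_⟩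
    have : ((4 * (-(4 : ZMod m)⁻¹).val + 1 : ℕ) : ZMod m) = 0 := by
      push_cast
      rw [ZMod.natCast_val, ZMod.cast_id, mul_neg, ZMod.mul_inv_of_unit _ hu]
      ring
    exact (ZMod.natCast_eq_zero_iff _ _).1 this
  have hinj : ∀ j ∈ range (n / m), c + j * m ∈ {k ∈ range n | m ∣ 4 * k + 1} := by
    intro j hj
    rw [mem_range] at hj
    rw [mem_filter, mem_range]
    constructor
    · calc c + j * m < m + j * m := by omega
        _ = (j + 1) * m := by ring
        _ ≤ n := Nat.mul_le_of_le_div m (j+1) n (by omega)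
    · have h4 : 4 * (c + j * m) + 1 = (4 * c + 1) + (4 * j) * m := by ring
      rw [h4]
      exact dvd_add hc (Dvd.intro_left _ rfl)
  refine le_trans (le_of_eq (card_range (n / m)).symm) (Finset.card_le_card_of_injOn
    (fun j => c + j * m) hinj ?_)
  intro a _ b _ h
  simp only at h
  exact Nat.eq_of_mul_eq_mul_right hm (by omega)

open Finset Nat in
theorem aux_two_bound (n : ℕ) : ∀ b, ∑ i ∈ Ico 1 b, n / 2 ^ i + n / 2 ^ (b - 1) ≤ n := by
  intro b
  induction b with
  | zero => simp
  | succ b ih =>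
    cases b with
    | zero => simp
    | succ b =>
      rw [Finset.sum_Ico_succ_top (by omega)]
      have h1 : n / 2 ^ (b + 1) = n / 2 ^ b / 2 := by
        rw [Nat.div_div_eq_div_mul, pow_succ]
      have h2 : n / 2 ^ b / 2 * 2 ≤ n / 2 ^ b := Nat.div_mul_le_self _ _
      simp only [Nat.succ_sub_one] at *
      omega

open Finset Nat in
/-- The key arithmetic fact: `n!` divides `2^n · ∏_{k<n} (4k+1)`. -/
theorem aux_key_dvd (n : ℕ) : n ! ∣ 2 ^ n * ∏ k ∈ range n, (4 * k + 1) := by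
  have hP : ∀ k ∈ range n, 4 * k + 1 ≠ 0 := fun k _ => by omega
  have hPne : (∏ k ∈ range n, (4 * k + 1)) ≠ 0 := Finset.prod_ne_zero_iff.2 hP
  rw [← Nat.factorization_le_iff_dvd (factorial_ne_zero n) (by positivity)]
  rw [Finsupp.le_def]
  intro p
  by_cases hp : p.Prime
  · haveI : Fact p.Prime := ⟨hp⟩
    rw [Nat.factorization_mul (by positivity) hPne]
    rw [Nat.factorization_def _ hp, padicValNat_factorial (lt_succ_self (log p n))]
    simp only [Finsupp.coe_add, Pi.add_apply]
    rcases eq_or_ne p 2 with rfl | hodd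
    · have hsum : ∑ i ∈ Ico 1 (log 2 n + 1), n / 2 ^ i ≤ n :=
        le_trans (Nat.le_add_right _ _) (aux_two_bound n (log 2 n + 1))
      have h2 : ((2:ℕ) ^ n).factorization 2 = n := by
        rw [Nat.Prime.factorization_pow hp, Finsupp.single_eq_same]
      rw [h2]
      exact le_trans hsum (Nat.le_add_right _ _)
    · -- odd prime
      have hcop : Nat.Coprime 4 p := by
        have h2p : Nat.Coprime 2 p :=
          Nat.coprime_two_left.2 (hp.odd_of_ne_two hodd)
        have := h2p.pow_left 2
        norm_num at this
        exact this
      have hPfact : (∏ k ∈ range n, (4 * k + 1)).factorization p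
          = ∑ k ∈ range n, (4 * k + 1).factorization p := by
        rw [Nat.factorization_prod hP]
        simp
      refine le_trans ?_ (Nat.le_add_left _ _)
      rw [hPfact]
      calc ∑ i ∈ Ico 1 (log p n + 1), n / p ^ i
          ≤ ∑ i ∈ Ico 1 (log p n + 1), #{k ∈ range n | p ^ i ∣ 4 * k + 1} := by
            refine Finset.sum_le_sum fun i _ => ?_
            exact aux_count_ap n (p ^ i) (pow_pos hp.pos i) (hcop.pow_right i)
        _ = ∑ i ∈ Ico 1 (log p n + 1), ∑ k ∈ range n, if p ^ i ∣ 4 * k + 1 then 1 else 0 := by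
            simp only [Finset.card_filter]
        _ = ∑ k ∈ range n, ∑ i ∈ Ico 1 (log p n + 1), if p ^ i ∣ 4 * k + 1 then 1 else 0 :=
            Finset.sum_comm
        _ ≤ ∑ k ∈ range n, (4 * k + 1).factorization p := by
            refine Finset.sum_le_sum fun k _ => ?_
            rw [← Finset.card_filter]
            calc #{i ∈ Ico 1 (log p n + 1) | p ^ i ∣ 4 * k + 1}
                ≤ #(Finset.Icc 1 ((4 * k + 1).factorization p)) := by
                  refine Finset.card_le_card fun i hi => ?_
                  rw [mem_filter, mem_Ico] at hi
                  rw [mem_Icc]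
                  exact ⟨hi.1.1, (hp.pow_dvd_iff_le_factorization (by omega)).1 hi.2⟩
              _ = (4 * k + 1).factorization p := by rw [Nat.card_Icc]; omega
  · simp [Nat.factorization_eq_zero_of_not_prime _ hp]

open Finset in
theorem aux_poch_eval (n : ℕ) :
    (ascPochhammer ℚ n).eval (1 / 4) * 4 ^ n = ((∏ k ∈ range n, (4 * k + 1) : ℕ) : ℚ) := by
  induction n with
  | zero => simp
  | succ n ih =>
    rw [ascPochhammer_succ_eval, Finset.prod_range_succ]
    push_cast at ih ⊢
    rw [pow_succ]
    linear_combination (4 * ((1:ℚ)/4 + n)) * ih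

/-- `f_{2,n} = (8^n (1/4)_n / n!)²` where `(x)_n` is the rising factorial. -/
noncomputable def f2 (n : ℕ) : ℚ :=
  ((8 ^ n * (ascPochhammer ℚ n).eval (1 / 4)) / (n.factorial : ℚ)) ^ 2

theorem stmt_7 (n : ℕ) : ∃ k : ℕ, 0 < k ∧ f2 n = (k : ℚ) := by
  open Finset Nat in
  obtain ⟨m, hm⟩ := aux_key_dvd n
  have hPpos : 0 < ∏ k ∈ Finset.range n, (4 * k + 1) :=
    Finset.prod_pos fun k _ => by omega
  have hmpos : 0 < m := by
    refine Nat.pos_of_ne_zero ?_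
    rintro rfl
    rw [mul_zero] at hm
    exact absurd hm (Nat.mul_pos (pow_pos two_pos n) hPpos).ne'
  refine ⟨m ^ 2, pow_pos hmpos 2, ?_⟩
  have hfac : (0:ℚ) < (n.factorial : ℚ) := by exact_mod_cast n.factorial_pos
  have h8 : (8:ℚ) ^ n * (ascPochhammer ℚ n).eval (1 / 4)
      = ((2 ^ n * ∏ k ∈ Finset.range n, (4 * k + 1) : ℕ) : ℚ) := by
    have h84 : (8:ℚ) ^ n = 2 ^ n * 4 ^ n := by rw [← mul_pow]; norm_num
    rw [h84, mul_assoc, mul_comm ((4:ℚ) ^ n), aux_poch_eval]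
    push_cast
    ring
  rw [f2, h8, hm]
  push_cast
  field_simp
end

section
/- Define f_{3,n} = 108^n (1/6)_n (1/3)_n / (n!)², where (x)_n is the rising factorial. Then f_{3,n} is a positive integer for all n ≥ 0. -/
open Finset


/-- `f_{3,n} = 108^n (1/6)_n (1/3)_n / (n!)²` where `(x)_n` is the rising factorial. -/
noncomputable def f3 (n : ℕ) : ℚ :=
  108 ^ n * (ascPochhammer ℚ n).eval (1 / 6) * (ascPochhammer ℚ n).eval (1 / 3) /
    ((n.factorial : ℚ)) ^ 2

lemma asc_pos (n : ℕ) {x : ℚ} (hx : 0 < x) : 0 < (ascPochhammer ℚ n).eval x := by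
  induction n with
  | zero => simp
  | succ n ih =>
    rw [ascPochhammer_succ_eval]
    have : (0:ℚ) ≤ (n:ℚ) := Nat.cast_nonneg n
    exact mul_pos ih (by linarith)

lemma f3_pos (n : ℕ) : 0 < f3 n := by
  unfold f3
  have h1 := asc_pos n (x := 1/6) (by norm_num)
  have h2 := asc_pos n (x := 1/3) (by norm_num)
  have h3 : (0:ℚ) < (n.factorial : ℚ) := by exact_mod_cast n.factorial_pos
  positivity

lemma f3_zero : f3 0 = 1 := by simp [f3]

lemma f3_succ (k : ℕ) : f3 (k+1) * ((k:ℚ)+1)^2 = 6*(6*k+1)*(3*k+1) * f3 k := by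
  unfold f3
  rw [ascPochhammer_succ_eval, ascPochhammer_succ_eval, Nat.factorial_succ]
  have hk : ((k.factorial : ℚ)) ≠ 0 := by
    exact_mod_cast k.factorial_pos.ne'
  have hk1 : ((k:ℚ)+1) ≠ 0 := by positivity
  push_cast
  field_simp
  ring

lemma cast_choose_add (a b : ℕ) :
    (((a+b).choose a : ℕ) : ℚ) = ((a+b).factorial : ℚ) / ((a.factorial : ℚ) * (b.factorial : ℚ)) := by
  rw [Nat.cast_choose ℚ (Nat.le_add_right a b), Nat.add_sub_cancel_left]

lemma key (k j : ℕ) :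
    ((k:ℚ)+1) * (-27*((k:ℚ)+(j:ℚ)+1)^2 * (k.choose (j+1) : ℚ)
        - 3*(3*((k:ℚ)+(j:ℚ))+1)*(3*((k:ℚ)+(j:ℚ))+2) * (k.choose j : ℚ))
    = -6*(6*(k:ℚ)+1)*(3*(k:ℚ)+1)*((k:ℚ)+1-(j:ℚ)) * ((k+1).choose j : ℚ)
      - 27*(k:ℚ)*((k:ℚ)-(j:ℚ)-1) * (k.choose (j+1) : ℚ) * ((k:ℚ)+1) := by
  rcases Nat.lt_or_ge j k with h | h
  · -- j + 1 ≤ k : generic case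
    obtain ⟨m, rfl⟩ : ∃ m, k = j + 1 + m := ⟨k - (j+1), by omega⟩
    have hj : ((j.factorial : ℕ) : ℚ) ≠ 0 := by exact_mod_cast j.factorial_pos.ne'
    have hm : ((m.factorial : ℕ) : ℚ) ≠ 0 := by exact_mod_cast m.factorial_pos.ne'
    have hd : (((j+(m+1)).factorial : ℕ) : ℚ) ≠ 0 := by
      exact_mod_cast (j+(m+1)).factorial_pos.ne'
    have c1 : (((j+1+m).choose (j+1) : ℕ) : ℚ)
        = ((j+(m+1)).factorial : ℚ) / (((j:ℚ)+1) * (j.factorial : ℚ) * (m.factorial : ℚ)) := by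
      rw [cast_choose_add (j+1) m, show (j+1)+m = j+(m+1) by omega, Nat.factorial_succ j]
      push_cast; ring
    have c2 : (((j+1+m).choose j : ℕ) : ℚ)
        = ((j+(m+1)).factorial : ℚ) / ((j.factorial : ℚ) * (((m:ℚ)+1) * (m.factorial : ℚ))) := by
      rw [show j+1+m = j+(m+1) by omega, cast_choose_add j (m+1), Nat.factorial_succ m]
      push_cast; ring
    have c3 : (((j+1+m+1).choose j : ℕ) : ℚ)
        = (((j:ℚ)+(m:ℚ)+2) * ((j+(m+1)).factorial : ℚ))
          / ((j.factorial : ℚ) * (((m:ℚ)+2) * ((m:ℚ)+1) * (m.factorial : ℚ))) := by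
      rw [show j+1+m+1 = j+(m+2) by omega, cast_choose_add j (m+2),
        show j+(m+2) = (j+(m+1))+1 by omega, Nat.factorial_succ (j+(m+1)),
        Nat.factorial_succ (m+1), Nat.factorial_succ m]
      push_cast; ring
    rw [c1, c2, c3]
    have hj1 : ((j:ℚ)+1) ≠ 0 := by positivity
    have hm1 : ((m:ℚ)+1) ≠ 0 := by positivity
    have hm2 : ((m:ℚ)+2) ≠ 0 := by positivity
    push_cast
    field_simp
    ring
  · -- j ≥ k
    rcases Nat.lt_or_ge (k+1) j with h2 | h2
    · rw [Nat.choose_eq_zero_of_lt (by omega : k < j+1),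
        Nat.choose_eq_zero_of_lt (by omega : k < j),
        Nat.choose_eq_zero_of_lt (by omega : k+1 < j)]
      push_cast; ring
    · rcases Nat.lt_or_ge k j with h3 | h3
      · obtain rfl : j = k + 1 := by omega
        rw [Nat.choose_eq_zero_of_lt (by omega : k < k+1+1),
          Nat.choose_eq_zero_of_lt (by omega : k < k+1),
          Nat.choose_self]
        push_cast; ring
      · obtain rfl : j = k := by omega
        rw [Nat.choose_succ_self, Nat.choose_self, Nat.choose_succ_self_right]
        push_cast; ring

/-- The WZ-style certificate function. -/
noncomputable def Wc (n k : ℕ) : ℚ :=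
  -(k:ℚ) * (2*(k:ℚ) - (n:ℚ) - 1) * f3 k * (k.choose (n+1-k) : ℚ) * (-27)^(n+1-k)

lemma step (n k : ℕ) (hk : k ≤ n) :
    ((n:ℚ)+1)^2 * (f3 k * (k.choose (n+1-k) : ℚ) * (-27)^(n+1-k))
      - 3*(3*(n:ℚ)+1)*(3*(n:ℚ)+2) * (f3 k * (k.choose (n-k) : ℚ) * (-27)^(n-k))
    = Wc n (k+1) - Wc n k := by
  obtain ⟨j, rfl⟩ : ∃ j, n = k + j := ⟨n - k, by omega⟩
  unfold Wc
  rw [show k+j+1-(k+1) = j by omega, show k+j+1-k = j+1 by omega,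
    show k+j-k = j by omega]
  have hs := f3_succ k
  have hkey := key k j
  have hne : ((k:ℚ)+1) ≠ 0 := by positivity
  apply mul_left_cancel₀ hne
  push_cast at hs hkey ⊢
  rw [pow_succ]
  linear_combination (f3 k * (-27:ℚ)^j) * hkey
    + ((k:ℚ)+1-(j:ℚ)) * ((k+1).choose j : ℚ) * (-27:ℚ)^j * hs

/-- `hh n = Σ_k f3 k · C(k, n-k) · (-27)^(n-k)`; this equals `(3n)!/(n!)³`. -/
noncomputable def hh (n : ℕ) : ℚ :=
  ∑ k ∈ Finset.range (n+1), f3 k * (k.choose (n-k) : ℚ) * (-27)^(n-k)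

lemma hh_rec (n : ℕ) : ((n:ℚ)+1)^2 * hh (n+1) = 3*(3*(n:ℚ)+1)*(3*(n:ℚ)+2) * hh n := by
  have expand : hh (n+1)
      = (∑ k ∈ Finset.range (n+1), f3 k * (k.choose (n+1-k) : ℚ) * (-27)^(n+1-k)) + f3 (n+1) := by
    rw [hh, Finset.sum_range_succ]
    simp
  have h1 : (∑ k ∈ Finset.range (n+1), ((n:ℚ)+1)^2 * (f3 k * (k.choose (n+1-k) : ℚ) * (-27)^(n+1-k)))
      - (∑ k ∈ Finset.range (n+1), 3*(3*(n:ℚ)+1)*(3*(n:ℚ)+2) * (f3 k * (k.choose (n-k) : ℚ) * (-27)^(n-k)))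
      = Wc n (n+1) - Wc n 0 := by
    rw [← Finset.sum_sub_distrib, ← Finset.sum_range_sub (fun k => Wc n k)]
    exact Finset.sum_congr rfl (fun k hk => step n k (Nat.lt_succ_iff.mp (Finset.mem_range.mp hk)))
  have h2 : Wc n 0 = 0 := by simp [Wc]
  have h3 : Wc n (n+1) = -((n:ℚ)+1)^2 * f3 (n+1) := by
    simp only [Wc, Nat.add_sub_cancel_left, Nat.sub_self, Nat.choose_zero_right]
    push_cast; ring
  rw [h2, h3] at h1
  rw [expand, hh, mul_add, Finset.mul_sum, Finset.mul_sum]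
  linear_combination h1

/-- `cc n = C(3n,n)·C(2n,n) = (3n)!/(n!)³`. -/
def cc (n : ℕ) : ℕ := (3*n).choose n * ((2*n).choose n)

lemma cc_cast (n : ℕ) : (cc n : ℚ) = ((3*n).factorial : ℚ) / ((n.factorial : ℚ))^3 := by
  unfold cc
  push_cast
  rw [Nat.cast_choose ℚ (by omega : n ≤ 3*n), Nat.cast_choose ℚ (by omega : n ≤ 2*n),
    show 3*n - n = 2*n by omega, show 2*n - n = n by omega]
  have h1 : ((n.factorial : ℕ) : ℚ) ≠ 0 := by exact_mod_cast n.factorial_pos.ne'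
  have h2 : (((2*n).factorial : ℕ) : ℚ) ≠ 0 := by exact_mod_cast (2*n).factorial_pos.ne'
  field_simp

lemma cc_rec (n : ℕ) : ((n:ℚ)+1)^2 * (cc (n+1) : ℚ) = 3*(3*(n:ℚ)+1)*(3*(n:ℚ)+2) * (cc n : ℚ) := by
  rw [cc_cast, cc_cast]
  rw [show 3*(n+1) = (3*n+1)+1+1 by ring]
  rw [Nat.factorial_succ ((3*n+1)+1), Nat.factorial_succ (3*n+1), Nat.factorial_succ (3*n),
    Nat.factorial_succ n]
  have h1 : ((n.factorial : ℕ) : ℚ) ≠ 0 := by exact_mod_cast n.factorial_pos.ne'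
  have h2 : (((3*n).factorial : ℕ) : ℚ) ≠ 0 := by exact_mod_cast (3*n).factorial_pos.ne'
  have h3 : ((n:ℚ)+1) ≠ 0 := by positivity
  push_cast
  field_simp
  ring

lemma hh_eq_cc (n : ℕ) : hh n = (cc n : ℚ) := by
  induction n with
  | zero => simp [hh, cc, f3_zero]
  | succ n ih =>
    have h := hh_rec n
    rw [ih, ← cc_rec n] at h
    have h3 : ((n:ℚ)+1)^2 ≠ 0 := by positivity
    exact mul_left_cancel₀ h3 h

lemma f3_int (n : ℕ) : ∃ z : ℤ, f3 n = (z : ℚ) := by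
  induction n using Nat.strong_induction_on with
  | _ n ih =>
    have hsplit : f3 n
        = (cc n : ℚ) - ∑ k ∈ Finset.range n, f3 k * (k.choose (n-k) : ℚ) * (-27)^(n-k) := by
      have e : hh n = (∑ k ∈ Finset.range n, f3 k * (k.choose (n-k) : ℚ) * (-27)^(n-k)) + f3 n := by
        rw [hh, Finset.sum_range_succ]; simp
      rw [hh_eq_cc] at e
      linarith
    have H : ∀ k : ℕ, ∃ z : ℤ, (k < n → f3 k = (z:ℚ)) := by
      intro k
      by_cases h : k < n
      · obtain ⟨z, hz⟩ := ih k h; exact ⟨z, fun _ => hz⟩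
      · exact ⟨0, fun h' => absurd h' h⟩
    choose g hg using H
    refine ⟨(cc n : ℤ) - ∑ k ∈ Finset.range n, g k * (k.choose (n-k) : ℤ) * (-27)^(n-k), ?_⟩
    rw [hsplit]
    have e2 : ∑ k ∈ Finset.range n, f3 k * (k.choose (n-k) : ℚ) * (-27)^(n-k)
        = ∑ k ∈ Finset.range n, ((g k : ℚ)) * (k.choose (n-k) : ℚ) * (-27)^(n-k) :=
      Finset.sum_congr rfl (fun k hk => by rw [hg k (Finset.mem_range.mp hk)])
    rw [e2]
    push_cast
    ring

theorem stmt_8 (n : ℕ) : ∃ k : ℕ, 0 < k ∧ f3 n = (k : ℚ) := by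
  obtain ⟨z, hz⟩ := f3_int n
  have hzpos : 0 < z := by
    have := f3_pos n
    rw [hz] at this
    exact_mod_cast this
  refine ⟨z.toNat, by omega, ?_⟩
  rw [hz]
  exact_mod_cast (Int.toNat_of_nonneg hzpos.le).symm
end

section
/- For each prime p with (p/3) = 1 (i.e., p ≡ 1 mod 3) and integers n, r ≥ 1, the numbers f_{3,n} = 108^n (1/6)_n (1/3)_n / (n!)² satisfy f_{3, n p^r} ≡ f_{3, n p^{r-1}} (mod p^r). -/
open Finset

/-- `Pc c N = ∏_{k<N} (c k + 1)` -/
def Pc (c N : ℕ) : ℕ := ∏ k ∈ range N, (c * k + 1)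

/-- unit part: product over `k < M` of `c k + 1`, with the terms `k ≡ (p-1)/c [p]` replaced by 1 -/
def Uc (p c M : ℕ) : ℕ := ∏ k ∈ range M, if k % p = (p - 1) / c then 1 else c * k + 1

lemma Pc_one (M : ℕ) : Pc 1 M = M.factorial := by
  simp [Pc, Finset.prod_range_add_one_eq_factorial]

lemma ascPochhammer_eval_prod (n : ℕ) (x : ℚ) :
    (ascPochhammer ℚ n).eval x = ∏ k ∈ range n, (x + k) := by
  induction n with
  | zero => simp
  | succ n ih =>
    rw [ascPochhammer_succ_right, Finset.prod_range_succ, ← ih]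
    simp [Polynomial.eval_mul]

lemma prod_div_const (N : ℕ) (c : ℚ) (f : ℕ → ℚ) :
    ∏ k ∈ range N, (f k / c) = (∏ k ∈ range N, f k) / c ^ N := by
  rw [Finset.prod_div_distrib, Finset.prod_const, Finset.card_range]

lemma f3_eq (N : ℕ) : f3 N = (6 ^ N * Pc 6 N * Pc 3 N : ℕ) / ((N.factorial : ℚ)) ^ 2 := by
  have h6 : (ascPochhammer ℚ N).eval (1/6) = (Pc 6 N : ℚ) / 6 ^ N := by
    rw [ascPochhammer_eval_prod, Pc, Nat.cast_prod, ← prod_div_const]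
    refine Finset.prod_congr rfl fun k _ => ?_
    push_cast; ring
  have h3 : (ascPochhammer ℚ N).eval (1/3) = (Pc 3 N : ℚ) / 3 ^ N := by
    rw [ascPochhammer_eval_prod, Pc, Nat.cast_prod, ← prod_div_const]
    refine Finset.prod_congr rfl fun k _ => ?_
    push_cast; ring
  have key : (108:ℚ)^N = 6^N * 6^N * 3^N := by
    rw [← mul_pow, ← mul_pow]; norm_num
  have h : (108:ℚ)^N * ((Pc 6 N : ℚ)/6^N) * ((Pc 3 N : ℚ)/3^N)
      = 6^N * (Pc 6 N : ℚ) * (Pc 3 N : ℚ) := by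
    rw [key]; field_simp
  rw [f3, h6, h3, h]
  push_cast
  ring

lemma count_ge {q c N : ℕ} (hq : 1 < q) (hc : Nat.Coprime c q) :
    N / q ≤ ((range N).filter (fun k => q ∣ c * k + 1)).card := by
  haveI : NeZero q := ⟨by omega⟩
  have hu : IsUnit (c : ZMod q) := (ZMod.isUnit_iff_coprime c q).mpr hc
  set x : ZMod q := -(↑hu.unit⁻¹ : ZMod q) with hx
  set k0 := x.val with hk0
  have hk0q : k0 < q := ZMod.val_lt x
  have hdvd : q ∣ c * k0 + 1 := by
    rw [← ZMod.natCast_eq_zero_iff]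
    push_cast
    rw [ZMod.natCast_rightInverse x, hx]
    linear_combination (↑hu.unit⁻¹ : ZMod q) * hu.unit_spec - Units.mul_inv hu.unit
  rw [← Finset.card_range (N / q)]
  apply Finset.card_le_card_of_injOn (fun m => k0 + q * m)
  · intro m hm
    simp only [mem_coe, mem_range] at hm
    simp only [mem_coe, mem_filter, mem_range]
    constructor
    · have h1 : q * (m + 1) ≤ q * (N / q) := Nat.mul_le_mul_left q (by omega)
      have h2 : q * (N / q) ≤ N := by rw [mul_comm]; exact Nat.div_mul_le_self N q
      have h3 : q * (m + 1) = q * m + q := by ring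
      linarith
    · have h : c * (k0 + q * m) + 1 = (c * k0 + 1) + q * (c * m) := by ring
      rw [h]
      exact Nat.dvd_add hdvd ⟨c * m, rfl⟩
  · intro a _ b _ h
    simp only at h
    have : q * a = q * b := by omega
    exact Nat.eq_of_mul_eq_mul_left (by omega) this

lemma Pc_pos (c N : ℕ) : 0 < Pc c N := Finset.prod_pos fun k _ => by omega

lemma val_prod_ge {ℓ : ℕ} (hl : ℓ.Prime) {c : ℕ} (N : ℕ) (hc1 : 1 ≤ c)
    (hc : Nat.Coprime c ℓ) :
    padicValNat ℓ N.factorial ≤ padicValNat ℓ (Pc c N) := by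
  haveI := Fact.mk hl
  set b := c * N + 1 with hb
  have hNb : N < b := by nlinarith
  have hlog : Nat.log ℓ N < b := lt_of_le_of_lt (Nat.log_le_self ℓ N) hNb
  rw [padicValNat_factorial hlog]
  have hP : padicValNat ℓ (Pc c N) = ∑ k ∈ range N, padicValNat ℓ (c * k + 1) := by
    have h0 : ∀ k ∈ range N, c * k + 1 ≠ 0 := fun k _ => by omega
    have hfac := Nat.factorization_prod h0
    have happ : (∏ k ∈ range N, (c * k + 1)).factorization ℓ
        = ∑ k ∈ range N, (c * k + 1).factorization ℓ := by
      rw [hfac, Finset.sum_apply']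
    rw [Pc, ← Nat.factorization_def _ hl, happ]
    exact Finset.sum_congr rfl fun k _ => Nat.factorization_def _ hl
  rw [hP]
  have hpt : ∀ k ∈ range N, padicValNat ℓ (c * k + 1)
      = ((Finset.Ico 1 b).filter (fun i => ℓ ^ i ∣ c * k + 1)).card := by
    intro k hk
    simp only [mem_range] at hk
    set m := c * k + 1 with hm
    have hm0 : m ≠ 0 := by omega
    have hmb : m < b := by nlinarith
    have hfe : (Finset.Ico 1 b).filter (fun i => ℓ ^ i ∣ m)
        = Finset.Ico 1 (padicValNat ℓ m + 1) := by
      ext i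
      simp only [mem_filter, Finset.mem_Ico]
      constructor
      · rintro ⟨⟨h1, _⟩, hd⟩
        have := (padicValNat_dvd_iff_le hm0).mp hd
        exact ⟨h1, by omega⟩
      · rintro ⟨h1, h2⟩
        have hd : ℓ ^ i ∣ m := (padicValNat_dvd_iff_le hm0).mpr (by omega)
        refine ⟨⟨h1, ?_⟩, hd⟩
        have hle : ℓ ^ i ≤ m := Nat.le_of_dvd (by omega) hd
        have h2i : 2 ^ i ≤ ℓ ^ i := Nat.pow_le_pow_left hl.two_le i
        have hb2 : b < 2 ^ b := Nat.lt_two_pow_self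
        have h2b : 2 ^ i < 2 ^ b := by omega
        exact (Nat.pow_lt_pow_iff_right (by norm_num)).mp h2b
    rw [hfe, Nat.card_Ico]
    omega
  calc ∑ i ∈ Finset.Ico 1 b, N / ℓ ^ i
      ≤ ∑ i ∈ Finset.Ico 1 b, ((range N).filter (fun k => ℓ ^ i ∣ c * k + 1)).card := by
        refine Finset.sum_le_sum fun i hi => ?_
        simp only [Finset.mem_Ico] at hi
        refine count_ge ?_ (hc.pow_right i)
        exact Nat.one_lt_pow (by omega) hl.one_lt
    _ = ∑ k ∈ range N, ((Finset.Ico 1 b).filter (fun i => ℓ ^ i ∣ c * k + 1)).card := by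
        simp only [Finset.card_filter]
        rw [Finset.sum_comm]
    _ = ∑ k ∈ range N, padicValNat ℓ (c * k + 1) :=
        (Finset.sum_congr rfl fun k hk => (hpt k hk).symm)

lemma f3_int_s9 (N : ℕ) : (N.factorial) ^ 2 ∣ 6 ^ N * Pc 6 N * Pc 3 N := by
  have hL : (N.factorial) ^ 2 ≠ 0 := by positivity
  have hR : 6 ^ N * Pc 6 N * Pc 3 N ≠ 0 :=
    Nat.mul_ne_zero (Nat.mul_ne_zero (by positivity) (Pc_pos 6 N).ne') (Pc_pos 3 N).ne' 
  rw [← Nat.factorization_le_iff_dvd hL hR, Finsupp.le_def]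
  intro ℓ
  by_cases hl : ℓ.Prime
  swap
  · simp [Nat.factorization_eq_zero_of_not_prime _ hl]
  haveI := Fact.mk hl
  have e1 : ((N.factorial) ^ 2).factorization ℓ = 2 * padicValNat ℓ N.factorial := by
    rw [Nat.factorization_pow]
    simp [Nat.factorization_def _ hl]
  have e2 : (6 ^ N * Pc 6 N * Pc 3 N).factorization ℓ
      = N * (Nat.factorization 6 ℓ) + padicValNat ℓ (Pc 6 N) + padicValNat ℓ (Pc 3 N) := by
    rw [Nat.factorization_mul (Nat.mul_ne_zero (by positivity) (Pc_pos 6 N).ne')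
          (Pc_pos 3 N).ne',
        Nat.factorization_mul (by positivity) (Pc_pos 6 N).ne',
        Nat.factorization_pow]
    simp [Nat.factorization_def _ hl]
    try ring
  rw [e1, e2]
  have hfact6 : Nat.factorization 6 = Nat.factorization 2 + Nat.factorization 3 := by
    rw [show (6:ℕ) = 2 * 3 by norm_num, Nat.factorization_mul (by norm_num) (by norm_num)]
  by_cases h2 : ℓ = 2
  · subst h2
    have hv := sub_one_mul_padicValNat_factorial (p := 2) N
    have h6 : Nat.factorization 6 2 = 1 := by
      rw [hfact6]
      rw [Nat.Prime.factorization (by norm_num), Nat.Prime.factorization (by norm_num)]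
      simp [Finsupp.single_apply]
    have h3 : padicValNat 2 N.factorial ≤ padicValNat 2 (Pc 3 N) :=
      val_prod_ge hl N (by norm_num) (by norm_num)
    rw [h6]
    omega
  by_cases h3 : ℓ = 3
  · subst h3
    have hv := sub_one_mul_padicValNat_factorial (p := 3) N
    have h6 : Nat.factorization 6 3 = 1 := by
      rw [hfact6]
      rw [Nat.Prime.factorization (by norm_num), Nat.Prime.factorization (by norm_num)]
      simp [Finsupp.single_apply]
    rw [h6]
    omega
  · have hc6 : Nat.Coprime 6 ℓ := by
      have h5 : ¬ ℓ ∣ 6 := by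
        intro hdvd
        have hle : ℓ ≤ 6 := Nat.le_of_dvd (by norm_num) hdvd
        have h2l := hl.two_le
        interval_cases ℓ <;> revert hl hdvd h2 h3 <;> decide
      exact ((Nat.Prime.coprime_iff_not_dvd hl).mpr h5).symm
    have hc3 : Nat.Coprime 3 ℓ := Nat.Coprime.coprime_dvd_left (by norm_num) hc6
    have g6 : padicValNat ℓ N.factorial ≤ padicValNat ℓ (Pc 6 N) :=
      val_prod_ge hl N (by norm_num) hc6
    have g3 : padicValNat ℓ N.factorial ≤ padicValNat ℓ (Pc 3 N) :=
      val_prod_ge hl N (by norm_num) hc3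
    omega

section Padic

variable {p c : ℕ}

lemma k0_lt (hp : p.Prime) : (p - 1) / c < p := by
  have := hp.two_le
  have h := Nat.div_le_self (p - 1) c
  omega

lemma ck0 (hp : p.Prime) (hc : c ∣ p - 1) : c * ((p - 1) / c) + 1 = p := by
  have := hp.two_le
  rw [Nat.mul_div_cancel' hc]
  omega

lemma c_coprime_p (hp : p.Prime) (hc : c ∣ p - 1) : Nat.Coprime c p := by
  have h2 := hp.two_le
  have hc0 : 0 < c := Nat.pos_of_dvd_of_pos hc (by omega)
  have hcle : c ≤ p - 1 := Nat.le_of_dvd (by omega) hc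
  have hnd : ¬ p ∣ c := fun h => by have := Nat.le_of_dvd hc0 h; omega
  exact ((Nat.Prime.coprime_iff_not_dvd hp).mpr hnd).symm

lemma mod_iff (hp : p.Prime) (hc : c ∣ p - 1) (j : ℕ) :
    j % p = (p - 1) / c ↔ p ∣ c * j + 1 := by
  haveI : NeZero p := ⟨hp.pos.ne'⟩
  set k0 := (p - 1) / c with hk0
  have hck0 : c * k0 + 1 = p := ck0 hp hc
  have hk0p : k0 < p := k0_lt hp
  have h1 : (j % p = k0) ↔ ((j : ZMod p) = (k0 : ZMod p)) := by
    rw [ZMod.natCast_eq_natCast_iff]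
    unfold Nat.ModEq
    rw [Nat.mod_eq_of_lt hk0p]
  have hz : (c : ZMod p) * (k0 : ZMod p) + 1 = 0 := by
    have h := congrArg (Nat.cast : ℕ → ZMod p) hck0
    push_cast at h
    rw [h, ZMod.natCast_self]
  have hu : IsUnit (c : ZMod p) := (ZMod.isUnit_iff_coprime c p).mpr (c_coprime_p hp hc)
  have h2 : (p ∣ c * j + 1) ↔ ((c : ZMod p) * (j : ZMod p) + 1 = 0) := by
    rw [← ZMod.natCast_eq_zero_iff]
    push_cast
    tauto
  rw [h1, h2]
  constructor
  · intro h; rw [h]; exact hz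
  · intro h
    have : (c : ZMod p) * (j : ZMod p) = (c : ZMod p) * (k0 : ZMod p) := by
      have := hz
      linear_combination h - this
    exact hu.mul_left_cancel this

lemma Pc_split (hp : p.Prime) (hc : c ∣ p - 1) (B : ℕ) :
    Pc c (B * p) = p ^ B * Pc c B * Uc p c (B * p) := by
  set k0 := (p - 1) / c with hk0
  have hp0 := hp.pos
  have hk0p : k0 < p := k0_lt hp
  have hck0 : c * k0 + 1 = p := ck0 hp hc
  have key : ∀ k : ℕ, (if k % p = k0 then c * k + 1 else 1) *
      (if k % p = k0 then 1 else c * k + 1) = c * k + 1 := by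
    intro k; split_ifs <;> ring
  have step1 : Pc c (B * p) = (∏ k ∈ range (B * p), if k % p = k0 then c * k + 1 else 1) *
      Uc p c (B * p) := by
    rw [Uc, ← Finset.prod_mul_distrib, Pc]
    exact Finset.prod_congr rfl fun k _ => (key k).symm
  have step2 : (∏ k ∈ range (B * p), if k % p = k0 then c * k + 1 else 1)
      = ∏ m ∈ range B, (p * (c * m + 1)) := by
    rw [← Finset.prod_filter]
    refine Finset.prod_nbij' (fun k => k / p) (fun m => p * m + k0) ?_ ?_ ?_ ?_ ?_
    · intro k hk
      simp only [mem_filter, mem_range] at hk ⊢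
      exact Nat.div_lt_of_lt_mul (by rw [mul_comm]; exact hk.1)
    · intro m hm
      simp only [mem_range, mem_filter] at hm ⊢
      constructor
      · have h1 : p * (m + 1) ≤ p * B := Nat.mul_le_mul_left p (by omega)
        have h2 : p * (m + 1) = p * m + p := by ring
        have h3 : p * B = B * p := by ring
        linarith
      · rw [Nat.mul_add_mod]
        exact Nat.mod_eq_of_lt hk0p
    · intro k hk
      simp only [mem_filter, mem_range] at hk
      conv_rhs => rw [← Nat.div_add_mod k p]
      rw [hk.2]
    · intro m hm
      show (p * m + k0) / p = m
      rw [Nat.mul_add_div hp0, Nat.div_eq_of_lt hk0p, add_zero]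
    · intro k hk
      simp only [mem_filter, mem_range] at hk
      obtain ⟨d, hd⟩ : ∃ d, k = p * d + k0 :=
        ⟨k / p, by conv_lhs => rw [← Nat.div_add_mod k p, hk.2]⟩
      have hdq : k / p = d := by
        rw [hd, Nat.mul_add_div hp0, Nat.div_eq_of_lt hk0p, add_zero]
      show c * k + 1 = p * (c * (k / p) + 1)
      rw [hdq, hd]
      have h5 : c * (p * d + k0) + 1 = p * (c * d) + (c * k0 + 1) := by ring
      rw [h5, hck0]
      ring
  rw [step1, step2, Finset.prod_mul_distrib, Finset.prod_const, Finset.card_range, Pc]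

lemma Uc_coprime (hp : p.Prime) (hc : c ∣ p - 1) (M : ℕ) : Nat.Coprime p (Uc p c M) := by
  refine Nat.Coprime.prod_right fun k _ => ?_
  by_cases h : k % p = (p - 1) / c
  · simp [h, Nat.coprime_one_right]
  · simp only [if_neg h]
    refine (Nat.Prime.coprime_iff_not_dvd hp).mpr ?_
    rw [← mod_iff hp hc]
    exact h

end Padic

open Classical in
/-- product of all units of `ZMod q` (other elements replaced by 1) -/
noncomputable def Qe (q : ℕ) [NeZero q] : ZMod q :=
  ∏ y : ZMod q, if IsUnit y then y else 1

lemma Qe_block {p c q : ℕ} (hp : p.Prime) (hc : c ∣ p - 1) [NeZero q]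
    (hcop : Nat.Coprime c q)
    (hunit : ∀ m : ℕ, IsUnit ((m : ZMod q)) ↔ ¬ p ∣ m)
    {a : ℕ} (ha : q ∣ a) (hpa : p ∣ a) :
    ((∏ j ∈ range q, if (a + j) % p = (p - 1) / c then 1 else c * (a + j) + 1 : ℕ) : ZMod q)
      = Qe q := by
  classical
  have hcu : IsUnit (c : ZMod q) := (ZMod.isUnit_iff_coprime c q).mpr hcop
  rw [Nat.cast_prod]
  have e1 : ∀ j ∈ range q,
      ((if (a + j) % p = (p - 1) / c then 1 else c * (a + j) + 1 : ℕ) : ZMod q)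
        = (if j % p = (p - 1) / c then 1 else ((c * j + 1 : ℕ) : ZMod q)) := by
    intro j _
    have hmod : (a + j) % p = j % p := by
      obtain ⟨d, rfl⟩ := hpa
      rw [Nat.add_comm, Nat.add_mul_mod_self_left]
    rw [hmod]
    by_cases h : j % p = (p - 1) / c
    · simp [h]
    · simp only [if_neg h]
      push_cast
      have hz : ((a : ℕ) : ZMod q) = 0 := (ZMod.natCast_eq_zero_iff a q).mpr ha
      rw [hz]
      ring
  rw [Finset.prod_congr rfl e1]
  have e2 : (∏ j ∈ range q, (if j % p = (p - 1) / c then 1 else ((c * j + 1 : ℕ) : ZMod q)))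
      = ∏ x : ZMod q, (if x.val % p = (p - 1) / c then 1 else (c : ZMod q) * x + 1) := by
    refine Finset.prod_nbij' (fun j => (j : ZMod q)) (fun x => x.val) ?_ ?_ ?_ ?_ ?_
    · intro j _; exact Finset.mem_univ _
    · intro x _
      simp only [mem_range]
      exact ZMod.val_lt x
    · intro j hj
      simp only [mem_range] at hj
      exact ZMod.val_natCast_of_lt hj
    · intro x _
      exact ZMod.natCast_rightInverse x
    · intro j hj
      simp only [mem_range] at hj
      rw [ZMod.val_natCast_of_lt hj]
      by_cases h : j % p = (p - 1) / c
      · simp [h]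
      · simp only [if_neg h]
        push_cast
        ring
  rw [e2]
  have e3 : ∀ x : ZMod q,
      (if x.val % p = (p - 1) / c then 1 else (c : ZMod q) * x + 1)
        = (if IsUnit ((c : ZMod q) * x + 1) then (c : ZMod q) * x + 1 else 1) := by
    intro x
    have hxv : ((x.val : ℕ) : ZMod q) = x := ZMod.natCast_rightInverse x
    have hcast : ((c * x.val + 1 : ℕ) : ZMod q) = (c : ZMod q) * x + 1 := by
      push_cast
      rw [hxv]
    have hiff : IsUnit ((c : ZMod q) * x + 1) ↔ ¬ (x.val % p = (p - 1) / c) := by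
      rw [← hcast, hunit, mod_iff hp hc x.val]
    by_cases h : x.val % p = (p - 1) / c
    · rw [if_pos h, if_neg (by rw [hiff]; exact fun hh => hh h)]
    · rw [if_neg h, if_pos (hiff.mpr h)]
  rw [Finset.prod_congr rfl (fun x _ => e3 x)]
  have hu := hcu.unit_spec
  let e : ZMod q ≃ ZMod q :=
    { toFun := fun x => (hcu.unit : ZMod q) * x + 1
      invFun := fun y => ((hcu.unit⁻¹ : (ZMod q)ˣ) : ZMod q) * (y - 1)
      left_inv := by
        intro x
        simp only [add_sub_cancel_right]
        exact Units.inv_mul_cancel_left hcu.unit x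
      right_inv := by
        intro y
        simp only [Units.mul_inv_cancel_left]
        ring }
  have e4 : (∏ x : ZMod q, (if IsUnit ((c : ZMod q) * x + 1) then (c : ZMod q) * x + 1 else 1))
      = ∏ x : ZMod q, (if IsUnit (e x) then e x else 1) := by
    refine Finset.prod_congr rfl fun x _ => ?_
    have hex : e x = (c : ZMod q) * x + 1 := by
      show (hcu.unit : ZMod q) * x + 1 = _
      rw [hu]
    rw [hex]
  rw [e4, Equiv.prod_comp e (fun y => if IsUnit y then y else 1)]
  rfl

lemma Uc_mod {p c : ℕ} (hp : p.Prime) (hc : c ∣ p - 1) {r : ℕ} (hr : 1 ≤ r) (n : ℕ)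
    [NeZero (p ^ r)] :
    ((Uc p c (n * p ^ r) : ℕ) : ZMod (p ^ r)) = (Qe (p ^ r)) ^ n := by
  have hp0 := hp.pos
  have hpq : p ∣ p ^ r := dvd_pow_self p (by omega)
  have hcop : Nat.Coprime c (p ^ r) := Nat.Coprime.pow_right r (c_coprime_p hp hc)
  have hunit : ∀ m : ℕ, IsUnit ((m : ZMod (p ^ r))) ↔ ¬ p ∣ m := by
    intro m
    rw [ZMod.isUnit_iff_coprime, Nat.coprime_pow_right_iff (by omega)]
    constructor
    · intro h hd
      exact (Nat.Prime.coprime_iff_not_dvd hp).mp h.symm hd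
    · intro h
      exact ((Nat.Prime.coprime_iff_not_dvd hp).mpr h).symm
  induction n with
  | zero => simp [Uc]
  | succ n ih =>
    have hsplit : (n + 1) * p ^ r = n * p ^ r + p ^ r := by ring
    rw [Uc, hsplit, Finset.prod_range_add, Nat.cast_mul, ← Uc, ih,
      Qe_block hp hc hcop hunit ⟨n, mul_comm n (p ^ r)⟩ (hpq.trans ⟨n, mul_comm n (p ^ r)⟩)]
    ring

theorem stmt_9 (p : ℕ) (hp : p.Prime) (hp3 : p % 3 = 1)
    (n r : ℕ) (hn : 1 ≤ n) (hr : 1 ≤ r) :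
    ∃ m : ℤ, f3 (n * p ^ r) - f3 (n * p ^ (r - 1)) = (m : ℚ) * (p : ℚ) ^ r := by
  have hp2 : p % 2 = 1 := by
    rcases hp.eq_two_or_odd with h | h
    · subst h; norm_num at hp3
    · exact h
  have hp6 : p % 6 = 1 := by omega
  have h6dvd : 6 ∣ p - 1 := by omega
  have h3dvd : 3 ∣ p - 1 := by omega
  have h1dvd : 1 ∣ p - 1 := one_dvd _
  have hppos := hp.pos
  haveI : NeZero (p ^ r) := ⟨pow_ne_zero r hppos.ne'⟩
  set B := n * p ^ (r - 1) with hB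
  have hBp : B * p = n * p ^ r := by
    rw [hB, mul_assoc, ← pow_succ]
    congr 2
    omega
  have hs6 := Pc_split hp h6dvd B
  have hs3 := Pc_split hp h3dvd B
  have hs1 := Pc_split hp h1dvd B
  have hfact : (B * p).factorial = p ^ B * B.factorial * Uc p 1 (B * p) := by
    rw [← Pc_one, hs1, Pc_one]
  set U6 := Uc p 6 (B * p) with hU6
  set U3 := Uc p 3 (B * p) with hU3
  set Uf := Uc p 1 (B * p) with hUf
  set FA := (6 ^ (B * p) * Pc 6 (B * p) * Pc 3 (B * p)) / ((B * p).factorial ^ 2) with hFA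
  set FB := (6 ^ B * Pc 6 B * Pc 3 B) / (B.factorial ^ 2) with hFB
  have hdA := f3_int_s9 (B * p)
  have hdB := f3_int_s9 B
  have hFAq : f3 (B * p) = (FA : ℚ) := by
    rw [f3_eq, hFA, Nat.cast_div hdA (by positivity)]
    push_cast
    ring
  have hFBq : f3 B = (FB : ℚ) := by
    rw [f3_eq, hFB, Nat.cast_div hdB (by positivity)]
    push_cast
    ring
  have hpow6 : (6 : ℕ) ^ (B * p) = 6 ^ (B * (p - 1)) * 6 ^ B := by
    rw [← pow_add]
    congr 1
    obtain ⟨t, rfl⟩ : ∃ t, p = t + 1 := ⟨p - 1, by omega⟩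
    simp [Nat.add_sub_cancel]
    ring
  have G : FA * Uf ^ 2 = FB * (6 ^ (B * (p - 1)) * U6 * U3) := by
    apply Nat.eq_of_mul_eq_mul_right (show 0 < (p ^ B * B.factorial) ^ 2 by positivity)
    have hA : FA * ((B * p).factorial) ^ 2 = 6 ^ (B * p) * Pc 6 (B * p) * Pc 3 (B * p) :=
      Nat.div_mul_cancel hdA
    have hB2 : FB * (B.factorial) ^ 2 = 6 ^ B * Pc 6 B * Pc 3 B :=
      Nat.div_mul_cancel hdB
    calc FA * Uf ^ 2 * (p ^ B * B.factorial) ^ 2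
        = FA * ((B * p).factorial) ^ 2 := by rw [hfact]; ring
      _ = 6 ^ (B * p) * Pc 6 (B * p) * Pc 3 (B * p) := hA
      _ = 6 ^ (B * (p - 1)) * (6 ^ B * Pc 6 B * Pc 3 B) * U6 * U3 * (p ^ B) ^ 2 := by
          rw [hs6, hs3, hpow6]; ring
      _ = FB * (6 ^ (B * (p - 1)) * U6 * U3) * (p ^ B * B.factorial) ^ 2 := by
          rw [← hB2]; ring
  -- the congruence: p^r divides E
  have htotB : B * (p - 1) = n * Nat.totient (p ^ r) := by
    rw [Nat.totient_prime_pow hp (by omega), hB]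
    ring
  have h6cop : Nat.Coprime 6 (p ^ r) := Nat.Coprime.pow_right r (c_coprime_p hp h6dvd)
  have h6tot : ((6 : ZMod (p ^ r))) ^ (B * (p - 1)) = 1 := by
    have hmod : (6 : ℕ) ^ (B * (p - 1)) ≡ 1 [MOD p ^ r] := by
      rw [htotB, mul_comm n, pow_mul]
      calc (6 ^ Nat.totient (p ^ r)) ^ n ≡ 1 ^ n [MOD p ^ r] :=
            Nat.ModEq.pow n (Nat.ModEq.pow_totient h6cop)
        _ = 1 := one_pow n
    have hcast := (ZMod.natCast_eq_natCast_iff _ _ _).mpr hmod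
    push_cast at hcast
    exact hcast
  have hU6m : ((U6 : ℕ) : ZMod (p ^ r)) = (Qe (p ^ r)) ^ n := by
    rw [hU6, hBp]
    exact Uc_mod hp h6dvd hr n
  have hU3m : ((U3 : ℕ) : ZMod (p ^ r)) = (Qe (p ^ r)) ^ n := by
    rw [hU3, hBp]
    exact Uc_mod hp h3dvd hr n
  have hUfm : ((Uf : ℕ) : ZMod (p ^ r)) = (Qe (p ^ r)) ^ n := by
    rw [hUf, hBp]
    exact Uc_mod hp h1dvd hr n
  have hqE : ((p ^ r : ℕ) : ℤ) ∣
      (6 : ℤ) ^ (B * (p - 1)) * ((U6 : ℕ) : ℤ) * ((U3 : ℕ) : ℤ) - ((Uf : ℕ) : ℤ) ^ 2 := by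
    rw [← ZMod.intCast_zmod_eq_zero_iff_dvd]
    push_cast
    rw [hU6m, hU3m, hUfm, h6tot]
    ring
  have hD : (((FA : ℤ) - FB) * ((Uf : ℕ) : ℤ) ^ 2)
      = (FB : ℤ) * ((6 : ℤ) ^ (B * (p - 1)) * ((U6 : ℕ) : ℤ) * ((U3 : ℕ) : ℤ)
          - ((Uf : ℕ) : ℤ) ^ 2) := by
    have hG := congrArg (Nat.cast : ℕ → ℤ) G
    push_cast at hG
    linear_combination hG
  have hdvd2 : ((p ^ r : ℕ) : ℤ) ∣ ((FA : ℤ) - FB) * ((Uf : ℕ) : ℤ) ^ 2 := by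
    rw [hD]
    exact Dvd.dvd.mul_left hqE _
  have hcopUf : Nat.Coprime (p ^ r) (Uf ^ 2) :=
    Nat.Coprime.pow r 2 (Uc_coprime hp h1dvd (B * p))
  have hdvdD : ((p ^ r : ℕ) : ℤ) ∣ ((FA : ℤ) - FB) := by
    have h1 : (p ^ r) ∣ (((FA : ℤ) - FB) * ((Uf : ℕ) : ℤ) ^ 2).natAbs := by
      have := Int.natAbs_dvd_natAbs.mpr hdvd2
      rwa [Int.natAbs_natCast] at this
    rw [Int.natAbs_mul, Int.natAbs_pow, Int.natAbs_natCast] at h1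
    have h2 : (p ^ r) ∣ ((FA : ℤ) - FB).natAbs := hcopUf.dvd_of_dvd_mul_right h1
    exact Int.dvd_natAbs.mp (Int.natCast_dvd_natCast.mpr h2)
  obtain ⟨m, hm⟩ := hdvdD
  refine ⟨m, ?_⟩
  rw [← hBp, hFAq, hFBq]
  have hcast := congrArg (Int.cast : ℤ → ℚ) hm
  push_cast at hcast
  linear_combination hcast
end

section
/- For each prime p with (-1/p) = 1 (i.e., p ≡ 1 mod 4) and integers n, r ≥ 1, the numbers f_{2,n} = (8^n (1/4)_n / n!)² satisfy f_{2, n p^r} ≡ f_{2, n p^{r-1}} (mod p^r). -/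
open Finset

namespace Stmt10Aux



def bb (M : ℕ) : ℕ := ∏ j ∈ range M, (4 * j + 1)

lemma bb_pos (M : ℕ) : 0 < bb M := Finset.prod_pos (fun j _ => by omega)

lemma poch_eval (M : ℕ) :
    (ascPochhammer ℚ M).eval (1/4) = (bb M : ℚ) / 4 ^ M := by
  induction M with
  | zero => simp [bb]
  | succ M ih =>
    rw [ascPochhammer_succ_right, Polynomial.eval_mul, ih]
    have : bb (M+1) = bb M * (4 * M + 1) := Finset.prod_range_succ _ _
    rw [this]
    push_cast
    simp only [Polynomial.eval_add, Polynomial.eval_X, Polynomial.eval_natCast]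
    field_simp
    ring


lemma count_ge (M m c : ℕ) (hm : 0 < m) (hc : c < m)
    (P : ℕ → Prop) [DecidablePred P] (hP : ∀ k, P (k * m + c)) :
    M / m ≤ #{j ∈ range M | P j} := by
  have hinj : Function.Injective (fun k => k * m + c) := by
    intro x y h
    simp only at h
    exact Nat.eq_of_mul_eq_mul_right hm (by omega)
  have hsub : (range (M / m)).image (fun k => k * m + c) ⊆ {j ∈ range M | P j} := by
    intro x hx
    simp only [mem_image, mem_range] at hx
    obtain ⟨k, hk, rfl⟩ := hx
    refine mem_filter.mpr ⟨mem_range.mpr ?_, hP k⟩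
    have h1 : (k + 1) * m ≤ (M / m) * m := Nat.mul_le_mul_right _ (by omega)
    have h2 : (M / m) * m ≤ M := Nat.div_mul_le_self M m
    have h0 : (k + 1) * m = k * m + m := by ring
    omega
  calc M / m = ((range (M / m)).image (fun k => k * m + c)).card := by
        rw [Finset.card_image_of_injective _ hinj, card_range]
    _ ≤ _ := Finset.card_le_card hsub

lemma fact_factorization {q : ℕ} (hq : q.Prime) (M B : ℕ) (hB : M < B) :
    (M.factorial).factorization q = ∑ i ∈ Ico 1 B, M / q ^ i := by
  have hlog : Nat.log q M < B := lt_of_le_of_lt (Nat.log_le_self q M) hB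
  have h1 : q ^ ((M.factorial).factorization q) ∣ M.factorial := Nat.ordProj_dvd _ _
  have h2 := (Nat.Prime.pow_dvd_factorial_iff hq hlog).mp h1
  have h3 : q ^ (∑ i ∈ Ico 1 B, M / q ^ i) ∣ M.factorial :=
    (Nat.Prime.pow_dvd_factorial_iff hq hlog).mpr le_rfl
  have h4 := (Nat.Prime.pow_dvd_iff_le_factorization hq (Nat.factorial_ne_zero M)).mp h3
  omega





-- residue c mod m with m ∣ 4c+1
lemma exists_res (m : ℕ) (hm : 1 < m) (hcop : Nat.Coprime 4 m) :
    ∃ c < m, m ∣ 4 * c + 1 := by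
  haveI : NeZero m := ⟨by omega⟩
  set x : ZMod m := -((4 : ZMod m)⁻¹) with hx
  refine ⟨x.val, ZMod.val_lt x, ?_⟩
  rw [← ZMod.natCast_eq_zero_iff]
  push_cast
  rw [ZMod.natCast_rightInverse x, hx]
  have h4 : (4 : ZMod m) * (4 : ZMod m)⁻¹ = 1 := by
    have := ZMod.coe_mul_inv_eq_one (n := m) 4 hcop
    push_cast at this
    exact this
  ring_nf
  rw [mul_comm] at h4
  rw [h4]
  ring

lemma fact_dvd (M : ℕ) : M.factorial ∣ 2 ^ M * bb M := by
  have hbb : bb M ≠ 0 := by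
    have : 0 < bb M := Finset.prod_pos (fun j _ => by omega)
    omega
  have hne : 2 ^ M * bb M ≠ 0 := by positivity
  rw [← Nat.factorization_le_iff_dvd (Nat.factorial_ne_zero M) hne]
  intro q
  by_cases hq : q.Prime
  swap
  · simp [Nat.factorization_eq_zero_of_not_prime _ hq]
  have hfac := fact_factorization hq M (4 * M + 2) (by omega)
  have hmul : (2 ^ M * bb M).factorization q
      = M * ((2:ℕ).factorization q) + (bb M).factorization q := by
    rw [Nat.factorization_mul (by positivity) hbb, Nat.factorization_pow]
    simp
  rcases eq_or_ne q 2 with rfl | hq2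
  · have hle : ∑ i ∈ Ico 1 (4 * M + 2), M / 2 ^ i ≤ M / (2 - 1) :=
      Nat.geom_sum_Ico_le le_rfl M (4 * M + 2)
    simp only [hfac, hmul, Nat.Prime.factorization_self hq]
    omega
  · have hodd : ¬ q ∣ 4 := by
      intro h
      rw [show (4:ℕ) = 2 ^ 2 by norm_num] at h
      have h2 : q ∣ 2 := hq.dvd_of_dvd_pow h
      exact hq2 ((Nat.prime_dvd_prime_iff_eq hq Nat.prime_two).mp h2)
    -- bb M factorization
    have hbbfac : (bb M).factorization q = ∑ j ∈ range M, (4 * j + 1).factorization q := by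
      rw [bb, Nat.factorization_prod (fun j _ => by omega)]
      exact Finset.sum_apply' q
    have hterm : ∀ j ∈ range M, (4 * j + 1).factorization q
        = #{i ∈ Ico 1 (4 * M + 2) | q ^ i ∣ 4 * j + 1} := by
      intro j hj
      rw [Nat.factorization_eq_card_pow_dvd _ hq]
      congr 1
      ext i
      simp only [mem_filter, mem_Ico, mem_range] at *
      constructor
      · rintro ⟨⟨h1, h2⟩, h3⟩
        exact ⟨⟨h1, by omega⟩, h3⟩
      · rintro ⟨⟨h1, h2⟩, h3⟩
        have hlt : i < q ^ i := Nat.lt_pow_self hq.one_lt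
        have hle : q ^ i ≤ 4 * j + 1 := Nat.le_of_dvd (by omega) h3
        exact ⟨⟨h1, by omega⟩, h3⟩
    have hswap : ∑ j ∈ range M, (4 * j + 1).factorization q
        = ∑ i ∈ Ico 1 (4 * M + 2), #{j ∈ range M | q ^ i ∣ 4 * j + 1} := by
      rw [Finset.sum_congr rfl hterm]
      simp only [Finset.card_filter]
      exact Finset.sum_comm
    have hge : ∀ i ∈ Ico 1 (4 * M + 2), M / q ^ i ≤ #{j ∈ range M | q ^ i ∣ 4 * j + 1} := by
      intro i hi
      simp only [mem_Ico] at hi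
      have hm1 : 1 < q ^ i := by
        calc 1 < q := hq.one_lt
        _ ≤ q ^ i := Nat.le_self_pow (by omega) q
      have hcop : Nat.Coprime 4 (q ^ i) :=
        Nat.Coprime.pow_right i (((hq.coprime_iff_not_dvd).mpr hodd).symm)
      obtain ⟨c, hc, hdvd⟩ := exists_res (q ^ i) hm1 hcop
      apply count_ge M (q ^ i) c (by omega) hc
      intro k
      have : 4 * (k * q ^ i + c) + 1 = (4 * k) * q ^ i + (4 * c + 1) := by ring
      rw [this]
      exact Nat.dvd_add (Dvd.intro_left _ rfl) hdvd
    calc (M.factorial).factorization q = ∑ i ∈ Ico 1 (4 * M + 2), M / q ^ i := hfac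
      _ ≤ ∑ j ∈ range M, (4 * j + 1).factorization q := by
          rw [hswap]; exact Finset.sum_le_sum hge
      _ = (bb M).factorization q := hbbfac.symm
      _ ≤ _ := by omega


section Wilson
variable {p r : ℕ}

lemma sq_eq_one (hp : p.Prime) (hp2 : p ≠ 2) (hr : 1 ≤ r)
    (x : ZMod (p ^ r)) (hx : x ^ 2 = 1) : x = 1 ∨ x = -1 := by
  haveI : NeZero (p ^ r) := ⟨pow_ne_zero r hp.pos.ne'⟩
  set y : ℤ := (x.val : ℤ) with hy
  have hcast : ((y : ℤ) : ZMod (p ^ r)) = x := by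
    rw [hy]
    push_cast
    exact ZMod.natCast_rightInverse x
  have hdvd : ((p : ℤ)) ^ r ∣ (y - 1) * (y + 1) := by
    have : (((y - 1) * (y + 1) : ℤ) : ZMod (p ^ r)) = 0 := by
      push_cast [hcast]
      linear_combination hx
    rw [ZMod.intCast_zmod_eq_zero_iff_dvd] at this
    push_cast at this
    exact this
  have hnotboth : ¬ ((p : ℤ) ∣ y - 1 ∧ (p : ℤ) ∣ y + 1) := by
    rintro ⟨h1, h2⟩
    have : (p : ℤ) ∣ 2 := by
      have := Int.dvd_sub h2 h1
      simpa using this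
    have hple : (p : ℤ) ≤ 2 := Int.le_of_dvd (by norm_num) this
    have := hp.two_le
    omega
  have hpprime : Prime (p : ℤ) := Nat.prime_iff_prime_int.mp hp
  by_cases h1 : (p : ℤ) ∣ y + 1
  · -- then ¬ p ∣ y - 1, so p^r ∣ y + 1, x = -1
    have h2 : ¬ (p : ℤ) ∣ y - 1 := fun h => hnotboth ⟨h, h1⟩
    have hcop : IsCoprime ((p : ℤ) ^ r) (y - 1) :=
      (IsCoprime.pow_left ((hpprime.coprime_iff_not_dvd).mpr h2))
    have : ((p : ℤ)) ^ r ∣ y + 1 := hcop.dvd_of_dvd_mul_left hdvd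
    right
    have : (((y + 1 : ℤ)) : ZMod (p ^ r)) = 0 := by
      rw [ZMod.intCast_zmod_eq_zero_iff_dvd]
      push_cast
      exact this
    push_cast [hcast] at this
    linear_combination this
  · have hcop : IsCoprime ((p : ℤ) ^ r) (y + 1) :=
      (IsCoprime.pow_left ((hpprime.coprime_iff_not_dvd).mpr h1))
    have : ((p : ℤ)) ^ r ∣ y - 1 := hcop.dvd_of_dvd_mul_right hdvd
    left
    have : (((y - 1 : ℤ)) : ZMod (p ^ r)) = 0 := by
      rw [ZMod.intCast_zmod_eq_zero_iff_dvd]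
      push_cast
      exact this
    push_cast [hcast] at this
    linear_combination this

lemma units_prod_neg_one (hp : p.Prime) (hp2 : p ≠ 2) (hr : 1 ≤ r) :
    haveI : NeZero (p ^ r) := ⟨pow_ne_zero r hp.pos.ne'⟩
    ∏ u : (ZMod (p ^ r))ˣ, (u : ZMod (p ^ r)) = -1 := by
  haveI : NeZero (p ^ r) := ⟨pow_ne_zero r hp.pos.ne'⟩
  have hq2 : 2 < p ^ r := by
    have := hp.two_le
    calc 2 < p := by omega
    _ ≤ p ^ r := Nat.le_self_pow (by omega) p
  haveI : Fact (2 < p ^ r) := ⟨hq2⟩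
  have hne : (1 : (ZMod (p ^ r))ˣ) ≠ -1 := by
    intro h
    have h2 : (1 : ZMod (p ^ r)) = -1 := by
      have := congrArg Units.val h
      simpa using this
    exact ZMod.neg_one_ne_one h2.symm
  have hsub : ({1, -1} : Finset (ZMod (p ^ r))ˣ) ⊆ univ := subset_univ _
  have hsdiff := Finset.prod_sdiff (f := fun u : (ZMod (p ^ r))ˣ => (u : ZMod (p ^ r))) hsub
  have hpair : ∏ u ∈ ({1, -1} : Finset (ZMod (p ^ r))ˣ), (u : ZMod (p ^ r)) = -1 := by
    rw [Finset.prod_pair hne]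
    simp
  have hmain : ∏ u ∈ (univ \ {1, -1} : Finset (ZMod (p ^ r))ˣ), (u : ZMod (p ^ r)) = 1 := by
    refine Finset.prod_involution (fun a _ => a⁻¹) (fun a _ => ?_)
      (fun a ha hfa heq => ?_) (fun a ha => ?_) (fun a ha => inv_inv a)
    · rw [← Units.val_mul, mul_inv_cancel, Units.val_one]
    · have hsq : a * a = 1 := by
        nth_rewrite 1 [← heq]
        exact inv_mul_cancel a
      have hsq2 : ((a : ZMod (p ^ r))) ^ 2 = 1 := by
        rw [pow_two, ← Units.val_mul, hsq, Units.val_one]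
      rw [Finset.mem_sdiff] at ha
      rcases sq_eq_one hp hp2 hr _ hsq2 with h | h
      · exact ha.2 (by
          have h1 : a = 1 := by rw [Units.ext_iff]; simpa using h
          simp [h1])
      · exact ha.2 (by
          have h1 : a = -1 := by rw [Units.ext_iff]; simpa using h
          simp [h1])
    · rw [Finset.mem_sdiff] at ha ⊢
      refine ⟨mem_univ _, fun hmem => ha.2 ?_⟩
      simp only [Finset.mem_insert, Finset.mem_singleton] at hmem ⊢
      rcases hmem with h | h
      · left; rw [← inv_inv a, h]; simp
      · right; rw [← inv_inv a, h]; simp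
  calc ∏ u : (ZMod (p ^ r))ˣ, (u : ZMod (p ^ r))
      = (∏ u ∈ (univ \ {1, -1} : Finset (ZMod (p ^ r))ˣ), (u : ZMod (p ^ r)))
        * ∏ u ∈ ({1, -1} : Finset (ZMod (p ^ r))ˣ), (u : ZMod (p ^ r)) := hsdiff.symm
    _ = -1 := by rw [hmain, hpair, one_mul]

end Wilson


lemma filter_isUnit_prod (q : ℕ) [NeZero q] :
    ∏ x ∈ univ.filter (fun x : ZMod q => IsUnit x), x
      = ∏ u : (ZMod q)ˣ, (u : ZMod q) := by
  symm
  refine Finset.prod_nbij (fun u => (u : ZMod q)) ?_ ?_ ?_ ?_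
  · intro u _
    exact mem_filter.mpr ⟨mem_univ _, u.isUnit⟩
  · intro u _ v _ h
    exact Units.ext h
  · intro x hx
    simp only [coe_filter, mem_univ, true_and, Set.mem_setOf_eq] at hx
    exact ⟨hx.unit, by simp, hx.unit_spec⟩
  · intro u _
    rfl

lemma affine_prod (p r a : ℕ) [NeZero (p ^ r)] (hp : p.Prime) (hr : 1 ≤ r)
    (ha : Nat.Coprime a p) :
    ∏ j ∈ (range (p ^ r)).filter (fun j => ¬ p ∣ (a * j + 1)), ((a * j + 1 : ℕ) : ZMod (p ^ r))
      = ∏ x ∈ univ.filter (fun x : ZMod (p ^ r) => IsUnit x), x := by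
  set q := p ^ r with hq
  have hpq : p ∣ q := dvd_pow_self p (by omega)
  have haq : Nat.Coprime a q := Nat.Coprime.pow_right r ha
  have hainv : (a : ZMod q) * (a : ZMod q)⁻¹ = 1 := ZMod.coe_mul_inv_eq_one a haq
  have hcoprime_iff : ∀ m : ℕ, Nat.Coprime m q ↔ ¬ p ∣ m := by
    intro m
    constructor
    · intro h hdvd
      have h1 := Nat.eq_one_of_dvd_one (h ▸ Nat.dvd_gcd hdvd hpq)
      have := hp.two_le
      omega
    · intro h
      exact Nat.Coprime.pow_right r ((hp.coprime_iff_not_dvd.mpr h).symm)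
  have hkey : ∀ x : ZMod q, ((a * (((x - 1) * (a : ZMod q)⁻¹).val) + 1 : ℕ) : ZMod q) = x := by
    intro x
    push_cast
    rw [ZMod.natCast_rightInverse]
    calc (a : ZMod q) * ((x - 1) * (a : ZMod q)⁻¹) + 1
        = (x - 1) * ((a : ZMod q) * (a : ZMod q)⁻¹) + 1 := by ring
      _ = x := by rw [hainv]; ring
  refine Finset.prod_nbij' (i := fun j => ((a * j + 1 : ℕ) : ZMod q))
    (j := fun x => (((x - 1) * (a : ZMod q)⁻¹ : ZMod q)).val) ?_ ?_ ?_ ?_ ?_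
  · intro j hj
    simp only [mem_filter, mem_range] at hj
    refine mem_filter.mpr ⟨mem_univ _, ?_⟩
    rw [ZMod.isUnit_iff_coprime]
    exact (hcoprime_iff _).mpr hj.2
  · intro x hx
    simp only [mem_filter, mem_univ, true_and] at hx
    refine mem_filter.mpr ⟨mem_range.mpr (ZMod.val_lt _), ?_⟩
    intro hdvd
    have hcop : Nat.Coprime (a * (((x - 1) * (a : ZMod q)⁻¹).val) + 1) q := by
      rw [← ZMod.isUnit_iff_coprime, hkey x]
      exact hx
    exact ((hcoprime_iff _).mp hcop) hdvd
  · intro j hj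
    simp only [mem_filter, mem_range] at hj
    push_cast
    have h2 : ((a : ZMod q) * (j : ZMod q) + 1 - 1) * (a : ZMod q)⁻¹ = (j : ZMod q) := by
      have h3 : ((a : ZMod q) * (j : ZMod q) + 1 - 1) * (a : ZMod q)⁻¹
          = (j : ZMod q) * ((a : ZMod q) * (a : ZMod q)⁻¹) := by ring
      rw [h3, hainv, mul_one]
    rw [h2, ZMod.val_cast_of_lt hj.1]
  · intro x _
    exact hkey x
  · intro j _
    rfl





lemma block_prod (p r a n : ℕ) (hp : p.Prime) (hp2 : p ≠ 2) (hr : 1 ≤ r)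
    (ha : Nat.Coprime a p) :
    ((∏ j ∈ (range (n * p ^ r)).filter (fun j => ¬ p ∣ (a * j + 1)), (a * j + 1) : ℕ)
      : ZMod (p ^ r)) = (-1) ^ n := by
  haveI : NeZero (p ^ r) := ⟨pow_ne_zero r hp.pos.ne'⟩
  set q := p ^ r with hq
  have hpq : p ∣ q := dvd_pow_self p (by omega)
  have hcore : ∏ j ∈ range q, (if ¬ p ∣ (a * j + 1) then ((a * j + 1 : ℕ) : ZMod q) else 1)
      = -1 := by
    rw [← Finset.prod_filter, affine_prod p r a hp hr ha, filter_isUnit_prod,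
      units_prod_neg_one hp hp2 hr]
  rw [Nat.cast_prod, Finset.prod_filter]
  induction n with
  | zero => simp
  | succ n ih =>
    have hrw : (n + 1) * q = n * q + q := by ring
    rw [hrw, Finset.prod_range_add, ih, pow_succ]
    congr 1
    rw [← hcore]
    apply Finset.prod_congr rfl
    intro i _
    have hdvd_iff : p ∣ a * (n * q + i) + 1 ↔ p ∣ a * i + 1 := by
      have h1 : a * (n * q + i) + 1 = (a * n) * q + (a * i + 1) := by ring
      rw [h1]
      exact Nat.dvd_add_right (Dvd.dvd.mul_left hpq (a * n))
    have hcast : ((a * (n * q + i) + 1 : ℕ) : ZMod q) = ((a * i + 1 : ℕ) : ZMod q) := by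
      rw [ZMod.natCast_eq_natCast_iff]
      show (a * (n * q + i) + 1) % q = (a * i + 1) % q
      have h1 : a * (n * q + i) + 1 = (a * i + 1) + (a * n) * q := by ring
      rw [h1, Nat.add_mul_mod_self_right]
    simp only [hdvd_iff, hcast]


lemma dvd_char (p a s : ℕ) (hp : p.Prime) (hs : a * s + 1 = p) (hsp : s < p) :
    ∀ j, p ∣ a * j + 1 ↔ j % p = s := by
  have ha0 : 0 < a := by
    rcases Nat.eq_zero_or_pos a with h | h
    · exfalso; subst h; simp at hs; have := hp.one_lt; omega
    · exact h
  have hpa : ¬ p ∣ a := by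
    intro h
    have h1 : p ∣ a * s := h.mul_right s
    have h2 : a * s = p - 1 := by omega
    rw [h2] at h1
    have := hp.one_lt
    have h3 := Nat.eq_zero_of_dvd_of_lt h1 (by omega)
    omega
  intro j
  constructor
  · intro hdvd
    have h1 : ((a * j + 1 : ℕ) : ZMod p) = 0 := (ZMod.natCast_eq_zero_iff _ _).mpr hdvd
    have h2 : ((a * s + 1 : ℕ) : ZMod p) = 0 := by
      rw [hs]; exact ZMod.natCast_self p
    push_cast at h1 h2
    haveI : Fact p.Prime := ⟨hp⟩
    have ha : (a : ZMod p) ≠ 0 := by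
      rw [Ne, ZMod.natCast_eq_zero_iff]
      exact hpa
    have h3 : (a : ZMod p) * (j : ZMod p) = (a : ZMod p) * (s : ZMod p) := by
      linear_combination h1 - h2
    have h4 : (j : ZMod p) = (s : ZMod p) := mul_left_cancel₀ ha h3
    have h5 : j % p = s % p := by
      rwa [ZMod.natCast_eq_natCast_iff'] at h4
    rwa [Nat.mod_eq_of_lt hsp] at h5
  · intro hmod
    have hdiv := Nat.div_add_mod j p
    obtain ⟨d, hd⟩ : ∃ d, j = p * d + s := ⟨j / p, by omega⟩
    rw [hd]
    have h2 : a * (p * d + s) + 1 = p * (a * d) + (a * s + 1) := by ring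
    rw [h2, hs]
    exact Dvd.dvd.add (Dvd.intro _ rfl) dvd_rfl

lemma split_prod (p a s M : ℕ) (hp : p.Prime) (hs : a * s + 1 = p) (hsp : s < p) :
    ∏ j ∈ range (M * p), (a * j + 1) =
      p ^ M * (∏ t ∈ range M, (a * t + 1))
        * ∏ j ∈ (range (M * p)).filter (fun j => ¬ p ∣ a * j + 1), (a * j + 1) := by
  have hchar := dvd_char p a s hp hs hsp
  have hppos := hp.pos
  rw [← Finset.prod_filter_mul_prod_filter_not (range (M * p)) (fun j => p ∣ a * j + 1)]
  congr 1
  have hmain : ∏ j ∈ (range (M * p)).filter (fun j => p ∣ a * j + 1), (a * j + 1)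
      = ∏ t ∈ range M, (p * (a * t + 1)) := by
    refine Finset.prod_nbij' (i := fun j => j / p) (j := fun t => t * p + s) ?_ ?_ ?_ ?_ ?_
    · intro j hj
      simp only [mem_filter, mem_range] at hj
      have hlt : j < p * M := by rw [mul_comm p M]; exact hj.1
      exact mem_range.mpr (Nat.div_lt_of_lt_mul hlt)
    · intro t ht
      simp only [mem_range] at ht
      refine mem_filter.mpr ⟨mem_range.mpr ?_, ?_⟩
      · calc t * p + s < t * p + p := by omega
          _ = (t + 1) * p := by ring
          _ ≤ M * p := Nat.mul_le_mul_right p (by omega)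
      · rw [hchar]
        show (t * p + s) % p = s
        rw [add_comm, Nat.add_mul_mod_self_right]
        exact Nat.mod_eq_of_lt hsp
    · intro j hj
      simp only [mem_filter, mem_range] at hj
      have hm := (hchar j).mp hj.2
      show j / p * p + s = j
      rw [mul_comm, ← hm]
      exact Nat.div_add_mod j p
    · intro t _
      show (t * p + s) / p = t
      have h1 : t * p + s = s + p * t := by ring
      rw [h1, Nat.add_mul_div_left _ _ hppos, Nat.div_eq_of_lt hsp, zero_add]
    · intro j hj
      simp only [mem_filter, mem_range] at hj
      have hm := (hchar j).mp hj.2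
      have hdiv := Nat.div_add_mod j p
      obtain ⟨d, hd⟩ : ∃ d, j = p * d + s := ⟨j / p, by omega⟩
      have hdp : j / p = d := by
        rw [hd, Nat.mul_add_div hppos, Nat.div_eq_of_lt hsp, add_zero]
      show a * j + 1 = p * (a * (j / p) + 1)
      rw [hdp]
      calc a * j + 1 = p * (a * d) + (a * s + 1) := by rw [hd]; ring
        _ = p * (a * d + 1) := by rw [hs]; ring
  rw [hmain, Finset.prod_mul_distrib, Finset.prod_const, card_range]






noncomputable def aa (M : ℕ) : ℕ := (2 ^ M * bb M) / M.factorial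

lemma aa_spec (M : ℕ) : 2 ^ M * bb M = M.factorial * aa M :=
  (Nat.mul_div_cancel' (fact_dvd M)).symm






end Stmt10Aux

open Stmt10Aux

lemma f2_eq (M : ℕ) : f2 M = ((aa M : ℚ)) ^ 2 := by
  have hfac : ((M.factorial : ℕ) : ℚ) ≠ 0 := Nat.cast_ne_zero.mpr (Nat.factorial_ne_zero M)
  have h4 : ((4 : ℚ)) ^ M ≠ 0 := by positivity
  have key : (8 : ℚ) ^ M * ((bb M : ℚ) / 4 ^ M) = ((2 : ℚ)) ^ M * (bb M : ℚ) := by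
    rw [show (8 : ℚ) = 4 * 2 by norm_num, mul_pow]
    field_simp
  have hcast : ((2 : ℚ)) ^ M * (bb M : ℚ) = (M.factorial : ℚ) * (aa M : ℚ) := by
    have := aa_spec M
    exact_mod_cast congrArg (fun x : ℕ => (x : ℚ)) this
  rw [f2, poch_eval M, key, hcast]
  field_simp

theorem stmt_10 (p : ℕ) (hp : p.Prime) (hp4 : p % 4 = 1)
    (n r : ℕ) (hn : 1 ≤ n) (hr : 1 ≤ r) :
    ∃ m : ℤ, f2 (n * p ^ r) - f2 (n * p ^ (r - 1)) = (m : ℚ) * (p : ℚ) ^ r := by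
  have hp2 : p ≠ 2 := by intro h; rw [h] at hp4; norm_num at hp4
  have hp5 : 5 ≤ p := by
    have h2 := hp.two_le
    omega
  haveI : NeZero (p ^ r) := ⟨pow_ne_zero r hp.pos.ne'⟩
  set q := p ^ r with hq
  set N := n * p ^ (r - 1) with hN
  have hNp : n * p ^ r = N * p := by
    rw [hN, mul_assoc, ← pow_succ, Nat.sub_add_cancel hr]
  have hNq : N * p = n * q := by rw [← hNp, hq]
  -- split identities
  have hs4 : 4 * (p / 4) + 1 = p := by omega
  have hs4lt : p / 4 < p := Nat.div_lt_self (by omega) (by omega)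
  have hs1 : 1 * (p - 1) + 1 = p := by omega
  have hs1lt : p - 1 < p := by omega
  set A := ∏ j ∈ (range (N * p)).filter (fun j => ¬ p ∣ 4 * j + 1), (4 * j + 1) with hA
  set B := ∏ j ∈ (range (N * p)).filter (fun j => ¬ p ∣ 1 * j + 1), (1 * j + 1) with hB
  have split4 : bb (N * p) = p ^ N * bb N * A := by
    rw [bb, split_prod p 4 (p / 4) N hp hs4 hs4lt, ← hA, bb]
  have hfact : ∀ M : ℕ, ∏ t ∈ range M, (1 * t + 1) = M.factorial := by
    intro M
    simp only [one_mul]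
    exact Finset.prod_range_add_one_eq_factorial M
  have split1 : (N * p).factorial = p ^ N * N.factorial * B := by
    rw [← hfact (N * p), split_prod p 1 (p - 1) N hp hs1 hs1lt, ← hB, hfact]
  -- key integer identity
  have key : aa (N * p) * B = 2 ^ (N * (p - 1)) * aa N * A := by
    have hpos : 0 < p ^ N * N.factorial := by positivity
    apply Nat.eq_of_mul_eq_mul_right hpos
    have hexp : N * (p - 1) + N = N * p := by
      have h1 : p - 1 + 1 = p := Nat.sub_add_cancel hp.one_le
      calc N * (p - 1) + N = N * ((p - 1) + 1) := by ring
        _ = N * p := by rw [h1]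
    calc aa (N * p) * B * (p ^ N * N.factorial)
        = (p ^ N * N.factorial * B) * aa (N * p) := by ring
      _ = (N * p).factorial * aa (N * p) := by rw [← split1]
      _ = 2 ^ (N * p) * bb (N * p) := (aa_spec _).symm
      _ = 2 ^ (N * p) * (p ^ N * bb N * A) := by rw [split4]
      _ = 2 ^ (N * (p - 1) + N) * (p ^ N * bb N * A) := by rw [hexp]
      _ = 2 ^ (N * (p - 1)) * (2 ^ N * bb N) * A * p ^ N := by rw [pow_add]; ring
      _ = 2 ^ (N * (p - 1)) * (N.factorial * aa N) * A * p ^ N := by rw [aa_spec]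
      _ = 2 ^ (N * (p - 1)) * aa N * A * (p ^ N * N.factorial) := by ring
  -- congruences mod q
  have hAcast : ((A : ℕ) : ZMod q) = (-1) ^ n := by
    rw [hA, hNq, hq]
    exact block_prod p r 4 n hp hp2 hr
      (by
        have : ¬ p ∣ 4 := by
          intro h
          have := Nat.le_of_dvd (by norm_num) h
          omega
        exact ((hp.coprime_iff_not_dvd.mpr this).symm))
  have hBcast : ((B : ℕ) : ZMod q) = (-1) ^ n := by
    rw [hB, hNq, hq]
    exact block_prod p r 1 n hp hp2 hr (Nat.coprime_one_left p)
  have hcop4q : Nat.Coprime 4 q := by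
    have : ¬ p ∣ 4 := by
      intro h
      have := Nat.le_of_dvd (by norm_num) h
      omega
    exact Nat.Coprime.pow_right r ((hp.coprime_iff_not_dvd.mpr this).symm)
  have hEuler : (4 : ZMod q) ^ (N * (p - 1)) = 1 := by
    have htot : Nat.totient q = p ^ (r - 1) * (p - 1) := by
      rw [hq]
      have := Nat.totient_prime_pow hp (show 0 < r by omega)
      convert this using 2
    have hexp : N * (p - 1) = n * Nat.totient q := by
      rw [htot, hN, mul_assoc]
    have hmod : 4 ^ (Nat.totient q) ≡ 1 [MOD q] := Nat.ModEq.pow_totient hcop4q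
    have hmod2 : 4 ^ (N * (p - 1)) ≡ 1 [MOD q] := by
      rw [hexp, mul_comm, pow_mul]
      calc (4 ^ Nat.totient q) ^ n ≡ 1 ^ n [MOD q] := Nat.ModEq.pow n hmod
        _ = 1 := one_pow n
    have := (ZMod.natCast_eq_natCast_iff _ _ _).mpr hmod2
    push_cast at this
    exact this
  -- divisibility
  have hdvd : ((q : ℤ)) ∣ (4 : ℤ) ^ (N * (p - 1)) * (A : ℤ) ^ 2 - (B : ℤ) ^ 2 := by
    rw [← ZMod.intCast_zmod_eq_zero_iff_dvd]
    push_cast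
    rw [hAcast, hBcast, hEuler]
    ring
  have h2sq : ((2 : ℤ) ^ (N * (p - 1))) ^ 2 = (4 : ℤ) ^ (N * (p - 1)) := by
    rw [← pow_mul, mul_comm (N * (p - 1)) 2, pow_mul]
    norm_num
  have hkZ : (aa (N * p) : ℤ) * (B : ℤ) = 2 ^ (N * (p - 1)) * (aa N : ℤ) * (A : ℤ) := by
    exact_mod_cast key
  have hid : ((aa (N * p) : ℤ) ^ 2 - (aa N : ℤ) ^ 2) * (B : ℤ) ^ 2
      = (aa N : ℤ) ^ 2 * ((4 : ℤ) ^ (N * (p - 1)) * (A : ℤ) ^ 2 - (B : ℤ) ^ 2) := by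
    linear_combination ((aa (N * p) : ℤ) * (B : ℤ) + 2 ^ (N * (p - 1)) * (aa N : ℤ) * (A : ℤ)) * hkZ
      + (aa N : ℤ) ^ 2 * (A : ℤ) ^ 2 * h2sq
  have hcopB : Nat.Coprime q (B ^ 2) := by
    have h1 : Nat.Coprime p B := by
      rw [hB]
      apply Nat.Coprime.prod_right
      intro j hj
      exact (hp.coprime_iff_not_dvd.mpr (mem_filter.mp hj).2)
    exact (Nat.Coprime.pow_left r h1).pow_right 2
  have hcopZ : IsCoprime ((q : ℤ)) ((B : ℤ) ^ 2) := by
    have := Nat.isCoprime_iff_coprime.mpr hcopB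
    push_cast at this
    exact this
  have hXdvd : ((q : ℤ)) ∣ (aa (N * p) : ℤ) ^ 2 - (aa N : ℤ) ^ 2 := by
    apply hcopZ.dvd_of_dvd_mul_right
    rw [hid]
    exact Dvd.dvd.mul_left hdvd _
  obtain ⟨m, hm⟩ := hXdvd
  refine ⟨m, ?_⟩
  rw [hNp, f2_eq, f2_eq]
  have : ((aa (N * p) : ℤ) ^ 2 - (aa N : ℤ) ^ 2 : ℤ) = (q : ℤ) * m := hm
  have hQ : ((aa (N * p) : ℚ)) ^ 2 - ((aa N : ℚ)) ^ 2 = ((q : ℤ) * m : ℤ) := by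
    exact_mod_cast congrArg (fun x : ℤ => (x : ℚ)) this
  rw [hQ, hq]
  push_cast
  ring
end

section
/- Define A(n) = Σ_{k=0}^{n} binom(n,k)³ (the Franel numbers). Then for every prime p and all integers n, r ≥ 1, A(n p^r) ≡ A(n p^{r-1}) (mod p^r). -/
/-- The Franel numbers `A(n) = ∑_{k=0}^n C(n,k)³`. -/
def franel (n : ℕ) : ℤ := ∑ k ∈ Finset.range (n + 1), (n.choose k : ℤ) ^ 3

namespace FranelAux

open Finset

abbrev L : Type := AddMonoidAlgebra ℤ (ℤ × ℤ)

/-- the constant-term (coefficient at 0) additive map -/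
noncomputable def CT : L →+ ℤ :=
  (Finsupp.applyAddHom (0 : ℤ × ℤ)).comp AddMonoidAlgebra.coeffAddEquiv.toAddMonoidHom

lemma CT_single (a : ℤ × ℤ) (b : ℤ) :
    CT (AddMonoidAlgebra.single a b) = if a = 0 then b else 0 := by
  classical
  show (Finsupp.single a b) 0 = _
  rw [Finsupp.single_apply]

noncomputable def φ (p : ℕ) : L →+* L :=
  AddMonoidAlgebra.mapDomainRingHom ℤ (DistribMulAction.toAddMonoidHom (ℤ × ℤ) (p : ℤ))

lemma φ_single (p : ℕ) (a : ℤ × ℤ) (c : ℤ) :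
    φ p (AddMonoidAlgebra.single a c) = AddMonoidAlgebra.single ((p : ℤ) • a) c :=
  AddMonoidAlgebra.mapDomain_single

lemma frob_sum (p : ℕ) (hp : p.Prime) (S : Finset (ℤ × ℤ)) (c : ℤ × ℤ → ℤ) :
    (p : L) ∣ (∑ a ∈ S, AddMonoidAlgebra.single a (c a)) ^ p
      - φ p (∑ a ∈ S, AddMonoidAlgebra.single a (c a)) := by
  haveI := Fact.mk hp
  classical
  induction S using Finset.induction_on with
  | empty => simp [zero_pow hp.pos.ne']
  | @insert a S hnotmem ih =>
    rw [Finset.sum_insert hnotmem]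
    obtain ⟨t, ht⟩ : ∃ t : L, (AddMonoidAlgebra.single a (c a)
        + ∑ x ∈ S, AddMonoidAlgebra.single x (c x)) ^ p = AddMonoidAlgebra.single a (c a) ^ p
        + (∑ x ∈ S, AddMonoidAlgebra.single x (c x)) ^ p + (p : L) * t := by
      obtain ⟨t, ht⟩ := exists_add_pow_prime_eq hp (AddMonoidAlgebra.single a (c a))
        (∑ x ∈ S, AddMonoidAlgebra.single x (c x))
      exact ⟨AddMonoidAlgebra.single a (c a) * (∑ x ∈ S, AddMonoidAlgebra.single x (c x)) * t,
        ht.trans (by ring)⟩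
    have hsf : (AddMonoidAlgebra.single a (c a) + ∑ x ∈ S, AddMonoidAlgebra.single x (c x)) ^ p
        - φ p (AddMonoidAlgebra.single a (c a) + ∑ x ∈ S, AddMonoidAlgebra.single x (c x))
        = (p : L) * t
          + ((AddMonoidAlgebra.single a (c a) ^ p - φ p (AddMonoidAlgebra.single a (c a)))
          + ((∑ x ∈ S, AddMonoidAlgebra.single x (c x)) ^ p
              - φ p (∑ x ∈ S, AddMonoidAlgebra.single x (c x)))) := by
      rw [map_add, ht]; ring
    rw [hsf]
    refine dvd_add (Dvd.intro t rfl) (dvd_add ?_ ih)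
    have h1 : (AddMonoidAlgebra.single a (c a) : L) ^ p
        = AddMonoidAlgebra.single ((p : ℤ) • a) (c a ^ p) := by
      rw [AddMonoidAlgebra.single_pow, natCast_zsmul]
    have h3 : (p : ℤ) ∣ c a ^ p - c a := by
      have hz : ((c a ^ p - c a : ℤ) : ZMod p) = 0 := by
        push_cast
        rw [ZMod.pow_card]; ring
      exact (ZMod.intCast_zmod_eq_zero_iff_dvd _ _).1 hz
    obtain ⟨d, hd⟩ := h3
    refine ⟨AddMonoidAlgebra.single ((p : ℤ) • a) d, ?_⟩
    rw [h1, φ_single, ← AddMonoidAlgebra.single_sub, hd,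
      AddMonoidAlgebra.natCast_def, AddMonoidAlgebra.single_mul_single, zero_add]

lemma frob (p : ℕ) (hp : p.Prime) (g : L) : (p : L) ∣ g ^ p - φ p g := by
  have hg : ∑ a ∈ g.coeff.support, AddMonoidAlgebra.single a (g.coeff a) = g :=
    AddMonoidAlgebra.sum_coeff_single g
  have h := frob_sum p hp g.coeff.support (fun a => g.coeff a)
  rwa [hg] at h

lemma coeff_zero_dvd (p r : ℕ) (z : L) (h : (p : L) ^ r ∣ z) : (p : ℤ) ^ r ∣ CT z := by
  obtain ⟨w, hw⟩ := h
  have h1 : (p : L) ^ r = AddMonoidAlgebra.single (0 : ℤ × ℤ) ((p : ℤ) ^ r) := by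
    rw [AddMonoidAlgebra.natCast_def, AddMonoidAlgebra.single_pow, smul_zero]
  refine ⟨CT w, ?_⟩
  rw [hw, h1]
  exact AddMonoidAlgebra.coeff_single_zero_mul w ((p : ℤ) ^ r) 0

lemma φ_coeff_zero (p : ℕ) (hp : 0 < p) (g : L) : CT (φ p g) = CT g := by
  have hinj : Function.Injective (fun a : ℤ × ℤ => (p : ℤ) • a) :=
    smul_right_injective _ (by exact_mod_cast hp.ne')
  have h := Finsupp.mapDomain_apply hinj g.coeff (0 : ℤ × ℤ)
  rw [smul_zero] at h
  exact h

noncomputable def fr : L :=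
  (1 + AddMonoidAlgebra.single ((1, 0) : ℤ × ℤ) 1)
    * (1 + AddMonoidAlgebra.single ((0, 1) : ℤ × ℤ) 1)
    * (1 + AddMonoidAlgebra.single ((-1, -1) : ℤ × ℤ) 1)

lemma one_add_pow (a : ℤ × ℤ) (m : ℕ) :
    (1 + AddMonoidAlgebra.single a (1 : ℤ) : L) ^ m
      = ∑ k ∈ range (m + 1), AddMonoidAlgebra.single (k • a) ((m.choose k : ℤ)) := by
  rw [add_comm, add_pow]
  refine Finset.sum_congr rfl fun k _ => ?_
  rw [one_pow, mul_one, AddMonoidAlgebra.single_pow, one_pow,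
      AddMonoidAlgebra.natCast_def, AddMonoidAlgebra.single_mul_single, add_zero, one_mul]

lemma fr_pow_coeff (m : ℕ) : CT (fr ^ m) = franel m := by
  classical
  have hfr : fr ^ m = (1 + AddMonoidAlgebra.single ((1, 0) : ℤ × ℤ) 1 : L) ^ m
      * (1 + AddMonoidAlgebra.single ((0, 1) : ℤ × ℤ) 1 : L) ^ m
      * (1 + AddMonoidAlgebra.single ((-1, -1) : ℤ × ℤ) 1 : L) ^ m := by
    rw [fr, mul_pow, mul_pow]
  rw [hfr, one_add_pow, one_add_pow, one_add_pow]
  simp only [Finset.sum_mul, Finset.mul_sum, AddMonoidAlgebra.single_mul_single]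
  simp only [map_sum, CT_single]
  have hstep : ∀ i j k : ℕ,
      (if i • ((1 : ℤ), (0 : ℤ)) + j • ((0 : ℤ), (1 : ℤ)) + k • ((-1 : ℤ), (-1 : ℤ)) = 0
        then (m.choose i : ℤ) * (m.choose j) * (m.choose k) else 0)
      = (if i = k then (if j = k then (m.choose i : ℤ) * (m.choose j) * (m.choose k) else 0)
          else 0) := by
    intro i j k
    have hcond : (i • ((1 : ℤ), (0 : ℤ)) + j • ((0 : ℤ), (1 : ℤ)) + k • ((-1 : ℤ), (-1 : ℤ))
        = (0 : ℤ × ℤ)) ↔ (i = k ∧ j = k) := by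
      constructor
      · intro h
        rw [Prod.ext_iff] at h
        simp only [Prod.fst_add, Prod.snd_add, Prod.smul_fst, Prod.smul_snd, Prod.fst_zero,
          Prod.snd_zero, smul_eq_mul, mul_one, mul_zero, mul_neg_one] at h
        simp only [nsmul_eq_mul, mul_one, mul_zero, mul_neg_one] at h
        omega
      · rintro ⟨rfl, rfl⟩
        rw [Prod.ext_iff]
        simp [nsmul_eq_mul]
    rw [if_congr hcond rfl rfl]
    by_cases h1 : i = k <;> by_cases h2 : j = k <;> simp [h1, h2]
  refine Eq.trans (Finset.sum_congr rfl fun k hk => Finset.sum_congr rfl fun j hj =>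
    Finset.sum_congr rfl fun i hi => hstep i j k) ?_
  rw [franel]
  refine Finset.sum_congr rfl fun k hk => ?_
  rw [Finset.sum_congr rfl fun j _ => Finset.sum_ite_eq' (range (m + 1)) k
    (fun i => if j = k then (m.choose i : ℤ) * (m.choose j) * (m.choose k) else 0)]
  simp only [hk, if_true]
  rw [Finset.sum_ite_eq' (range (m + 1)) k
    (fun j => (m.choose k : ℤ) * (m.choose j) * (m.choose k))]
  simp only [hk, if_true]
  ring

end FranelAux

theorem stmt_11 (p : ℕ) (hp : p.Prime) (n r : ℕ) (hn : 1 ≤ n) (hr : 1 ≤ r) :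
    Int.ModEq ((p : ℤ) ^ r) (franel (n * p ^ r)) (franel (n * p ^ (r - 1))) := by
  classical
  open FranelAux in
  have hr1 : r - 1 + 1 = r := Nat.succ_pred_eq_of_pos hr
  have h0 : (p : L) ∣ fr ^ p - φ p fr := frob p hp fr
  have h1 : (p : L) ^ r ∣ (fr ^ p) ^ (p ^ (r - 1)) - (φ p fr) ^ (p ^ (r - 1)) := by
    have := dvd_sub_pow_of_dvd_sub h0 (r - 1)
    rwa [hr1] at this
  have h2 : (p : L) ^ r ∣ fr ^ (n * p ^ r) - φ p (fr ^ (n * p ^ (r - 1))) := by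
    have h3 := h1.trans (sub_dvd_pow_sub_pow _ _ n)
    rw [map_pow]
    have e1 : ((fr ^ p) ^ (p ^ (r - 1))) ^ n = fr ^ (n * p ^ r) := by
      rw [← pow_mul, ← pow_mul]
      congr 1
      conv_rhs => rw [← hr1, pow_succ]
      ring
    have e2 : ((φ p fr) ^ (p ^ (r - 1))) ^ n = (φ p fr) ^ (n * p ^ (r - 1)) := by
      rw [← pow_mul, Nat.mul_comm]
    rwa [e1, e2] at h3
  have h4 : (p : ℤ) ^ r ∣ franel (n * p ^ r) - franel (n * p ^ (r - 1)) := by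
    have h5 := coeff_zero_dvd p r _ h2
    rw [map_sub, φ_coeff_zero p hp.pos, fr_pow_coeff, fr_pow_coeff] at h5
    exact h5
  exact (Int.ModEq.symm ((Int.modEq_iff_dvd).2 h4))
end

section
/- Define A(n) = Σ_{k=0}^{⌊n/3⌋} (-1)^k 3^{n-3k} binom(n,3k) binom(3k,k) binom(2k,k). Then for every prime p and all integers n, r ≥ 1, A(n p^r) ≡ A(n p^{r-1}) (mod p^r). -/
open Polynomial


noncomputable def Phi2 (p : ℕ) (A : Type*) [CommSemiring A] :
    Polynomial (Polynomial A) →+* Polynomial (Polynomial A) :=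
  ((Polynomial.expand (Polynomial A) p).toRingHom).comp
    (Polynomial.mapRingHom (Polynomial.expand A p).toRingHom)

lemma Phi2_apply {p : ℕ} {A : Type*} [CommSemiring A] (h : Polynomial (Polynomial A)) :
    Phi2 p A h = Polynomial.expand _ p (h.map (Polynomial.expand A p).toRingHom) := rfl

lemma Phi2_coeff {p : ℕ} (hp : 0 < p) {A : Type*} [CommSemiring A]
    (h : Polynomial (Polynomial A)) (m : ℕ) :
    ((Phi2 p A h).coeff (p*m)).coeff (p*m) = (h.coeff m).coeff m := by
  rw [Phi2_apply, coeff_expand_mul' hp, coeff_map]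
  exact coeff_expand_mul' hp _ m

lemma frob2 {p : ℕ} [hF : Fact p.Prime] (f : Polynomial (Polynomial (ZMod p))) :
    f ^ p = Phi2 p (ZMod p) f := by
  have h1 : frobenius (ZMod p) p = RingHom.id _ := RingHom.ext (ZMod.pow_card)
  have h2 : frobenius (Polynomial (ZMod p)) p = (Polynomial.expand (ZMod p) p).toRingHom := by
    refine RingHom.ext fun g => ?_
    rw [frobenius_def, ← Polynomial.map_frobenius_expand, h1, Polynomial.map_id]
    rfl
  rw [Phi2_apply, ← Polynomial.map_frobenius_expand (p := p) (f := f), h2, map_expand]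

lemma pi_phi {p : ℕ} (h : Polynomial (Polynomial ℤ)) :
    Polynomial.map (Polynomial.mapRingHom (Int.castRingHom (ZMod p))) (Phi2 p ℤ h)
      = Phi2 p (ZMod p) (Polynomial.map (Polynomial.mapRingHom (Int.castRingHom (ZMod p))) h) := by
  rw [Phi2_apply, Phi2_apply, map_expand, Polynomial.map_map, Polynomial.map_map]
  congr 2
  refine RingHom.ext fun g => ?_
  simp only [RingHom.comp_apply, RingHom.coe_coe, coe_mapRingHom]
  exact map_expand

lemma C_C_dvd_of_pi_zero {p : ℕ} {h : Polynomial (Polynomial ℤ)}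
    (h0 : Polynomial.map (Polynomial.mapRingHom (Int.castRingHom (ZMod p))) h = 0) :
    (C (C ((p:ℤ)))) ∣ h := by
  rw [C_dvd_iff_dvd_coeff]
  intro i
  rw [C_dvd_iff_dvd_coeff]
  intro j
  have h1 : (Polynomial.map (Int.castRingHom (ZMod p)) (h.coeff i)).coeff j = 0 := by
    have := congrArg (fun q => (q.coeff i).coeff j) h0
    simpa [coeff_map] using this
  rw [coeff_map] at h1
  exact_mod_cast (ZMod.intCast_zmod_eq_zero_iff_dvd _ _).mp h1

lemma dvd_coeff_coeff {a : ℤ} {h : Polynomial (Polynomial ℤ)}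
    (hd : (C (C a)) ∣ h) (i j : ℕ) : a ∣ (h.coeff i).coeff j := by
  have h1 := (C_dvd_iff_dvd_coeff _ _).mp hd i
  exact (C_dvd_iff_dvd_coeff _ _).mp h1 j

lemma val_lemma {p r n i : ℕ} (hp : p.Prime) (hr : 1 ≤ r) (hn : 1 ≤ n)
    (hi : 1 ≤ i) (him : i ≤ n * p ^ (r-1)) :
    p ^ r ∣ p ^ i * ((n * p ^ (r-1)).choose i) := by
  have hppos : 0 < p := hp.pos
  set m := n * p ^ (r-1) with hm
  have hm0 : m ≠ 0 := Nat.mul_ne_zero (by omega) (pow_ne_zero _ (by omega))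
  have hc0 : m.choose i ≠ 0 := (Nat.choose_pos him).ne'
  have key : m * (m-1).choose (i-1) = m.choose i * i := by
    have h := Nat.add_one_mul_choose_eq (m-1) (i-1)
    have e1 : m-1+1 = m := by omega
    have e2 : i-1+1 = i := by omega
    rwa [e1, e2] at h
  have hfm : r - 1 ≤ m.factorization p := by
    have hd : p ^ (r-1) ∣ m := Dvd.intro_left n rfl
    exact (Nat.Prime.pow_dvd_iff_le_factorization hp hm0).mp hd
  have hfi : i.factorization p ≤ i - 1 := by
    have h1 : p ^ (i.factorization p) ∣ i := Nat.ordProj_dvd i p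
    have h2 : p ^ (i.factorization p) ≤ i := Nat.le_of_dvd (by omega) h1
    have h3 : i.factorization p < 2 ^ (i.factorization p) := Nat.lt_two_pow_self
    have h4 : (2:ℕ) ^ (i.factorization p) ≤ p ^ (i.factorization p) :=
      Nat.pow_le_pow_left hp.two_le _
    omega
  have hfc : r - 1 ≤ (m.choose i).factorization p + i.factorization p := by
    have e : ((m.choose i) * i).factorization p
        = (m.choose i).factorization p + i.factorization p := by
      rw [Nat.factorization_mul hc0 (by omega)]; rfl
    have e2 : (m * ((m-1).choose (i-1))).factorization p
        = m.factorization p + ((m-1).choose (i-1)).factorization p := by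
      rw [Nat.factorization_mul hm0 (Nat.choose_pos (by omega)).ne']; rfl
    have e3 := congrArg (fun f => f p) (congrArg Nat.factorization key)
    rw [e, e2] at e3
    omega
  refine (Nat.Prime.pow_dvd_iff_le_factorization hp
    (Nat.mul_ne_zero (by positivity) hc0)).mpr ?_
  rw [Nat.factorization_mul (by positivity) hc0, Nat.Prime.factorization_pow hp]
  simp only [Finsupp.coe_add, Pi.add_apply, Finsupp.single_eq_same]
  omega

lemma main_dvd {p r n : ℕ} (hp : p.Prime) (hr : 1 ≤ r) (hn : 1 ≤ n)
    (f : Polynomial (Polynomial ℤ)) :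
    (C (C ((p:ℤ)^r))) ∣ f ^ (p * (n * p^(r-1))) - Phi2 p ℤ (f ^ (n * p^(r-1))) := by
  haveI : Fact p.Prime := ⟨hp⟩
  set m := n * p^(r-1) with hm
  obtain ⟨g, hg⟩ : (C (C ((p:ℤ)))) ∣ f^p - Phi2 p ℤ f := by
    apply C_C_dvd_of_pi_zero
    rw [Polynomial.map_sub, Polynomial.map_pow, pi_phi, ← frob2, sub_self]
  have hpow : f ^ (p*m) = (Phi2 p ℤ f + (f^p - Phi2 p ℤ f)) ^ m := by
    rw [add_sub_cancel, ← pow_mul, mul_comm p m]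
  rw [hpow, add_pow, Finset.sum_range_succ]
  have hlast : (Phi2 p ℤ f)^m * (f^p - Phi2 p ℤ f)^(m-m) * ((m.choose m : ℕ) : Polynomial (Polynomial ℤ))
      = Phi2 p ℤ (f^m) := by
    simp [map_pow]
  rw [hlast, add_sub_cancel_right]
  apply Finset.dvd_sum
  intro j hj
  simp only [Finset.mem_range] at hj
  rw [hg, mul_pow]
  have hnat : p^r ∣ p^(m-j) * m.choose (m-j) := val_lemma hp hr hn (by omega) (by omega)
  rw [Nat.choose_symm (le_of_lt hj)] at hnat
  have hz : (p:ℤ)^r ∣ (p:ℤ)^(m-j) * (m.choose j : ℤ) := by exact_mod_cast hnat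
  have key : (C (C ((p:ℤ)^r)) : Polynomial (Polynomial ℤ)) ∣
      C (C ((p:ℤ)))^(m-j) * ((m.choose j : ℕ) : Polynomial (Polynomial ℤ)) := by
    have h2 := map_dvd ((Polynomial.C : Polynomial ℤ →+* Polynomial (Polynomial ℤ)).comp
      (Polynomial.C : ℤ →+* Polynomial ℤ)) hz
    simpa [map_mul, map_pow, C_eq_natCast, Polynomial.C_eq_natCast] using h2
  have hre : (Phi2 p ℤ) f ^ j * (C (C ((p:ℤ)))^(m-j) * g^(m-j)) * ((m.choose j : ℕ) : Polynomial (Polynomial ℤ))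
      = (C (C ((p:ℤ)))^(m-j) * ((m.choose j : ℕ) : Polynomial (Polynomial ℤ))) * ((Phi2 p ℤ) f ^ j * g^(m-j)) := by
    ring
  rw [hre]
  exact key.mul_right _


noncomputable def G : Polynomial (Polynomial ℤ) :=
  C X * X * (X + C (X + C 3))

noncomputable def B (n : ℕ) : ℤ := (((G - 1) ^ n).coeff n).coeff n

lemma coeffGj (n j : ℕ) (hj : j ≤ n) :
    ((G ^ j).coeff n).coeff n =
      (3:ℤ) ^ (j - (n - j) - (n - j)) * ((j - (n-j)).choose (n-j)) * (j.choose (n - j)) := by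
  have h1 : G ^ j = C (X ^ j) * (X ^ j * (X + C (X + C 3)) ^ j) := by
    rw [G, mul_pow, mul_pow, C_pow]; ring
  have h2 : (G ^ j).coeff n =
      X ^ j * ((X + C 3) ^ (j - (n - j)) * C ((j.choose (n-j) : ℤ))) := by
    rw [h1, coeff_C_mul, coeff_X_pow_mul', if_pos hj, coeff_X_add_C_pow, C_eq_natCast]
  rw [h2, coeff_X_pow_mul', if_pos hj, coeff_mul_C, coeff_X_add_C_pow]


lemma Bsum (n : ℕ) : B n = ∑ j ∈ Finset.range (n+1),
    (-1:ℤ)^(n-j) * (n.choose j) * (((G ^ j).coeff n).coeff n) := by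
  have key : (G - 1) ^ n = ∑ j ∈ Finset.range (n+1),
      G ^ j * C (C ((-1:ℤ)^(n-j) * (n.choose j : ℤ))) := by
    have := add_pow G (-1 : Polynomial (Polynomial ℤ)) n
    rw [← sub_eq_add_neg] at this
    rw [this]
    refine Finset.sum_congr rfl fun j _ => ?_
    have hc : ((-1 : Polynomial (Polynomial ℤ))) = C (C (-1)) := by simp
    rw [hc, ← C_pow, ← C_pow, mul_assoc]
    congr 1
    rw [← C_eq_natCast, ← C_eq_natCast, ← C_mul, ← C_mul]
  rw [B, key, finset_sum_coeff]
  rw [finset_sum_coeff]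
  refine Finset.sum_congr rfl fun j _ => ?_
  rw [coeff_mul_C, coeff_mul_C]
  ring

/-- `A(n) = ∑_{k=0}^{⌊n/3⌋} (-1)^k 3^{n-3k} C(n,3k) C(3k,k) C(2k,k)`. -/
def apery7 (n : ℕ) : ℤ :=
  ∑ k ∈ Finset.range (n / 3 + 1),
    (-1) ^ k * 3 ^ (n - 3 * k) * (n.choose (3 * k) : ℤ) *
      ((3 * k).choose k : ℤ) * ((2 * k).choose k : ℤ)

lemma choose_id (n k : ℕ) (hk : k ≤ n) :
    n.choose (3*k) * ((3*k).choose k * (2*k).choose k) =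
      n.choose k * ((n-k).choose k * ((n-2*k)).choose k) := by
  rcases le_or_gt (3*k) n with h | h
  · have e1 : n.choose (3*k) * (3*k).choose k = n.choose k * (n-k).choose (2*k) := by
      have := Nat.choose_mul (n := n) (k := 3*k) (s := k) (by omega)
      rw [this, show 3*k-k = 2*k by omega]
    have e2 : (n-k).choose (2*k) * (2*k).choose k = (n-k).choose k * (n-2*k).choose k := by
      have := Nat.choose_mul (n := n-k) (k := 2*k) (s := k) (by omega)
      rw [this, show 2*k-k = k by omega, show n-k-k = n-2*k by omega]
    rw [← mul_assoc, e1, mul_assoc, e2]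
  · have h0 : n.choose (3*k) = 0 := Nat.choose_eq_zero_of_lt h
    rcases le_or_gt (2*k) n with h2 | h2
    · have : (n-2*k).choose k = 0 := Nat.choose_eq_zero_of_lt (by omega)
      simp [h0, this]
    · have : (n-k).choose k = 0 := Nat.choose_eq_zero_of_lt (by omega)
      simp [h0, this]

lemma B_eq_apery (n : ℕ) : B n = apery7 n := by
  have hext : apery7 n = ∑ k ∈ Finset.range (n+1),
      (-1:ℤ) ^ k * 3 ^ (n - 3 * k) * (n.choose (3 * k) : ℤ) *
        ((3 * k).choose k : ℤ) * ((2 * k).choose k : ℤ) := by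
    refine Finset.sum_subset (Finset.range_subset_range.2 (by omega)) ?_
    intro k _ hk
    simp only [Finset.mem_range, not_lt] at hk
    have : n.choose (3*k) = 0 := Nat.choose_eq_zero_of_lt (by omega)
    simp [this]
  rw [Bsum, hext, ← Finset.sum_range_reflect]
  refine Finset.sum_congr rfl fun k hk => ?_
  simp only [Finset.mem_range] at hk
  have hk' : k ≤ n := by omega
  rw [show n + 1 - 1 - k = n - k by omega]
  rw [coeffGj n (n - k) (by omega)]
  have h1 : n - (n - k) = k := by omega
  have h2 : n - k - k - k = n - 3*k := by omega
  have h3 : n - k - k = n - 2*k := by omega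
  rw [h1, h2, h3, Nat.choose_symm hk']
  have hz : (n.choose (3*k) : ℤ) * (((3*k).choose k : ℤ) * ((2*k).choose k)) =
      (n.choose k : ℤ) * (((n-k).choose k : ℤ) * ((n-2*k).choose k)) := by
    exact_mod_cast congrArg (Nat.cast : ℕ → ℤ) (choose_id n k hk')
  linear_combination (-((-1:ℤ))^k * 3^(n-3*k)) * hz


lemma B_congr {p r n : ℕ} (hp : p.Prime) (hr : 1 ≤ r) (hn : 1 ≤ n) :
    ((p:ℤ))^r ∣ B (n * p^r) - B (n * p^(r-1)) := by
  set m := n * p^(r-1) with hm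
  have hpm : p * m = n * p^r := by
    have h1 : r - 1 + 1 = r := by omega
    have h2 : p ^ (r-1) * p = p ^ r := by rw [← pow_succ, h1]
    calc p * m = n * (p^(r-1) * p) := by rw [hm]; ring
    _ = n * p ^ r := by rw [h2]
  have h := main_dvd hp hr hn (G - 1)
  have h2 := dvd_coeff_coeff h (p*m) (p*m)
  rw [coeff_sub, coeff_sub] at h2
  rw [Phi2_coeff hp.pos] at h2
  rw [hpm] at h2
  simpa [B, hpm] using h2

theorem stmt_13 (p : ℕ) (hp : p.Prime) (n r : ℕ) (hn : 1 ≤ n) (hr : 1 ≤ r) :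
    Int.ModEq ((p : ℤ) ^ r) (apery7 (n * p ^ r)) (apery7 (n * p ^ (r - 1))) := by
  have h := B_congr hp hr hn
  rw [B_eq_apery, B_eq_apery] at h
  exact (Int.ModEq.symm ((Int.modEq_iff_dvd).mpr h))
end

section
/- Define A(n) = Σ_{k=0}^{⌊n/2⌋} 4^{n-2k} binom(n,2k) binom(2k,k)². Then for every prime p and all integers n, r ≥ 1, A(n p^r) ≡ A(n p^{r-1}) (mod p^r). -/
open AddMonoidAlgebra Finset

/-- `A(n) = ∑_{k=0}^{⌊n/2⌋} 4^{n-2k} C(n,2k) C(2k,k)²`. -/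
def apery9 (n : ℕ) : ℤ :=
  ∑ k ∈ Finset.range (n / 2 + 1),
    4 ^ (n - 2 * k) * (n.choose (2 * k) : ℤ) * ((2 * k).choose k : ℤ) ^ 2

noncomputable section
abbrev Aring : Type := AddMonoidAlgebra ℤ (ℤ × ℤ)

def vX : Aring := AddMonoidAlgebra.single ((1 : ℤ), (0 : ℤ)) 1
def vXi : Aring := AddMonoidAlgebra.single ((-1 : ℤ), (0 : ℤ)) 1
def vY : Aring := AddMonoidAlgebra.single ((0 : ℤ), (1 : ℤ)) 1
def vYi : Aring := AddMonoidAlgebra.single ((0 : ℤ), (-1 : ℤ)) 1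
def fLam : Aring := 4 + (vX + vXi) * (vY + vYi)

lemma hXpow (j : ℕ) :
    (vX + vXi) ^ j
      = ∑ i ∈ range (j+1), AddMonoidAlgebra.single ((((i:ℤ) - ((j:ℤ)-(i:ℤ))), (0:ℤ)) : ℤ × ℤ) (j.choose i : ℤ) := by
  rw [add_pow]
  refine Finset.sum_congr rfl fun i hi => ?_
  have hij : i ≤ j := by simp at hi; omega
  rw [vX, vXi, single_pow, single_pow, single_mul_single, one_pow, one_pow, one_mul,
    AddMonoidAlgebra.natCast_def, single_mul_single, add_zero, one_mul]
  congr 1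
  simp [Prod.smul_mk, nsmul_eq_mul]
  push_cast [hij]
  ring

lemma hYpow (j : ℕ) :
    (vY + vYi) ^ j
      = ∑ i ∈ range (j+1), AddMonoidAlgebra.single (((0:ℤ), ((i:ℤ) - ((j:ℤ)-(i:ℤ)))) : ℤ × ℤ) (j.choose i : ℤ) := by
  rw [add_pow]
  refine Finset.sum_congr rfl fun i hi => ?_
  have hij : i ≤ j := by simp at hi; omega
  rw [vY, vYi, single_pow, single_pow, single_mul_single, one_pow, one_pow, one_mul,
    AddMonoidAlgebra.natCast_def, single_mul_single, add_zero, one_mul]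
  congr 1
  simp [Prod.smul_mk, nsmul_eq_mul]
  push_cast [hij]
  ring

lemma sum_if_eval (j : ℕ) :
    ∑ i ∈ range (j+1), (if ((i:ℤ) - ((j:ℤ)-(i:ℤ)) = 0) then (j.choose i : ℤ) else 0)
      = if j % 2 = 0 then (j.choose (j/2) : ℤ) else 0 := by
  by_cases hj : j % 2 = 0
  · rw [if_pos hj]
    rw [Finset.sum_eq_single_of_mem (j/2) (by simp; omega)]
    · rw [if_pos (by push_cast; omega)]
    · intro i hi hne
      rw [if_neg]
      simp at hi
      push_cast
      omega
  · rw [if_neg hj]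
    apply Finset.sum_eq_zero
    intro i hi
    simp at hi
    rw [if_neg]
    push_cast
    omega

lemma prod_pow_eval (j : ℕ) :
    (((vX + vXi) * (vY + vYi)) ^ j).coeff (0 : ℤ × ℤ)
      = (if j % 2 = 0 then (j.choose (j/2) : ℤ) else 0) ^ 2 := by
  rw [mul_pow, hXpow, hYpow, Finset.sum_mul_sum]
  have this1 : ∀ i l : ℕ,
      AddMonoidAlgebra.single ((((i:ℤ) - ((j:ℤ)-(i:ℤ))), (0:ℤ)) : ℤ × ℤ) (j.choose i : ℤ)
        * AddMonoidAlgebra.single (((0:ℤ), ((l:ℤ) - ((j:ℤ)-(l:ℤ)))) : ℤ × ℤ) (j.choose l : ℤ)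
      = AddMonoidAlgebra.single (((((i:ℤ) - ((j:ℤ)-(i:ℤ)))), ((l:ℤ) - ((j:ℤ)-(l:ℤ)))) : ℤ × ℤ)
          ((j.choose i : ℤ) * (j.choose l)) := by
    intro i l
    rw [single_mul_single]
    congr 1
    simp [Prod.ext_iff]
  simp only [this1]
  have this2 :
      (∑ i ∈ range (j+1), ∑ l ∈ range (j+1),
        AddMonoidAlgebra.single (((((i:ℤ) - ((j:ℤ)-(i:ℤ)))), ((l:ℤ) - ((j:ℤ)-(l:ℤ)))) : ℤ × ℤ)
          ((j.choose i : ℤ) * (j.choose l))).coeff (0 : ℤ × ℤ)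
      = ∑ i ∈ range (j+1), ∑ l ∈ range (j+1),
          (if ((i:ℤ) - ((j:ℤ)-(i:ℤ)) = 0) then (j.choose i : ℤ) else 0)
            * (if ((l:ℤ) - ((j:ℤ)-(l:ℤ)) = 0) then (j.choose l : ℤ) else 0) := by
    rw [AddMonoidAlgebra.coeff_sum, Finsupp.finset_sum_apply]
    refine Finset.sum_congr rfl fun i _ => ?_
    rw [AddMonoidAlgebra.coeff_sum, Finsupp.finset_sum_apply]
    refine Finset.sum_congr rfl fun l _ => ?_
    rw [AddMonoidAlgebra.coeff_single, Finsupp.single_apply]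
    by_cases h1 : (i:ℤ) - ((j:ℤ)-(i:ℤ)) = 0 <;> by_cases h2 : (l:ℤ) - ((j:ℤ)-(l:ℤ)) = 0 <;>
      simp [Prod.ext_iff, h1, h2]
  rw [this2, ← Finset.sum_mul_sum, sum_if_eval, sq]

lemma ct_fLam_pow (m : ℕ) : (fLam ^ m).coeff (0 : ℤ × ℤ) = apery9 m := by
  have h4 : (4 : Aring) = ((4:ℤ) : Aring) := by norm_cast
  rw [fLam, add_comm (4 : Aring), add_pow]
  rw [AddMonoidAlgebra.coeff_sum, Finsupp.finset_sum_apply]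
  have step : ∀ j ∈ range (m+1),
      (((vX + vXi) * (vY + vYi)) ^ j * (4:Aring) ^ (m - j) * (m.choose j : Aring)).coeff (0 : ℤ × ℤ)
        = (if j % 2 = 0 then (j.choose (j/2) : ℤ) else 0) ^ 2 * (4 ^ (m-j) * (m.choose j : ℤ)) := by
    intro j _
    rw [mul_assoc, h4, AddMonoidAlgebra.natCast_def, ← Int.cast_pow,
      AddMonoidAlgebra.intCast_def, single_mul_single, add_zero,
      AddMonoidAlgebra.coeff_mul_single_zero, prod_pow_eval]
    push_cast
    ring
  rw [Finset.sum_congr rfl step]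
  -- now reindex
  have step2 : ∀ j ∈ range (m+1),
      (if j % 2 = 0 then (j.choose (j/2) : ℤ) else 0) ^ 2 * (4 ^ (m-j) * (m.choose j : ℤ))
        = (if j % 2 = 0 then (j.choose (j/2) : ℤ) ^ 2 * (4 ^ (m-j) * (m.choose j : ℤ)) else 0) := by
    intro j _
    split_ifs <;> simp
  rw [Finset.sum_congr rfl step2]
  rw [← Finset.sum_filter]
  rw [apery9]
  refine (Finset.sum_nbij' (fun k => 2 * k) (fun j => j / 2) ?_ ?_ ?_ ?_ ?_).symm
  · intro k hk; simp at hk ⊢; omega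
  · intro j hj; simp at hj ⊢; omega
  · intro k hk; show 2 * k / 2 = k; omega
  · intro j hj; simp at hj; show 2 * (j / 2) = j; omega
  · intro k hk
    have e1 : 2 * k % 2 = 0 := by omega
    have e2 : 2 * k / 2 = k := by omega
    simp only [e1, e2, eq_self_iff_true, if_true]
    ring


def scaleHom (p : ℕ) : (ℤ × ℤ) →+ (ℤ × ℤ) :=
  AddMonoidHom.mk' (fun g => p • g) (fun a b => smul_add p a b)

def Phi (p : ℕ) : Aring →+* Aring := AddMonoidAlgebra.mapDomainRingHom ℤ (scaleHom p)

lemma scaleHom_inj {p : ℕ} (hp : p ≠ 0) : Function.Injective (scaleHom p) := by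
  intro a b h
  have h1 : p • a = p • b := h
  have hp' : ((p:ℤ)) ≠ 0 := by exact_mod_cast hp
  rw [Prod.ext_iff] at h1 ⊢
  constructor
  · have := h1.1
    simp only [Prod.smul_fst, nsmul_eq_mul] at this
    exact mul_left_cancel₀ hp' this
  · have := h1.2
    simp only [Prod.smul_snd, nsmul_eq_mul] at this
    exact mul_left_cancel₀ hp' this

lemma Phi_apply_zero {p : ℕ} (hp : p ≠ 0) (u : Aring) : (Phi p u).coeff (0 : ℤ × ℤ) = u.coeff 0 := by
  have h0 : (0 : ℤ × ℤ) = scaleHom p 0 := (map_zero _).symm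
  show (Finsupp.mapDomain (scaleHom p) u.coeff) 0 = u.coeff 0
  conv_lhs => rw [h0]
  exact Finsupp.mapDomain_apply (scaleHom_inj hp) u.coeff 0

lemma Phi_single (p : ℕ) (a : ℤ × ℤ) (c : ℤ) :
    Phi p (AddMonoidAlgebra.single a c) = AddMonoidAlgebra.single (p • a) c := by
  show AddMonoidAlgebra.mapDomain (scaleHom p) (AddMonoidAlgebra.single a c) = _
  rw [AddMonoidAlgebra.mapDomain_single]
  rfl

lemma frob {p : ℕ} (hp : p.Prime) : (p : Aring) ∣ fLam ^ p - Phi p fLam := by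
  haveI := Fact.mk hp
  -- X part
  have hvX : (vX + vXi) ^ p - (Phi p vX + Phi p vXi) ∈ {z : Aring | (p:Aring) ∣ z} := by
    obtain ⟨c, hc⟩ := exists_add_pow_prime_eq hp vX vXi
    have e1 : vX ^ p = Phi p vX := by
      rw [vX, single_pow, one_pow, Phi_single]
    have e2 : vXi ^ p = Phi p vXi := by
      rw [vXi, single_pow, one_pow, Phi_single]
    refine ⟨vX * vXi * c, ?_⟩
    rw [hc, e1, e2]; ring
  have hvY : (vY + vYi) ^ p - (Phi p vY + Phi p vYi) ∈ {z : Aring | (p:Aring) ∣ z} := by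
    obtain ⟨c, hc⟩ := exists_add_pow_prime_eq hp vY vYi
    have e1 : vY ^ p = Phi p vY := by
      rw [vY, single_pow, one_pow, Phi_single]
    have e2 : vYi ^ p = Phi p vYi := by
      rw [vYi, single_pow, one_pow, Phi_single]
    refine ⟨vY * vYi * c, ?_⟩
    rw [hc, e1, e2]; ring
  have h4 : (p : Aring) ∣ (4:Aring) ^ p - 4 := by
    have hz : (p:ℤ) ∣ (4:ℤ) ^ p - 4 := by
      have : (((4:ℤ) ^ p - 4 : ℤ) : ZMod p) = 0 := by
        push_cast
        rw [ZMod.pow_card]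
        ring
      exact_mod_cast (ZMod.intCast_zmod_eq_zero_iff_dvd _ _).mp this
    obtain ⟨c, hc⟩ := hz
    refine ⟨((c : ℤ) : Aring), ?_⟩
    have := congrArg (fun z : ℤ => (z : Aring)) hc
    push_cast at this
    convert this using 2 <;> norm_num
  obtain ⟨c0, hc0⟩ : ∃ c0 : Aring, ((vX + vXi) * (vY + vYi) + 4) ^ p
      = ((vX + vXi) * (vY + vYi)) ^ p + (4:Aring) ^ p + p * c0 := by
    obtain ⟨c, hc⟩ := exists_add_pow_prime_eq hp ((vX + vXi) * (vY + vYi)) (4:Aring)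
    exact ⟨(vX + vXi) * (vY + vYi) * 4 * c, by rw [hc]; ring⟩
  have hf : fLam ^ p = ((vX + vXi) * (vY + vYi)) ^ p + (4:Aring) ^ p + p * c0 := by
    rw [fLam, add_comm]; exact hc0
  have hPhi : Phi p fLam = 4 + (Phi p vX + Phi p vXi) * (Phi p vY + Phi p vYi) := by
    rw [fLam]
    rw [map_add, map_mul, map_add, map_add, map_ofNat]
  have key : fLam ^ p - Phi p fLam
      = (↑p * c0) + ((4:Aring) ^ p - 4)
        + (((vX + vXi) ^ p - (Phi p vX + Phi p vXi)) * (vY + vYi) ^ p)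
        + ((Phi p vX + Phi p vXi) * ((vY + vYi) ^ p - (Phi p vY + Phi p vYi))) := by
    rw [hf, hPhi, mul_pow]; ring
  rw [key]
  exact dvd_add (dvd_add (dvd_add ⟨c0, rfl⟩ h4) (hvX.mul_right _)) (hvY.mul_left _)

theorem stmt_14 (p : ℕ) (hp : p.Prime) (n r : ℕ) (hn : 1 ≤ n) (hr : 1 ≤ r) :
    Int.ModEq ((p : ℤ) ^ r) (apery9 (n * p ^ r)) (apery9 (n * p ^ (r - 1))) := by
  have hp0 : p ≠ 0 := hp.pos.ne'
  obtain ⟨e, he⟩ : ((p : Aring)) ^ r ∣ fLam ^ (n * p ^ r) - Phi p (fLam ^ (n * p ^ (r - 1))) := by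
    have h1 := dvd_sub_pow_of_dvd_sub (frob hp) (r - 1)
    have hr' : r - 1 + 1 = r := by omega
    rw [hr'] at h1
    have h2 := dvd_trans h1
      (sub_dvd_pow_sub_pow ((fLam ^ p) ^ p ^ (r - 1)) ((Phi p fLam) ^ p ^ (r - 1)) n)
    have e1 : ((fLam ^ p) ^ p ^ (r - 1)) ^ n = fLam ^ (n * p ^ r) := by
      rw [← pow_mul, ← pow_mul]
      congr 1
      rw [show p ^ r = p * p ^ (r - 1) from by rw [← pow_succ', hr']]
      ring
    have e2 : ((Phi p fLam) ^ p ^ (r - 1)) ^ n = Phi p (fLam ^ (n * p ^ (r - 1))) := by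
      rw [← pow_mul, ← map_pow]
      congr 1
      ring
    rwa [e1, e2] at h2
  have hpr : ((p : Aring)) ^ r = AddMonoidAlgebra.single (0 : ℤ × ℤ) ((p : ℤ) ^ r) := by
    rw [AddMonoidAlgebra.natCast_def, single_pow, smul_zero]
  have hcoeff : apery9 (n * p ^ r) - apery9 (n * p ^ (r - 1)) = (p : ℤ) ^ r * e.coeff 0 := by
    have h0 := congrArg (fun u : Aring => u.coeff (0 : ℤ × ℤ)) he
    rw [AddMonoidAlgebra.coeff_sub, Finsupp.sub_apply (fLam ^ (n * p ^ r)).coeff (Phi p (fLam ^ (n * p ^ (r - 1)))).coeff (0 : ℤ × ℤ)] at h0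
    rw [Phi_apply_zero hp0, ct_fLam_pow, ct_fLam_pow] at h0
    rw [h0, hpr, AddMonoidAlgebra.coeff_single_zero_mul]
  have : (p : ℤ) ^ r ∣ apery9 (n * p ^ r) - apery9 (n * p ^ (r - 1)) := ⟨e.coeff 0, hcoeff⟩
  exact Int.modEq_iff_dvd.mpr (dvd_sub_comm.mp this)
end
end

section
/- Define A(n) = Σ_{k=0}^{n} Σ_{l=0}^{k} (-1)^k 8^{n-k} binom(n,k) binom(k,l)³. Then for every prime p and all integers n, r ≥ 1, A(n p^r) ≡ A(n p^{r-1}) (mod p^r). -/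
set_option linter.unusedSectionVars false
set_option linter.unusedVariables false

/-- `A(n) = ∑_{k=0}^{n} ∑_{l=0}^{k} (-1)^k 8^{n-k} C(n,k) C(k,l)³`. -/
def apery10 (n : ℕ) : ℤ :=
  ∑ k ∈ Finset.range (n + 1), ∑ l ∈ Finset.range (k + 1),
    (-1) ^ k * 8 ^ (n - k) * (n.choose k : ℤ) * (k.choose l : ℤ) ^ 3


open MvPolynomial Finset

variable {σ : Type*} [DecidableEq σ]

lemma smul_finsupp_support (p : ℕ) (hp : p ≠ 0) (d : σ →₀ ℕ) :
    (p • d).support = d.support := by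
  ext i
  simp [Finsupp.mem_support_iff, hp]

lemma expand_monomial_smul (p : ℕ) (hp : p ≠ 0) (d : σ →₀ ℕ) (r : ℤ) :
    expand p (monomial d r : MvPolynomial σ ℤ) = monomial (p • d) r := by
  rw [expand_monomial, monomial_eq, Finsupp.prod, smul_finsupp_support p hp]

lemma smul_finsupp_injective (p : ℕ) (hp : p ≠ 0) (a b : σ →₀ ℕ) (h : p • a = p • b) : a = b := by
  ext i
  have := congrArg (fun f : σ →₀ ℕ => f i) h
  simp only [Finsupp.smul_apply, smul_eq_mul] at this
  exact Nat.eq_of_mul_eq_mul_left (Nat.pos_of_ne_zero hp) this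

lemma coeff_expand_smul (p : ℕ) (hp : p ≠ 0) (f : MvPolynomial σ ℤ) (d : σ →₀ ℕ) :
    coeff (p • d) (expand p f) = coeff d f := by
  conv_lhs => rw [f.as_sum]
  rw [map_sum]
  simp_rw [expand_monomial_smul p hp]
  rw [coeff_sum]
  simp_rw [coeff_monomial]
  have : ∀ v ∈ f.support, (if p • v = p • d then coeff v f else 0) =
      (if v = d then coeff v f else 0) := by
    intro v _
    congr 1
    simp only [eq_iff_iff]
    exact ⟨fun h => smul_finsupp_injective p hp _ _ h, fun h => by rw [h]⟩
  rw [Finset.sum_congr rfl this, Finset.sum_ite_eq' f.support d (fun v => coeff v f)]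
  split
  · rfl
  · next h => exact (MvPolynomial.notMem_support_iff.mp h).symm



lemma frob_decomp (p : ℕ) (hp : p.Prime) (S : MvPolynomial σ ℤ) :
    ∃ R : MvPolynomial σ ℤ, S ^ p = expand p S + C (p : ℤ) * R := by
  haveI : Fact p.Prime := ⟨hp⟩
  have hdvd : C (p : ℤ) ∣ S ^ p - expand p S := by
    rw [MvPolynomial.C_dvd_iff_dvd_coeff]
    intro i
    have hmap : (MvPolynomial.map (Int.castRingHom (ZMod p))) (S ^ p - expand p S) = 0 := by
      rw [map_sub, map_pow, map_expand]
      rw [← MvPolynomial.frobenius_zmod (MvPolynomial.map (Int.castRingHom (ZMod p)) S)]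
      simp [frobenius_def]
    have := congrArg (coeff i) hmap
    rw [MvPolynomial.coeff_map, coeff_zero] at this
    exact_mod_cast (ZMod.intCast_zmod_eq_zero_iff_dvd _ p).mp this
  obtain ⟨R, hR⟩ := hdvd
  exact ⟨R, by linear_combination hR⟩

-- p^r ∣ p^i * choose (p^(r-1)) i  for 1 ≤ i
lemma key_choose_dvd (p : ℕ) (hp : p.Prime) (r i : ℕ) (hr : 1 ≤ r) (hi : 1 ≤ i)
    (hile : i ≤ p ^ (r - 1)) : p ^ r ∣ p ^ i * (p ^ (r - 1)).choose i := by
  set v := multiplicity p i with hv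
  have hfin : FiniteMultiplicity p i :=
    Nat.finiteMultiplicity_iff.mpr ⟨hp.ne_one, hi⟩
  have hvd : p ^ v ∣ i := pow_multiplicity_dvd p i
  have hvlt : v < i := lt_of_lt_of_le (Nat.lt_pow_self (n := v) hp.one_lt) (Nat.le_of_dvd hi hvd)
  have hchoose : p ^ (r - 1 - v) ∣ (p ^ (r - 1)).choose i := by
    apply pow_dvd_of_le_emultiplicity
    rw [Nat.Prime.emultiplicity_choose_prime_pow hp hile (by omega)]
  calc p ^ r ∣ p ^ i * p ^ (r - 1 - v) := by
        rw [← pow_add]; exact pow_dvd_pow p (by omega)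
    _ ∣ p ^ i * (p ^ (r - 1)).choose i := mul_dvd_mul_left _ hchoose

lemma gauss_coeff (p : ℕ) (hp : p.Prime) (S : MvPolynomial σ ℤ) (d : σ →₀ ℕ) (r : ℕ)
    (hr : 1 ≤ r) :
    (p : ℤ) ^ r ∣ coeff ((p ^ r) • d) (S ^ (p ^ r)) -
      coeff ((p ^ (r - 1)) • d) (S ^ (p ^ (r - 1))) := by
  obtain ⟨R, hR⟩ := frob_decomp p hp S
  set m := p ^ (r - 1) with hm
  have hpr : p ^ r = p * m := by rw [hm, ← pow_succ']; congr 1; omega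
  have h1 : S ^ (p ^ r) = ∑ j ∈ Finset.range (m + 1),
      (expand p S) ^ j * (C (p : ℤ) * R) ^ (m - j) * (m.choose j : MvPolynomial σ ℤ) := by
    rw [hpr, pow_mul, hR, add_pow]
  rw [h1, coeff_sum, Finset.sum_range_succ]
  have hlast : coeff ((p ^ r) • d)
      ((expand p S) ^ m * (C (p : ℤ) * R) ^ (m - m) * (m.choose m : MvPolynomial σ ℤ)) =
      coeff (m • d) (S ^ m) := by
    simp only [Nat.sub_self, pow_zero, mul_one, Nat.choose_self, Nat.cast_one]
    rw [← map_pow, hpr, mul_smul, _root_.coeff_expand_smul p hp.pos.ne']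
  rw [hlast, add_sub_cancel_right]
  apply Finset.dvd_sum
  intro j hj
  rw [Finset.mem_range] at hj
  have hterm : (expand p S) ^ j * (C (p : ℤ) * R) ^ (m - j) * (m.choose j : MvPolynomial σ ℤ)
      = C ((p : ℤ) ^ (m - j) * (m.choose j : ℤ)) * ((expand p S) ^ j * R ^ (m - j)) := by
    rw [show ((m.choose j : ℕ) : MvPolynomial σ ℤ) = C ((m.choose j : ℕ) : ℤ) from
      (map_natCast (C : ℤ →+* MvPolynomial σ ℤ) _).symm ▸ by push_cast; ring]
    rw [mul_pow, ← C_pow, C_mul]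
    ring
  rw [hterm, coeff_C_mul]
  apply Dvd.dvd.mul_right
  have hkey := key_choose_dvd p hp r (m - j) hr (by omega) (by omega)
  rw [Nat.choose_symm (le_of_lt hj)] at hkey
  exact_mod_cast Int.natCast_dvd_natCast.mpr hkey



noncomputable def tE (u v w : ℕ) : Fin 3 →₀ ℕ :=
  Finsupp.single 0 u + Finsupp.single 1 v + Finsupp.single 2 w

lemma tE_apply0 (u v w : ℕ) : tE u v w 0 = u := by simp [tE, Finsupp.single_apply]
lemma tE_apply1 (u v w : ℕ) : tE u v w 1 = v := by simp [tE, Finsupp.single_apply]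
lemma tE_apply2 (u v w : ℕ) : tE u v w 2 = w := by simp [tE, Finsupp.single_apply]

lemma tE_add (u v w u' v' w' : ℕ) :
    tE u v w + tE u' v' w' = tE (u + u') (v + v') (w + w') := by
  simp only [tE, Finsupp.single_add]
  abel

lemma tE_smul (m u v w : ℕ) : m • tE u v w = tE (m * u) (m * v) (m * w) := by
  simp only [tE, smul_add, Finsupp.smul_single, smul_eq_mul]

lemma tE_eq_iff (u v w u' v' w' : ℕ) :
    tE u v w = tE u' v' w' ↔ u = u' ∧ v = v' ∧ w = w' := by
  constructor
  · intro h
    refine ⟨?_, ?_, ?_⟩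
    · have := congrArg (fun f : Fin 3 →₀ ℕ => f 0) h; simpa [tE_apply0] using this
    · have := congrArg (fun f : Fin 3 →₀ ℕ => f 1) h; simpa [tE_apply1] using this
    · have := congrArg (fun f : Fin 3 →₀ ℕ => f 2) h; simpa [tE_apply2] using this
  · rintro ⟨rfl, rfl, rfl⟩; rfl

noncomputable def EE : MvPolynomial (Fin 3) ℤ := (X 0 + X 1) * (X 1 + X 2) * (X 2 + X 0)
noncomputable def PP : MvPolynomial (Fin 3) ℤ := C 8 * (X 0 * X 1 * X 2) - EE

lemma binom_expand (i j : Fin 3) (k : ℕ) :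
    ((X i + X j : MvPolynomial (Fin 3) ℤ)) ^ k
      = ∑ a ∈ Finset.range (k + 1),
          monomial (Finsupp.single i a + Finsupp.single j (k - a)) ((k.choose a : ℤ)) := by
  rw [add_pow]
  refine Finset.sum_congr rfl fun a _ => ?_
  rw [X_pow_eq_monomial, X_pow_eq_monomial, monomial_mul, one_mul,
    show ((k.choose a : ℕ) : MvPolynomial (Fin 3) ℤ) = C ((k.choose a : ℕ) : ℤ) from
      (map_natCast (C : ℤ →+* MvPolynomial (Fin 3) ℤ) _).symm,
    mul_comm, C_mul_monomial, mul_one]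

lemma exp01 (k : ℕ) : ((X 0 + X 1 : MvPolynomial (Fin 3) ℤ)) ^ k
    = ∑ a ∈ Finset.range (k + 1), monomial (tE a (k - a) 0) ((k.choose a : ℤ)) := by
  rw [binom_expand]
  refine Finset.sum_congr rfl fun a _ => ?_
  congr 1
  simp [tE]

lemma exp12 (k : ℕ) : ((X 1 + X 2 : MvPolynomial (Fin 3) ℤ)) ^ k
    = ∑ a ∈ Finset.range (k + 1), monomial (tE 0 a (k - a)) ((k.choose a : ℤ)) := by
  rw [binom_expand]
  refine Finset.sum_congr rfl fun a _ => ?_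
  simp only [tE, Finsupp.single_zero, zero_add]

lemma exp20 (k : ℕ) : ((X 2 + X 0 : MvPolynomial (Fin 3) ℤ)) ^ k
    = ∑ a ∈ Finset.range (k + 1), monomial (tE (k - a) 0 a) ((k.choose a : ℤ)) := by
  rw [binom_expand]
  refine Finset.sum_congr rfl fun a _ => ?_
  simp only [tE, Finsupp.single_zero, add_zero]
  rw [add_comm]

lemma coeff_EE_pow (k : ℕ) :
    coeff (tE k k k) (EE ^ k) = ∑ l ∈ Finset.range (k + 1), (k.choose l : ℤ) ^ 3 := by
  have hE : EE ^ k = ((X 0 + X 1 : MvPolynomial (Fin 3) ℤ)) ^ k *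
      (((X 1 + X 2 : MvPolynomial (Fin 3) ℤ)) ^ k * ((X 2 + X 0 : MvPolynomial (Fin 3) ℤ)) ^ k) := by
    rw [EE, mul_pow, mul_pow, mul_assoc]
  rw [hE, exp01, exp12, exp20]
  simp_rw [Finset.sum_mul_sum, Finset.mul_sum, monomial_mul, tE_add, coeff_sum, coeff_monomial,
    tE_eq_iff]
  refine Finset.sum_congr rfl fun a ha => ?_
  rw [Finset.mem_range] at ha
  have step1 : ∀ b ∈ Finset.range (k + 1), (∑ c ∈ Finset.range (k + 1),
      if a + (0 + (k - c)) = k ∧ k - a + (b + 0) = k ∧ 0 + (k - b + c) = k then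
        ((k.choose a : ℤ)) * (((k.choose b : ℤ)) * ((k.choose c : ℤ)))
      else 0) =
      (∑ c ∈ Finset.range (k + 1),
        if c = a then (if b = a then ((k.choose a : ℤ)) * (((k.choose b : ℤ)) * ((k.choose c : ℤ)))
          else 0) else 0) := by
    intro b hb
    rw [Finset.mem_range] at hb
    refine Finset.sum_congr rfl fun c hc => ?_
    rw [Finset.mem_range] at hc
    rw [← ite_and]
    refine if_congr ?_ rfl rfl
    constructor
    · rintro ⟨h1, h2, h3⟩; omega
    · rintro ⟨rfl, rfl⟩; omega
  rw [Finset.sum_congr rfl step1]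
  have step2 : ∀ b ∈ Finset.range (k + 1), (∑ c ∈ Finset.range (k + 1),
      if c = a then (if b = a then ((k.choose a : ℤ)) * (((k.choose b : ℤ)) * ((k.choose c : ℤ)))
        else 0) else 0) =
      (if b = a then ((k.choose a : ℤ)) * (((k.choose b : ℤ)) * ((k.choose a : ℤ))) else 0) := by
    intro b _
    rw [Finset.sum_ite_eq' (Finset.range (k + 1)) a, if_pos (Finset.mem_range.mpr ha)]
  rw [Finset.sum_congr rfl step2,
    Finset.sum_ite_eq' (Finset.range (k + 1)) a, if_pos (Finset.mem_range.mpr ha)]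
  ring

lemma hM_eq : (X 0 * X 1 * X 2 : MvPolynomial (Fin 3) ℤ) = monomial (tE 1 1 1) 1 := by
  rw [← pow_one (X 0 : MvPolynomial (Fin 3) ℤ), ← pow_one (X 1 : MvPolynomial (Fin 3) ℤ),
    ← pow_one (X 2 : MvPolynomial (Fin 3) ℤ), X_pow_eq_monomial, X_pow_eq_monomial,
    X_pow_eq_monomial, monomial_mul, monomial_mul, one_mul, one_mul]
  rfl

lemma apery_eq (n : ℕ) : apery10 n = coeff (tE n n n) (PP ^ n) := by
  have hPP : PP = -EE + C 8 * monomial (tE 1 1 1) 1 := by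
    rw [PP, hM_eq]; ring
  rw [hPP, add_pow, coeff_sum]
  have hterm : ∀ k ∈ Finset.range (n + 1),
      coeff (tE n n n) ((-EE) ^ k * (C 8 * monomial (tE 1 1 1) 1) ^ (n - k) *
        ((n.choose k : ℕ) : MvPolynomial (Fin 3) ℤ)) =
      (-1) ^ k * 8 ^ (n - k) * (n.choose k : ℤ) * ∑ l ∈ Finset.range (k + 1),
        (k.choose l : ℤ) ^ 3 := by
    intro k hk
    rw [Finset.mem_range] at hk
    have h1 : (-EE) ^ k * (C 8 * monomial (tE 1 1 1) 1) ^ (n - k) *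
        ((n.choose k : ℕ) : MvPolynomial (Fin 3) ℤ)
        = C (((-1) ^ k * 8 ^ (n - k) * (n.choose k : ℤ))) *
          (EE ^ k * monomial (tE (n - k) (n - k) (n - k)) 1) := by
      rw [show ((n.choose k : ℕ) : MvPolynomial (Fin 3) ℤ) = C ((n.choose k : ℕ) : ℤ) from
          (map_natCast (C : ℤ →+* MvPolynomial (Fin 3) ℤ) _).symm]
      rw [mul_pow, monomial_pow, tE_smul, ← C_pow, neg_pow,
        show ((-1 : MvPolynomial (Fin 3) ℤ)) = C (-1 : ℤ) by simp, ← C_pow, C_mul, C_mul]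
      simp only [mul_one, one_pow]
      ring
    rw [h1, coeff_C_mul,
      show tE n n n = tE k k k + tE (n - k) (n - k) (n - k) by
        rw [tE_add]; congr 1 <;> omega,
      coeff_mul_monomial, mul_one, coeff_EE_pow]
  rw [Finset.sum_congr rfl hterm, apery10]
  refine Finset.sum_congr rfl fun k _ => ?_
  rw [Finset.mul_sum]


theorem stmt_15 (p : ℕ) (hp : p.Prime) (n r : ℕ) (hn : 1 ≤ n) (hr : 1 ≤ r) :
    Int.ModEq ((p : ℤ) ^ r) (apery10 (n * p ^ r)) (apery10 (n * p ^ (r - 1))) := by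
  have h := gauss_coeff p hp (PP ^ n) (tE n n n) r hr
  rw [← pow_mul, ← pow_mul] at h
  have e1 : (p ^ r) • tE n n n = tE (n * p ^ r) (n * p ^ r) (n * p ^ r) := by
    rw [tE_smul, Nat.mul_comm (p ^ r) n]
  have e2 : (p ^ (r - 1)) • tE n n n
      = tE (n * p ^ (r - 1)) (n * p ^ (r - 1)) (n * p ^ (r - 1)) := by
    rw [tE_smul, Nat.mul_comm (p ^ (r - 1)) n]
  rw [e1, e2, ← apery_eq, ← apery_eq] at h
  exact (Int.modEq_iff_dvd.mpr h).symm
end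

section
/- Define A(n) = Σ_{k=0}^{n} binom(n+k,k)² binom(n,k)² (the Apéry numbers for ζ(3)). Then for every prime p and all integers n, r ≥ 1, A(n p^r) ≡ A(n p^{r-1}) (mod p^r). -/
open Polynomial Finset

/-- The Apéry numbers `A(n) = ∑_{k=0}^n C(n+k,k)² C(n,k)²`. -/
def aperyZeta3 (n : ℕ) : ℤ :=
  ∑ k ∈ Finset.range (n + 1), ((n + k).choose k : ℤ) ^ 2 * (n.choose k : ℤ) ^ 2

noncomputable section AperyAux

abbrev AperyR1 : Type := Polynomial ℤ
abbrev AperyR2 : Type := Polynomial AperyR1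
abbrev AperyR3 : Type := Polynomial AperyR2

/-- the Apéry kernel `(x+y)(1+z)(x+y+z)(y+z+1)`, x outer, y middle, z inner -/
def ffA : AperyR3 :=
  (X + C X) * (1 + C (C X)) * (X + C X + C (C X)) * (C X + C (C X) + 1)

lemma ffA_pow (m : ℕ) :
    ffA ^ m = ∑ k ∈ range (m + 1),
      (m.choose k) • ((X + C X) ^ (m + k) *
        C ((C X) ^ (m - k) * (1 + C X) ^ m * (X + (1 + C X)) ^ m)) := by
  have e4 : ∀ a b c d : AperyR3, (a*b*c*d)^m = a^m*b^m*c^m*d^m := fun a b c d => by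
    rw [mul_pow (a*b*c) d, mul_pow (a*b) c, mul_pow a b]
  have h1 : ffA ^ m = (X + C X + C (C X)) ^ m *
      ((X + C X) ^ m * C ((1 + C X) ^ m * (X + (1 + C X)) ^ m)) := by
    unfold ffA
    rw [e4]
    simp only [map_mul, map_add, map_one, map_pow]
    ring
  have h2 := add_pow (X + C X : AperyR3) (C (C X)) m
  rw [h1, h2, Finset.sum_mul]
  refine sum_congr rfl fun k hk => ?_
  have hC : ((m.choose k : ℕ) : AperyR3) = C (C ((m.choose k : ℕ) : AperyR1)) := by
    rw [map_natCast, map_natCast]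
  rw [nsmul_eq_mul, hC]
  simp only [map_mul, map_pow, map_add, map_one, map_natCast]
  ring

lemma ffA_stage1 (m : ℕ) :
    (ffA ^ m).coeff m = ∑ k ∈ range (m + 1),
      C ((m.choose k * ((m+k).choose m) : ℕ) • (X ^ (m - k) * (1 + X) ^ m : AperyR1)) *
        (X ^ k * (X + C (1 + X)) ^ m) := by
  rw [ffA_pow, finset_sum_coeff]
  refine sum_congr rfl fun k hk => ?_
  rw [coeff_smul, mul_comm ((X + C X : AperyR3) ^ (m + k)) (C _), coeff_C_mul,
    coeff_X_add_C_pow, Nat.add_sub_cancel_left, nsmul_eq_mul]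
  simp only [smul_mul_assoc, map_nsmul, map_mul, map_pow, map_add, map_one, nsmul_eq_mul,
    map_natCast, Nat.cast_mul]
  ring

lemma ffA_stage2 (m : ℕ) :
    ((ffA ^ m).coeff m).coeff m = ∑ k ∈ range (m + 1),
      C ((m.choose k * m.choose k * ((m+k).choose m) : ℕ) : ℤ) *
        (X ^ (m - k) * (1 + X) ^ (m + k)) := by
  rw [ffA_stage1, finset_sum_coeff]
  refine sum_congr rfl fun k hk => ?_
  rw [mem_range, Nat.lt_succ_iff] at hk
  rw [coeff_C_mul, coeff_X_pow_mul', if_pos hk, coeff_X_add_C_pow,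
    Nat.sub_sub_self hk, Nat.choose_symm hk]
  simp only [map_nsmul, nsmul_eq_mul, map_mul, map_pow, map_natCast, Nat.cast_mul, map_add,
    map_one]
  ring

lemma ffA_coeff (m : ℕ) :
    (((ffA ^ m).coeff m).coeff m).coeff m = aperyZeta3 m := by
  rw [ffA_stage2, finset_sum_coeff, aperyZeta3]
  refine sum_congr rfl fun k hk => ?_
  rw [mem_range, Nat.lt_succ_iff] at hk
  rw [coeff_C_mul, coeff_X_pow_mul', if_pos (Nat.sub_le m k), Nat.sub_sub_self hk,
    coeff_one_add_X_pow, Nat.choose_symm_add]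
  push_cast
  ring

/-! ### The expansion homomorphisms -/

def AperyE1 (p : ℕ) : AperyR1 →+* AperyR1 := (Polynomial.expand ℤ p).toRingHom
def AperyE2 (p : ℕ) : AperyR2 →+* AperyR2 :=
  (Polynomial.expand AperyR1 p).toRingHom.comp (mapRingHom (AperyE1 p))
def AperyE3 (p : ℕ) : AperyR3 →+* AperyR3 :=
  (Polynomial.expand AperyR2 p).toRingHom.comp (mapRingHom (AperyE2 p))

lemma coeffE3 {p : ℕ} (hp : 0 < p) (q : AperyR3) (M : ℕ) :
    (((AperyE3 p q).coeff (M * p)).coeff (M * p)).coeff (M * p)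
      = ((q.coeff M).coeff M).coeff M := by
  simp only [AperyE3, AperyE2, AperyE1, RingHom.comp_apply, AlgHom.toRingHom_eq_coe,
    RingHom.coe_coe, coe_mapRingHom]
  rw [Polynomial.coeff_expand_mul hp, coeff_map]
  simp only [RingHom.comp_apply, RingHom.coe_coe, coe_mapRingHom]
  rw [Polynomial.coeff_expand_mul hp, coeff_map]
  simp only [RingHom.coe_coe]
  rw [Polynomial.coeff_expand_mul hp]

lemma E3_X (p : ℕ) : AperyE3 p (X : AperyR3) = X ^ p := by
  simp [AperyE3, Polynomial.expand_X]

lemma E3_CX (p : ℕ) : AperyE3 p (C X : AperyR3) = (C X) ^ p := by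
  simp only [AperyE3, AperyE2, AperyE1, RingHom.comp_apply, AlgHom.toRingHom_eq_coe,
    RingHom.coe_coe, coe_mapRingHom, map_C, Polynomial.map_X, Polynomial.expand_X, map_pow,
    Polynomial.expand_C]

lemma E3_CCX (p : ℕ) : AperyE3 p (C (C X) : AperyR3) = (C (C X)) ^ p := by
  simp only [AperyE3, AperyE2, AperyE1, RingHom.comp_apply, AlgHom.toRingHom_eq_coe,
    RingHom.coe_coe, coe_mapRingHom, map_C, Polynomial.map_X, Polynomial.map_C,
    Polynomial.expand_X, map_pow, Polynomial.expand_C]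

lemma E3_ffA (p : ℕ) : AperyE3 p ffA
    = (X ^ p + (C X) ^ p) * (1 + (C (C X)) ^ p) * (X ^ p + (C X) ^ p + (C (C X)) ^ p) *
      ((C X) ^ p + (C (C X)) ^ p + 1) := by
  simp only [ffA, map_mul, map_add, map_one, E3_X, E3_CX, E3_CCX]

/-! ### mod p divisibility -/

lemma map_zero_dvd {S T : Type*} [CommRing S] [CommRing T] (φ : S →+* T) (c : ℕ)
    (H : ∀ s : S, φ s = 0 → (c : S) ∣ s) :
    ∀ g : Polynomial S, g.map φ = 0 → ((c : Polynomial S)) ∣ g := by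
  intro g h
  have : (C (c : S)) ∣ g := by
    rw [Polynomial.C_dvd_iff_dvd_coeff]
    intro i
    apply H
    rw [← coeff_map, h, coeff_zero]
  rwa [map_natCast] at this

lemma charfrob (p : ℕ) [Fact p.Prime] :
    ((X + C X) * (1 + C (C X)) * (X + C X + C (C X)) * (C X + C (C X) + 1) :
        Polynomial (Polynomial (Polynomial (ZMod p)))) ^ p
      = (X ^ p + (C X) ^ p) * (1 + (C (C X)) ^ p) * (X ^ p + (C X) ^ p + (C (C X)) ^ p) *
        ((C X) ^ p + (C (C X)) ^ p + 1) := by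
  set S3 := Polynomial (Polynomial (Polynomial (ZMod p)))
  have e4 : ∀ a b c d : S3, (a * b * c * d) ^ p = a ^ p * b ^ p * c ^ p * d ^ p :=
    fun a b c d => by rw [mul_pow (a * b * c) d, mul_pow (a * b) c, mul_pow a b]
  rw [e4]
  rw [add_pow_char (x := (X : S3)) (y := C X),
    add_pow_char (x := (1 : S3)) (y := C (C X)),
    add_pow_char (x := (X + C X : S3)) (y := C (C X)),
    add_pow_char (x := (X : S3)) (y := C X),
    add_pow_char (x := (C X + C (C X) : S3)) (y := 1),
    add_pow_char (x := (C X : S3)) (y := C (C X)),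
    one_pow]

lemma frob_ffA (p : ℕ) (hp : p.Prime) : ((p : ℕ) : AperyR3) ∣ ffA ^ p - AperyE3 p ffA := by
  haveI : Fact p.Prime := ⟨hp⟩
  have H1 : ∀ s : AperyR1, s.map (Int.castRingHom (ZMod p)) = 0 → ((p : ℕ) : AperyR1) ∣ s := by
    apply map_zero_dvd
    intro s h
    rw [eq_intCast] at h
    exact_mod_cast (ZMod.intCast_zmod_eq_zero_iff_dvd s p).mp h
  have H2 : ∀ s : AperyR2, s.map (mapRingHom (Int.castRingHom (ZMod p))) = 0 →
      ((p : ℕ) : AperyR2) ∣ s := map_zero_dvd _ p H1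
  have H3 : ∀ s : AperyR3, s.map (mapRingHom (mapRingHom (Int.castRingHom (ZMod p)))) = 0 →
      ((p : ℕ) : AperyR3) ∣ s := map_zero_dvd _ p H2
  apply H3
  have key : Polynomial.map (mapRingHom (mapRingHom (Int.castRingHom (ZMod p)))) (ffA ^ p)
      = Polynomial.map (mapRingHom (mapRingHom (Int.castRingHom (ZMod p)))) (AperyE3 p ffA) := ?_
  · rw [Polynomial.map_sub, key, sub_self]
  rw [Polynomial.map_pow]
  have hffA : ffA.map (mapRingHom (mapRingHom (Int.castRingHom (ZMod p))))
      = (X + C X) * (1 + C (C X)) * (X + C X + C (C X)) * (C X + C (C X) + 1) := by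
    simp only [ffA, Polynomial.map_mul, Polynomial.map_add, Polynomial.map_one,
      Polynomial.map_X, Polynomial.map_C, coe_mapRingHom]
  rw [hffA, E3_ffA, charfrob]
  simp only [Polynomial.map_mul, Polynomial.map_add, Polynomial.map_one, Polynomial.map_pow,
    Polynomial.map_X, Polynomial.map_C, coe_mapRingHom]

lemma dvd_coeff3 (c : ℕ) (g : AperyR3) (h : ((c : ℕ) : AperyR3) ∣ g) (i j k : ℕ) :
    (c : ℤ) ∣ ((g.coeff i).coeff j).coeff k := by
  obtain ⟨u, rfl⟩ := h
  have hC : ((c : ℕ) : AperyR3) = C (C (C (c : ℤ))) := by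
    rw [map_natCast, map_natCast, map_natCast]
  rw [hC, coeff_C_mul, coeff_C_mul, coeff_C_mul]
  exact dvd_mul_right _ _

end AperyAux

theorem stmt_16 (p : ℕ) (hp : p.Prime) (n r : ℕ) (hn : 1 ≤ n) (hr : 1 ≤ r) :
    Int.ModEq ((p : ℤ) ^ r) (aperyZeta3 (n * p ^ r)) (aperyZeta3 (n * p ^ (r - 1))) := by
  haveI : Fact p.Prime := ⟨hp⟩
  set M := n * p ^ (r - 1) with hM
  set N := n * p ^ r with hN
  have hpr : p ^ r = p ^ (r - 1) * p := by
    rw [← pow_succ, Nat.sub_add_cancel hr]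
  have hNM : N = M * p := by rw [hN, hM, hpr, mul_assoc]
  have hd1 : ((p : ℕ) : AperyR3) ∣ ffA ^ p - AperyE3 p ffA := frob_ffA p hp
  have hd2 : ((p : ℕ) : AperyR3) ^ (r - 1 + 1) ∣
      (ffA ^ p) ^ p ^ (r - 1) - (AperyE3 p ffA) ^ p ^ (r - 1) :=
    dvd_sub_pow_of_dvd_sub (R := AperyR3) (p := p) (a := ffA ^ p) (b := AperyE3 p ffA) hd1 (r - 1)
  rw [Nat.sub_add_cancel hr] at hd2
  have hd3 : ((p : ℕ) : AperyR3) ^ r ∣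
      ((ffA ^ p) ^ p ^ (r - 1)) ^ n - ((AperyE3 p ffA) ^ p ^ (r - 1)) ^ n :=
    dvd_trans hd2 (sub_dvd_pow_sub_pow (R := AperyR3) _ _ n)
  have ha : ((ffA ^ p) ^ p ^ (r - 1)) ^ n = ffA ^ N := by
    rw [← pow_mul, ← pow_mul]
    congr 1
    rw [hN, hpr]
    ring
  have hb : ((AperyE3 p ffA) ^ p ^ (r - 1)) ^ n = AperyE3 p (ffA ^ M) := by
    rw [← pow_mul, ← map_pow]
    congr 1
    rw [hM]
    ring
  rw [ha, hb] at hd3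
  have hd4 : ((p ^ r : ℕ) : AperyR3) ∣ ffA ^ N - AperyE3 p (ffA ^ M) := by
    push_cast
    exact hd3
  have h5 := dvd_coeff3 (p ^ r) _ hd4 N N N
  rw [coeff_sub, coeff_sub, coeff_sub, ffA_coeff] at h5
  rw [show (((AperyE3 p (ffA ^ M)).coeff N).coeff N).coeff N = aperyZeta3 M by
    rw [hNM, coeffE3 hp.pos, ffA_coeff]] at h5
  have h6 : ((p : ℤ) ^ r) ∣ aperyZeta3 M - aperyZeta3 N := by
    push_cast at h5
    have := dvd_neg.mpr h5
    rwa [neg_sub] at this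
  exact Int.modEq_iff_dvd.mpr h6
end

section
/- Define A(n) = (-1)^n Σ_{k=0}^{n} binom(n,k)² binom(2k,k) binom(2(n-k), n-k). Then for every prime p and all integers n, r ≥ 1, A(n p^r) ≡ A(n p^{r-1}) (mod p^r). -/
-- p^r ∣ C(m,j) * p^j   when p^(r-1) ∣ m, 1 ≤ j ≤ m
lemma dvd_choose_pow {p : ℕ} (hp : p.Prime) {r m j : ℕ} (hr : 1 ≤ r)
    (hm : p ^ (r-1) ∣ m) (hj1 : 1 ≤ j) (hjm : j ≤ m) :
    p ^ r ∣ m.choose j * p ^ j := by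
  set t := j.factorization p with ht
  have hpt : p ^ t ∣ j := Nat.ordProj_dvd j p
  have htj : t + 1 ≤ j := by
    have h1 : t < 2 ^ t := Nat.lt_two_pow_self
    have h2 : 2 ^ t ≤ p ^ t := Nat.pow_le_pow_left hp.two_le t
    have h3 : p ^ t ≤ j := Nat.le_of_dvd hj1 hpt
    omega
  by_cases hcase : r ≤ t + 1
  · -- p^r ∣ p^j
    exact Dvd.dvd.mul_left (pow_dvd_pow p (by omega)) _
  · -- main case
    have hm1 : 1 ≤ m := le_trans hj1 hjm
    -- identity m * C(m-1, j-1) = C(m,j) * j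
    have hid : m * (m-1).choose (j-1) = m.choose j * j := by
      have := Nat.add_one_mul_choose_eq (m-1) (j-1)
      have h1 : m - 1 + 1 = m := by omega
      have h2 : j - 1 + 1 = j := by omega
      simp only [Nat.succ_eq_add_one, h1, h2] at this
      exact this
    have hdvd : p ^ (r-1) ∣ m.choose j * j := hid ▸ (hm.mul_right _)
    -- write j = p^t * u with p coprime u
    set u := ordCompl[p] j with hu
    have hju : j = p ^ t * u := (Nat.ordProj_mul_ordCompl_eq_self j p).symm
    have hcop : Nat.Coprime p u := Nat.coprime_ordCompl hp (by omega)
    have hd2 : p ^ (r-1-t) * p ^ t ∣ (m.choose j * u) * p ^ t := by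
      rw [← pow_add]
      have : r - 1 - t + t = r - 1 := by omega
      rw [this]
      calc p ^ (r-1) ∣ m.choose j * j := hdvd
        _ = m.choose j * u * p ^ t := by rw [hju]; ring
    have hd3 : p ^ (r-1-t) ∣ m.choose j * u :=
      (Nat.mul_dvd_mul_iff_right (pow_pos hp.pos t)).mp hd2
    have hd4 : p ^ (r-1-t) ∣ m.choose j :=
      (Nat.Coprime.dvd_of_dvd_mul_right (Nat.Coprime.pow_left _ hcop) hd3)
    have : p ^ r ∣ m.choose j * p ^ (t+1) := by
      have : p ^ (r-1-t) * p ^ (t+1) = p ^ r := by rw [← pow_add]; congr 1; omega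
      rw [← this]
      exact mul_dvd_mul hd4 dvd_rfl
    exact this.trans (mul_dvd_mul_left _ (pow_dvd_pow p htj))

abbrev G3 : Type := ℤ × ℤ × ℤ
abbrev A3 : Type := AddMonoidAlgebra ℤ G3
abbrev B3 (p : ℕ) : Type := AddMonoidAlgebra (ZMod p) G3

open AddMonoidAlgebra

/-- constant term -/
noncomputable def ct : A3 →+ ℤ := (Finsupp.applyAddHom (0 : G3)).comp AddMonoidAlgebra.coeffAddEquiv.toAddMonoidHom

lemma ct_single (g : G3) (c : ℤ) : ct (AddMonoidAlgebra.single g c) = if g = 0 then c else 0 := by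
  show Finsupp.single g c 0 = _; exact Finsupp.single_apply

/-- multiplication by p on the exponent group -/
def mulP (p : ℕ) : G3 →+ G3 := AddMonoidHom.mk' (fun g => p • g) (fun a b => smul_add p a b)

noncomputable def phi (p : ℕ) : A3 →+* A3 := mapDomainRingHom ℤ (mulP p)

lemma mulP_inj {p : ℕ} (hp : 0 < p) : Function.Injective (mulP p) := by
  intro a b h
  simp only [mulP, AddMonoidHom.mk'_apply] at h
  exact smul_right_injective G3 hp.ne' h

lemma ct_phi {p : ℕ} (hp : 0 < p) (f : A3) : ct (phi p f) = ct f := by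
  have h0 : (mulP p) 0 = 0 := map_zero _
  show (Finsupp.mapDomain (mulP p) f.coeff) 0 = f.coeff 0
  conv_lhs => rw [← h0]
  exact Finsupp.mapDomain_apply (mulP_inj hp) f.coeff 0

lemma phi_single (p : ℕ) (g : G3) (c : ℤ) :
    phi p (AddMonoidAlgebra.single g c) = AddMonoidAlgebra.single (p • g) c := by
  show AddMonoidAlgebra.mapDomain (mulP p) (AddMonoidAlgebra.single g c) = _
  rw [AddMonoidAlgebra.mapDomain_single]; rfl

noncomputable def piP (p : ℕ) : A3 →+* B3 p :=
  liftNCRingHom ((singleZeroRingHom : ZMod p →+* B3 p).comp (Int.castRingHom (ZMod p)))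
    (AddMonoidAlgebra.of (ZMod p) G3) (fun _ _ => Commute.all _ _)

lemma piP_single (p : ℕ) (g : G3) (c : ℤ) :
    piP p (AddMonoidAlgebra.single g c) = AddMonoidAlgebra.single g (c : ZMod p) := by
  show AddMonoidAlgebra.liftNC _ _ (AddMonoidAlgebra.single g c) = _
  rw [AddMonoidAlgebra.liftNC_single]
  show AddMonoidAlgebra.single 0 ((c : ZMod p)) * AddMonoidAlgebra.single g 1 = _
  rw [AddMonoidAlgebra.single_mul_single, zero_add, mul_one]

lemma piP_apply (p : ℕ) (f : A3) (g : G3) : (piP p f).coeff g = ((f.coeff g : ℤ) : ZMod p) := by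
  induction f using AddMonoidAlgebra.induction_linear with
  | zero => simp
  | add a b ha hb =>
      rw [map_add]
      show (piP p a + piP p b).coeff g = _
      rw [AddMonoidAlgebra.coeff_add, Finsupp.add_apply, ha, hb]
      show _ = (((a + b).coeff g : ℤ) : ZMod p)
      rw [AddMonoidAlgebra.coeff_add, Finsupp.add_apply, Int.cast_add]
  | single a c =>
      rw [piP_single]
      show Finsupp.single a ((c : ZMod p)) g = ((Finsupp.single a c g : ℤ) : ZMod p)
      rw [Finsupp.single_apply, Finsupp.single_apply]
      split <;> simp

instance charP_B3 (p : ℕ) [Fact p.Prime] : CharP (B3 p) p := by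
  constructor
  intro n
  rw [AddMonoidAlgebra.natCast_def]
  constructor
  · intro h
    have := AddMonoidAlgebra.single_eq_zero.mp h
    exact (ZMod.natCast_eq_zero_iff n p).mp this
  · intro h
    rw [(ZMod.natCast_eq_zero_iff n p).mpr h]; exact AddMonoidAlgebra.single_zero _

noncomputable def phiP (p : ℕ) : B3 p →+* B3 p := mapDomainRingHom (ZMod p) (mulP p)

lemma phiP_single (p : ℕ) (g : G3) (c : ZMod p) :
    phiP p (AddMonoidAlgebra.single g c) = AddMonoidAlgebra.single (p • g) c := by
  show AddMonoidAlgebra.mapDomain (mulP p) (AddMonoidAlgebra.single g c) = _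
  rw [AddMonoidAlgebra.mapDomain_single]; rfl

lemma frob_eq (p : ℕ) [Fact p.Prime] (b : B3 p) : b ^ p = phiP p b := by
  have : (frobenius (B3 p) p) = phiP p := by
    apply AddMonoidAlgebra.ringHom_ext
    · intro c
      rw [frobenius_def, AddMonoidAlgebra.single_pow, smul_zero, phiP_single, smul_zero,
        ZMod.pow_card]
    · intro a
      rw [frobenius_def, AddMonoidAlgebra.single_pow, one_pow, phiP_single]
  calc b ^ p = frobenius (B3 p) p b := rfl
    _ = phiP p b := by rw [this]

lemma piP_phi (p : ℕ) (f : A3) : piP p (phi p f) = phiP p (piP p f) := by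
  have : (piP p).comp (phi p) = (phiP p).comp (piP p) := by
    apply AddMonoidAlgebra.ringHom_ext <;> intro a <;>
      simp only [RingHom.comp_apply, phi_single, piP_single, phiP_single]
  exact RingHom.congr_fun this f

/-- Frobenius decomposition over ℤ -/
lemma frob_decomp_s17 (p : ℕ) [Fact p.Prime] (f : A3) :
    ∃ g : A3, f ^ p = phi p f + (p : ℤ) • g := by
  set D : A3 := f ^ p - phi p f with hD
  have hpi : piP p D = 0 := by
    rw [hD, map_sub, map_pow, frob_eq, piP_phi, sub_self]
  have hdvd : ∀ a : G3, (p : ℤ) ∣ D.coeff a := by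
    intro a
    have := piP_apply p D a
    rw [hpi] at this
    have : ((D.coeff a : ℤ) : ZMod p) = 0 := by rw [← this]; rfl
    exact_mod_cast (ZMod.intCast_zmod_eq_zero_iff_dvd _ p).mp this
  refine ⟨AddMonoidAlgebra.ofCoeff (Finsupp.mapRange (· / (p : ℤ)) (by simp) D.coeff), ?_⟩
  have : (p : ℤ) • AddMonoidAlgebra.ofCoeff (Finsupp.mapRange (· / (p : ℤ)) (by simp) D.coeff) = D := by
    ext a
    rw [AddMonoidAlgebra.coeff_smul_apply, AddMonoidAlgebra.coeff_ofCoeff, Finsupp.mapRange_apply, smul_eq_mul]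
    exact Int.mul_ediv_cancel' (hdvd a)
  rw [this, hD]; ring

lemma ct_smul (c : ℤ) (f : A3) : ct (c • f) = c * ct f := by
  show (c • f).coeff 0 = c * f.coeff 0
  rw [AddMonoidAlgebra.coeff_smul_apply]; rfl

/-- Gauss congruence for constant terms -/
lemma gauss (p : ℕ) [Fact p.Prime] (L : A3) (n r : ℕ) (hr : 1 ≤ r) :
    (p : ℤ) ^ r ∣ ct (L ^ (n * p ^ r)) - ct (L ^ (n * p ^ (r-1))) := by
  have hp : p.Prime := Fact.out
  set m := n * p ^ (r-1) with hm
  have hmm : n * p ^ r = m * p := by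
    rw [hm, mul_assoc, ← pow_succ]
    congr 2
    omega
  obtain ⟨g, hg⟩ := frob_decomp_s17 p L
  have h1 : L ^ (n * p ^ r) = (phi p L + (p : ℤ) • g) ^ m := by
    rw [hmm, mul_comm, pow_mul, hg]
  rw [h1, add_pow]
  rw [Finset.sum_range_succ]
  rw [map_add]
  have h2 : ct ((phi p L) ^ m * ((p:ℤ) • g) ^ (m - m) * ↑(m.choose m)) = ct (L ^ m) := by
    simp only [Nat.sub_self, pow_zero, mul_one, Nat.choose_self, Nat.cast_one, ← map_pow]
    exact ct_phi hp.pos _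
  rw [h2, add_sub_cancel_right, map_sum]
  apply Finset.dvd_sum
  intro k hk
  rw [Finset.mem_range] at hk
  set j := m - k with hj
  have hj1 : 1 ≤ j := by omega
  have hjm : j ≤ m := by omega
  have hterm : (phi p L) ^ k * ((p:ℤ) • g) ^ j * (↑(m.choose k) : A3)
      = ((↑(m.choose k) * (p:ℤ) ^ j : ℤ)) • ((phi p L) ^ k * g ^ j) := by
    rw [smul_pow, zsmul_eq_mul, zsmul_eq_mul]
    push_cast
    ring
  rw [hterm, ct_smul]
  apply Dvd.dvd.mul_right
  have hchoose : m.choose k = m.choose j := by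
    rw [hj, Nat.choose_symm (by omega)]
  rw [hchoose]
  have := dvd_choose_pow hp hr (dvd_mul_left _ _) hj1 hjm
  exact_mod_cast Int.natCast_dvd_natCast.mpr this
noncomputable def sg (g : G3) : A3 := AddMonoidAlgebra.single g 1

lemma sum_sg_pow (a b : G3) (m : ℕ) :
    (sg a + sg b) ^ m = ∑ j ∈ Finset.range (m+1),
      AddMonoidAlgebra.single (j • a + (m-j) • b) (m.choose j : ℤ) := by
  rw [add_pow]
  apply Finset.sum_congr rfl
  intro j _
  rw [sg, sg, AddMonoidAlgebra.single_pow, AddMonoidAlgebra.single_pow,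
    AddMonoidAlgebra.single_mul_single, AddMonoidAlgebra.natCast_def,
    AddMonoidAlgebra.single_mul_single]
  simp

noncomputable def XX : A3 := sg (1,0,0) + sg (-1,0,0)
noncomputable def YY : A3 := sg (0,1,0) + sg (0,-1,0)

lemma XX_pow (M : ℕ) : XX ^ M = ∑ j ∈ Finset.range (M+1),
    AddMonoidAlgebra.single (((j:ℤ) - ((M-j:ℕ):ℤ), 0, 0) : G3) (M.choose j : ℤ) := by
  rw [XX, sum_sg_pow]
  apply Finset.sum_congr rfl
  intro j _
  congr 1
  simp [Prod.ext_iff, nsmul_eq_mul]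
  ring

lemma YY_pow (M : ℕ) : YY ^ M = ∑ j ∈ Finset.range (M+1),
    AddMonoidAlgebra.single ((0, (j:ℤ) - ((M-j:ℕ):ℤ), 0) : G3) (M.choose j : ℤ) := by
  rw [YY, sum_sg_pow]
  apply Finset.sum_congr rfl
  intro j _
  congr 1
  simp [Prod.ext_iff, nsmul_eq_mul]
  ring

lemma ct_term (k m : ℕ) (d : ℤ) (c : ℤ) :
    ct (XX ^ (2*k) * YY ^ (2*m) * AddMonoidAlgebra.single ((0,0,d) : G3) c)
    = if d = 0 then (((2*k).choose k : ℤ) * ((2*m).choose m)) * c else 0 := by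
  rw [XX_pow, YY_pow, Finset.sum_mul, Finset.sum_mul, map_sum]
  have hterm : ∀ j ∈ Finset.range (2*k+1), ∀ l ∈ Finset.range (2*m+1),
      ct (AddMonoidAlgebra.single (((j:ℤ) - ((2*k-j:ℕ):ℤ), 0, 0) : G3) ((2*k).choose j : ℤ)
        * AddMonoidAlgebra.single ((0, (l:ℤ) - ((2*m-l:ℕ):ℤ), 0) : G3) ((2*m).choose l : ℤ)
        * AddMonoidAlgebra.single ((0,0,d) : G3) c)
      = if (j = k ∧ l = m ∧ d = 0)
        then ((2*k).choose j : ℤ) * ((2*m).choose l : ℤ) * c else 0 := by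
    intro j hj l hl
    rw [Finset.mem_range] at hj hl
    rw [AddMonoidAlgebra.single_mul_single, AddMonoidAlgebra.single_mul_single, ct_single]
    have : ((((j:ℤ) - ((2*k-j:ℕ):ℤ), 0, 0) : G3) + (0, (l:ℤ) - ((2*m-l:ℕ):ℤ), 0) + (0,0,d) = 0)
        ↔ (j = k ∧ l = m ∧ d = 0) := by
      simp only [Prod.ext_iff, Prod.mk_add_mk, Prod.fst_zero, Prod.snd_zero]
      omega
    rw [if_congr this rfl rfl]
  have hexp : ∀ j : ℕ,
      AddMonoidAlgebra.single (((j:ℤ) - ((2*k-j:ℕ):ℤ), 0, 0) : G3) ((2*k).choose j : ℤ)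
        * (∑ l ∈ Finset.range (2*m+1),
            AddMonoidAlgebra.single ((0, (l:ℤ) - ((2*m-l:ℕ):ℤ), 0) : G3) ((2*m).choose l : ℤ))
        * AddMonoidAlgebra.single ((0,0,d) : G3) c
      = ∑ l ∈ Finset.range (2*m+1),
          AddMonoidAlgebra.single (((j:ℤ) - ((2*k-j:ℕ):ℤ), 0, 0) : G3) ((2*k).choose j : ℤ)
        * AddMonoidAlgebra.single ((0, (l:ℤ) - ((2*m-l:ℕ):ℤ), 0) : G3) ((2*m).choose l : ℤ)
        * AddMonoidAlgebra.single ((0,0,d) : G3) c := by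
    intro j
    rw [Finset.mul_sum, Finset.sum_mul]
  trans (∑ j ∈ Finset.range (2*k+1), ∑ l ∈ Finset.range (2*m+1),
      if (j = k ∧ l = m ∧ d = 0) then ((2*k).choose j : ℤ) * ((2*m).choose l : ℤ) * c else 0)
  · refine Finset.sum_congr rfl (fun j hj => ?_)
    rw [hexp j, map_sum]
    exact Finset.sum_congr rfl (fun l hl => hterm j hj l hl)
  · rw [Finset.sum_eq_single_of_mem k (by simp only [Finset.mem_range]; omega)
      (fun j _ hjk => Finset.sum_eq_zero (fun l _ => if_neg (fun h => hjk h.1)))]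
    rw [Finset.sum_eq_single_of_mem m (by simp only [Finset.mem_range]; omega)
      (fun l _ hlm => if_neg (fun h => hlm h.2.1))]
    by_cases hd : d = 0
    · rw [if_pos ⟨rfl, rfl, hd⟩, if_pos hd]
    · rw [if_neg (fun h => hd h.2.2), if_neg hd]

noncomputable def Lam : A3 := (XX^2 * sg (0,0,1) + YY^2) * (1 + sg (0,0,-1))

lemma ct_Lam_pow (n : ℕ) : ct (Lam ^ n) = ∑ k ∈ Finset.range (n+1),
    (n.choose k : ℤ)^2 * ((2*k).choose k : ℤ) * ((2*(n-k)).choose (n-k) : ℤ) := by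
  have h2 : (1 + sg ((0,0,-1) : G3)) ^ n = ∑ i ∈ Finset.range (n+1),
      AddMonoidAlgebra.single ((0,0,-(i:ℤ)) : G3) (n.choose i : ℤ) := by
    have h1' : (1 : A3) = sg 0 := by rw [sg]; exact AddMonoidAlgebra.one_def
    rw [h1', add_comm, sum_sg_pow]
    refine Finset.sum_congr rfl (fun i _ => ?_)
    congr 1
    simp [Prod.ext_iff]
  have h1 : (XX^2 * sg ((0,0,1) : G3) + YY^2) ^ n = ∑ k ∈ Finset.range (n+1),
      XX^(2*k) * AddMonoidAlgebra.single (((0,0,(k:ℤ)) : G3)) 1 * YY^(2*(n-k))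
        * AddMonoidAlgebra.single (0 : G3) ((n.choose k : ℤ)) := by
    rw [add_pow]
    refine Finset.sum_congr rfl (fun k _ => ?_)
    rw [mul_pow, ← pow_mul, ← pow_mul, AddMonoidAlgebra.natCast_def, sg,
      AddMonoidAlgebra.single_pow]
    have : k • ((0,0,1) : G3) = ((0,0,(k:ℤ)) : G3) := by simp [Prod.ext_iff]
    rw [this, one_pow]
  have hterm2 : ∀ k i : ℕ,
      (XX^(2*k) * AddMonoidAlgebra.single (((0,0,(k:ℤ)) : G3)) 1 * YY^(2*(n-k))
        * AddMonoidAlgebra.single (0 : G3) ((n.choose k : ℤ)))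
        * AddMonoidAlgebra.single ((0,0,-(i:ℤ)) : G3) (n.choose i : ℤ)
      = XX^(2*k) * YY^(2*(n-k))
        * AddMonoidAlgebra.single ((0,0,(k:ℤ)-(i:ℤ)) : G3) ((n.choose k : ℤ) * (n.choose i : ℤ)) := by
    intro k i
    have hs : AddMonoidAlgebra.single (((0,0,(k:ℤ)) : G3)) (1:ℤ)
        * AddMonoidAlgebra.single (0 : G3) ((n.choose k : ℤ))
        * AddMonoidAlgebra.single ((0,0,-(i:ℤ)) : G3) (n.choose i : ℤ)
        = AddMonoidAlgebra.single ((0,0,(k:ℤ)-(i:ℤ)) : G3) ((n.choose k : ℤ) * (n.choose i : ℤ)) := by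
      rw [AddMonoidAlgebra.single_mul_single, AddMonoidAlgebra.single_mul_single]
      congr 1
      simp [Prod.ext_iff]
    calc (XX^(2*k) * AddMonoidAlgebra.single (((0,0,(k:ℤ)) : G3)) 1 * YY^(2*(n-k))
        * AddMonoidAlgebra.single (0 : G3) ((n.choose k : ℤ)))
        * AddMonoidAlgebra.single ((0,0,-(i:ℤ)) : G3) (n.choose i : ℤ)
        = XX^(2*k) * YY^(2*(n-k)) * (AddMonoidAlgebra.single (((0,0,(k:ℤ)) : G3)) 1
          * AddMonoidAlgebra.single (0 : G3) ((n.choose k : ℤ))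
          * AddMonoidAlgebra.single ((0,0,-(i:ℤ)) : G3) (n.choose i : ℤ)) := by ring
      _ = _ := by rw [hs]
  rw [Lam, mul_pow, h1, h2, Finset.sum_mul_sum]
  simp only [hterm2]
  rw [map_sum]
  trans (∑ k ∈ Finset.range (n+1), ∑ i ∈ Finset.range (n+1),
      if ((k:ℤ)-(i:ℤ) = 0)
      then (((2*k).choose k : ℤ) * ((2*(n-k)).choose (n-k) : ℤ))
        * ((n.choose k : ℤ) * (n.choose i : ℤ)) else 0)
  · refine Finset.sum_congr rfl (fun k _ => ?_)
    rw [map_sum]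
    exact Finset.sum_congr rfl (fun i _ => ct_term k (n-k) _ _)
  · refine Finset.sum_congr rfl (fun k hk => ?_)
    rw [Finset.sum_eq_single_of_mem k hk
      (fun i _ hik => if_neg (by intro h; apply hik; omega))]
    rw [if_pos (by ring)]
    ring


lemma ct_cast_mul (c : ℤ) (f : A3) : ct ((c : A3) * f) = c * ct f := by
  rw [← zsmul_eq_mul, ct_smul]

/-- `A(n) = (-1)^n ∑_{k=0}^n C(n,k)² C(2k,k) C(2(n-k),n-k)`. -/
def apery12 (n : ℕ) : ℤ :=
  (-1) ^ n * ∑ k ∈ Finset.range (n + 1),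
    (n.choose k : ℤ) ^ 2 * ((2 * k).choose k : ℤ) * ((2 * (n - k)).choose (n - k) : ℤ)

theorem stmt_17 (p : ℕ) (hp : p.Prime) (n r : ℕ) (hn : 1 ≤ n) (hr : 1 ≤ r) :
    Int.ModEq ((p : ℤ) ^ r) (apery12 (n * p ^ r)) (apery12 (n * p ^ (r - 1))) := by
  haveI : Fact p.Prime := ⟨hp⟩
  have hneg : ∀ N : ℕ, (-Lam) ^ N = (((-1 : ℤ)^N : ℤ) : A3) * Lam ^ N := by
    intro N
    rw [neg_pow]
    push_cast
    ring
  have key : ∀ N : ℕ, ct ((-Lam) ^ N) = apery12 N := by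
    intro N
    rw [hneg N, ct_cast_mul, ct_Lam_pow, apery12]
  rw [← key, ← key]
  exact (Int.modEq_iff_dvd.mpr (gauss p (-Lam) n r hr)).symm
end
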